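/- arXiv:2104.03572 — 6 statements merged into one kernel-verified Lean document; each statement's English description precedes it below -/
import Mathlib

section
/- Buchberger's criterion: let G be a finite set of nonzero polynomials generating an ideal I ⊆ P and < a global monomial order. Then G is a Gröbner basis of I w.r.t. < if and only if for all f, g ∈ G the S-pair S(f,g) reduces to zero w.r.t. G. -/
open MvPolynomial

namespace MonomialOrder

variable {σ R : Type*} [CommSemiring R] (m : MonomialOrder σ)

/-- The lead monomial (exponent vector) of a polynomial w.r.t. a monomial order.
(For `f = 0` this returns `0`.) -/
noncomputable def leadMonomial (f : MvPolynomial σ R) : σ →₀ ℕ :=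
  m.toSyn.symm (f.support.sup (fun t => m.toSyn t))

/-- The lead coefficient of a polynomial w.r.t. a monomial order. -/
noncomputable def leadCoeff (f : MvPolynomial σ R) : R :=
  f.coeff (m.leadMonomial f)

/-- The lead term of a polynomial w.r.t. a monomial order. -/
noncomputable def leadTerm (f : MvPolynomial σ R) : MvPolynomial σ R :=
  monomial (m.leadMonomial f) (m.leadCoeff f)

/-- The lead ideal of a set of polynomials: the ideal generated by the lead
terms of its nonzero elements. -/
noncomputable def leadIdeal (S : Set (MvPolynomial σ R)) : Ideal (MvPolynomial σ R) :=
  Ideal.span (m.leadTerm '' {f | f ∈ S ∧ f ≠ 0})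

/-- `G` is a (finite) Gröbner basis of the ideal `I` w.r.t. the monomial order `m`:
`G ⊆ I` and the lead ideal of `G` equals the lead ideal of `I`. -/
def IsGroebnerBasis (I : Ideal (MvPolynomial σ R)) (G : Set (MvPolynomial σ R)) : Prop :=
  G.Finite ∧ G ⊆ (I : Set (MvPolynomial σ R)) ∧
    m.leadIdeal G = m.leadIdeal (I : Set (MvPolynomial σ R))

/-- `G` is a reduced Gröbner basis of `I` w.r.t. `m`: a Gröbner basis all of whose
elements have lead coefficient `1` and such that no monomial occurring in an element
`g ∈ G` lies in the lead ideal of `G \ {g}`. -/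
def IsReducedGroebnerBasis (I : Ideal (MvPolynomial σ R)) (G : Set (MvPolynomial σ R)) : Prop :=
  m.IsGroebnerBasis I G ∧ (∀ g ∈ G, m.leadCoeff g = 1) ∧
    ∀ g ∈ G, ∀ t ∈ g.support, (monomial t (1 : R)) ∉ m.leadIdeal (G \ {g})

end MonomialOrder

namespace MonomialOrder

variable {σ K : Type*} [Field K] (m : MonomialOrder σ)

/-- The S-pair `S(f,g) = (λ/lt(f))·f − (λ/lt(g))·g` where `λ = lcm(lm f, lm g)`
(the lcm of monomials is the pointwise supremum of exponent vectors). -/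
noncomputable def sPair (f g : MvPolynomial σ K) : MvPolynomial σ K :=
  monomial ((m.leadMonomial f ⊔ m.leadMonomial g) - m.leadMonomial f) (m.leadCoeff f)⁻¹ * f
    - monomial ((m.leadMonomial f ⊔ m.leadMonomial g) - m.leadMonomial g) (m.leadCoeff g)⁻¹ * g

/-- One reduction step w.r.t. `G`: subtract a term multiple `σ·g` of some `g ∈ G`
whose lead term equals a term of `f`. -/
def RedStep (G : Set (MvPolynomial σ K)) (f f' : MvPolynomial σ K) : Prop :=
  ∃ g ∈ G, g ≠ 0 ∧ ∃ t ∈ f.support, m.leadMonomial g ≤ t ∧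
    f' = f - monomial (t - m.leadMonomial g) (f.coeff t / m.leadCoeff g) * g

/-- `f` reduces to zero w.r.t. `G`: there is a finite chain of reduction steps from `f`
ending at `0`. -/
def ReducesToZero (G : Set (MvPolynomial σ K)) (f : MvPolynomial σ K) : Prop :=
  Relation.ReflTransGen (m.RedStep G) f 0

end MonomialOrder

namespace Buch

open MonomialOrder

variable {σ R : Type*} [CommSemiring R] (m : MonomialOrder σ)

/-- degree in the synonym type -/
noncomputable def degS (f : MvPolynomial σ R) : m.syn :=
  f.support.sup (fun t => m.toSyn t)

variable {m}

lemma toSyn_leadMonomial (f : MvPolynomial σ R) :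
    m.toSyn (m.leadMonomial f) = degS m f :=
  m.toSyn.apply_symm_apply _

lemma degS_le_iff {f : MvPolynomial σ R} {d : m.syn} :
    degS m f ≤ d ↔ ∀ t ∈ f.support, m.toSyn t ≤ d := Finset.sup_le_iff

lemma le_degS {f : MvPolynomial σ R} {t : σ →₀ ℕ} (ht : t ∈ f.support) :
    m.toSyn t ≤ degS m f := Finset.le_sup ht

lemma le_degS_of_coeff {f : MvPolynomial σ R} {t : σ →₀ ℕ} (ht : f.coeff t ≠ 0) :
    m.toSyn t ≤ degS m f := le_degS (by simpa [MvPolynomial.mem_support_iff] using ht)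

lemma coeff_eq_zero_of_lt {f : MvPolynomial σ R} {t : σ →₀ ℕ} (h : degS m f < m.toSyn t) :
    f.coeff t = 0 := by
  by_contra hc
  exact absurd (le_degS_of_coeff hc) (not_le.mpr h)

lemma degS_zero : degS m (0 : MvPolynomial σ R) = 0 := by
  simp [degS, MvPolynomial.support_zero]

lemma lm_mem_support {f : MvPolynomial σ R} (hf : f ≠ 0) :
    m.leadMonomial f ∈ f.support := by
  obtain ⟨b, hb, he⟩ := Finset.exists_mem_eq_sup f.support
    (MvPolynomial.support_nonempty.mpr hf) (fun t => m.toSyn t)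
  have : m.leadMonomial f = b := by
    rw [MonomialOrder.leadMonomial, he]; exact m.toSyn.symm_apply_apply b
  rwa [this]

lemma leadCoeff_ne_zero {f : MvPolynomial σ R} (hf : f ≠ 0) : m.leadCoeff f ≠ 0 := by
  simpa [MonomialOrder.leadCoeff, MvPolynomial.mem_support_iff] using lm_mem_support (m := m) hf

lemma eq_lm_of_degS {f : MvPolynomial σ R} {t : σ →₀ ℕ} (ht : t ∈ f.support)
    (h : m.toSyn t = degS m f) : t = m.leadMonomial f := by
  apply m.toSyn.injective
  rw [h, toSyn_leadMonomial]

lemma degS_eq_bot_iff' {f : MvPolynomial σ R} (h : degS m f = 0) {t : σ →₀ ℕ}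
    (ht : t ∈ f.support) : t = 0 := by
  have := le_degS (m := m) ht
  rw [h] at this
  have : m.toSyn t = 0 := le_antisymm this (by simpa using bot_le (a := m.toSyn t))
  simpa using m.toSyn.injective (by simpa using this)

lemma degS_add_le {f g : MvPolynomial σ R} :
    degS m (f + g) ≤ degS m f ⊔ degS m g := by
  classical
  rw [degS_le_iff]
  intro t ht
  rcases Finset.mem_union.mp (MvPolynomial.support_add ht) with h | h
  · exact le_sup_of_le_left (le_degS h)
  · exact le_sup_of_le_right (le_degS h)

lemma degS_sum_le {ι : Type*} (s : Finset ι) (p : ι → MvPolynomial σ R) :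
    degS m (∑ i ∈ s, p i) ≤ s.sup (fun i => degS m (p i)) := by
  classical
  induction s using Finset.induction_on with
  | empty => simp [degS_zero]
  | insert _ _ hx ih =>
    rename_i a s
    rw [Finset.sum_insert hx, Finset.sup_insert]
    exact degS_add_le.trans (sup_le_sup_left ih _)

lemma degS_mul_le {f g : MvPolynomial σ R} :
    degS m (f * g) ≤ degS m f + degS m g := by
  classical
  rw [degS_le_iff]
  intro t ht
  have := MvPolynomial.support_mul f g ht
  rw [Finset.mem_add] at this
  obtain ⟨a, ha, b, hb, rfl⟩ := this
  rw [map_add]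
  exact add_le_add (le_degS ha) (le_degS hb)


section Ring
variable {σ R : Type*} [CommRing R] {m : MonomialOrder σ}

lemma degS_neg {f : MvPolynomial σ R} : degS m (-f) = degS m f := by
  simp [degS, MvPolynomial.support_neg]

lemma degS_sub_le {f g : MvPolynomial σ R} :
    degS m (f - g) ≤ degS m f ⊔ degS m g := by
  rw [sub_eq_add_neg]
  exact degS_add_le.trans (by rw [degS_neg])

lemma degS_smul_le {a : R} {f : MvPolynomial σ R} : degS m (a • f) ≤ degS m f := by
  rw [degS_le_iff]
  intro t ht
  exact le_degS (Finsupp.support_smul ht)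

end Ring

section Field
variable {σ K : Type*} [Field K] {m : MonomialOrder σ}

lemma support_tail {f : MvPolynomial σ K} {t : σ →₀ ℕ}
    (ht : t ∈ (f - m.leadTerm f).support) : t ∈ f.support ∧ t ≠ m.leadMonomial f := by
  classical
  rw [MvPolynomial.mem_support_iff, MvPolynomial.coeff_sub, MonomialOrder.leadTerm,
    MvPolynomial.coeff_monomial] at ht
  by_cases h : t = m.leadMonomial f
  · rw [if_pos h.symm] at ht
    exact absurd (by rw [h]; rfl) (sub_ne_zero.mp ht)
  · rw [if_neg (fun he => h he.symm), sub_zero] at ht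
    exact ⟨MvPolynomial.mem_support_iff.mpr ht, h⟩

lemma degS_tail_lt {f : MvPolynomial σ K} {t : σ →₀ ℕ}
    (ht : t ∈ (f - m.leadTerm f).support) : m.toSyn t < degS m f := by
  obtain ⟨h1, h2⟩ := support_tail ht
  refine lt_of_le_of_ne (le_degS h1) (fun he => h2 (eq_lm_of_degS h1 he))

lemma coeff_mul_lm {f g : MvPolynomial σ K} (hf : f ≠ 0) (hg : g ≠ 0) :
    (f * g).coeff (m.leadMonomial f + m.leadMonomial g) = m.leadCoeff f * m.leadCoeff g := by
  classical
  have hdecomp : f * g = m.leadTerm f * m.leadTerm g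
      + (m.leadTerm f * (g - m.leadTerm g) + (f - m.leadTerm f) * g) := by ring
  have c1 : (m.leadTerm f * m.leadTerm g).coeff (m.leadMonomial f + m.leadMonomial g)
      = m.leadCoeff f * m.leadCoeff g := by
    rw [MonomialOrder.leadTerm, MonomialOrder.leadTerm, MvPolynomial.monomial_mul,
      MvPolynomial.coeff_monomial, if_pos rfl]
  have c2 : (m.leadTerm f * (g - m.leadTerm g)).coeff (m.leadMonomial f + m.leadMonomial g)
      = 0 := by
    rw [MonomialOrder.leadTerm, MvPolynomial.coeff_monomial_mul', if_pos le_self_add,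
      add_tsub_cancel_left]
    have : (g - m.leadTerm g).coeff (m.leadMonomial g) = 0 := by
      by_contra hc
      exact absurd rfl (support_tail (MvPolynomial.mem_support_iff.mpr hc)).2
    rw [this, mul_zero]
  have c3 : ((f - m.leadTerm f) * g).coeff (m.leadMonomial f + m.leadMonomial g) = 0 := by
    by_contra hc
    have hmem := MvPolynomial.support_mul _ _ (MvPolynomial.mem_support_iff.mpr hc)
    rw [Finset.mem_add] at hmem
    obtain ⟨a, ha, b, hb, hab⟩ := hmem
    have h1 : m.toSyn a < m.toSyn (m.leadMonomial f) := by
      rw [toSyn_leadMonomial]; exact degS_tail_lt ha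
    have h2 : m.toSyn b ≤ m.toSyn (m.leadMonomial g) := by
      rw [toSyn_leadMonomial]; exact le_degS hb
    have := add_lt_add_of_lt_of_le h1 h2
    rw [← map_add, ← map_add, hab] at this
    exact lt_irrefl _ this
  rw [hdecomp, MvPolynomial.coeff_add, MvPolynomial.coeff_add, c1, c2, c3]
  simp

lemma lm_mul {f g : MvPolynomial σ K} (hf : f ≠ 0) (hg : g ≠ 0) :
    m.leadMonomial (f * g) = m.leadMonomial f + m.leadMonomial g := by
  have hc : (f * g).coeff (m.leadMonomial f + m.leadMonomial g) ≠ 0 := by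
    rw [coeff_mul_lm hf hg]
    exact mul_ne_zero (leadCoeff_ne_zero hf) (leadCoeff_ne_zero hg)
  have h1 : m.toSyn (m.leadMonomial f + m.leadMonomial g) ≤ degS m (f * g) :=
    le_degS_of_coeff hc
  have h2 : degS m (f * g) ≤ m.toSyn (m.leadMonomial f + m.leadMonomial g) := by
    rw [map_add, toSyn_leadMonomial, toSyn_leadMonomial]
    exact degS_mul_le
  exact (eq_lm_of_degS (by rwa [MvPolynomial.mem_support_iff]) (le_antisymm h1 h2)).symm

lemma leadCoeff_mul {f g : MvPolynomial σ K} (hf : f ≠ 0) (hg : g ≠ 0) :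
    m.leadCoeff (f * g) = m.leadCoeff f * m.leadCoeff g := by
  rw [MonomialOrder.leadCoeff, lm_mul hf hg, coeff_mul_lm hf hg]

lemma lm_monomial {a : σ →₀ ℕ} {c : K} (hc : c ≠ 0) :
    m.leadMonomial (monomial a c) = a := by
  classical
  have hs : (monomial a c : MvPolynomial σ K).support = {a} := by
    rw [MvPolynomial.support_monomial, if_neg hc]
  have : degS m (monomial a c : MvPolynomial σ K) = m.toSyn a := by
    rw [degS, hs, Finset.sup_singleton]
  rw [MonomialOrder.leadMonomial, ← degS, this, m.toSyn.symm_apply_apply]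

lemma lc_monomial {a : σ →₀ ℕ} {c : K} (hc : c ≠ 0) :
    m.leadCoeff (monomial a c) = c := by
  classical
  rw [MonomialOrder.leadCoeff, lm_monomial hc, MvPolynomial.coeff_monomial, if_pos rfl]

lemma degS_monomial_le {a : σ →₀ ℕ} {c : K} :
    degS m (monomial a c : MvPolynomial σ K) ≤ m.toSyn a := by
  rw [degS_le_iff]
  intro t ht
  have := MvPolynomial.support_monomial_subset ht
  rw [Finset.mem_singleton] at this
  rw [this]

lemma leadIdeal_eq_span_monomials (S : Set (MvPolynomial σ K)) :
    m.leadIdeal S = Ideal.span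
      ((fun a => (monomial a (1 : K) : MvPolynomial σ K)) ''
        (m.leadMonomial '' {f | f ∈ S ∧ f ≠ 0})) := by
  apply le_antisymm
  · rw [MonomialOrder.leadIdeal, Ideal.span_le]
    rintro _ ⟨g, ⟨hgS, hg0⟩, rfl⟩
    have : m.leadTerm g = C (m.leadCoeff g) * monomial (m.leadMonomial g) (1 : K) := by
      rw [MvPolynomial.C_mul_monomial, mul_one]; rfl
    rw [this]
    exact Ideal.mul_mem_left _ _ (Ideal.subset_span ⟨_, ⟨g, ⟨hgS, hg0⟩, rfl⟩, rfl⟩)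
  · rw [Ideal.span_le]
    rintro _ ⟨_, ⟨g, ⟨hgS, hg0⟩, rfl⟩, rfl⟩
    have : (monomial (m.leadMonomial g) (1 : K) : MvPolynomial σ K)
        = C (m.leadCoeff g)⁻¹ * m.leadTerm g := by
      rw [MonomialOrder.leadTerm, MvPolynomial.C_mul_monomial,
        inv_mul_cancel₀ (leadCoeff_ne_zero hg0)]
    show (monomial (m.leadMonomial g)) (1:K) ∈ m.leadIdeal S
    rw [this]
    exact Ideal.mul_mem_left _ _ (Ideal.subset_span ⟨g, ⟨hgS, hg0⟩, rfl⟩)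

lemma mem_leadIdeal_iff {S : Set (MvPolynomial σ K)} {x : MvPolynomial σ K} :
    x ∈ m.leadIdeal S ↔
      ∀ t ∈ x.support, ∃ g ∈ S, g ≠ 0 ∧ m.leadMonomial g ≤ t := by
  rw [leadIdeal_eq_span_monomials, MvPolynomial.mem_ideal_span_monomial_image]
  constructor
  · intro h t ht
    obtain ⟨_, ⟨g, ⟨hgS, hg0⟩, rfl⟩, hle⟩ := h t ht
    exact ⟨g, hgS, hg0, hle⟩
  · intro h t ht
    obtain ⟨g, hgS, hg0, hle⟩ := h t ht
    exact ⟨_, ⟨g, ⟨hgS, hg0⟩, rfl⟩, hle⟩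

lemma leadTerm_mem {S : Set (MvPolynomial σ K)} {f : MvPolynomial σ K}
    (hf : f ∈ S) (hf0 : f ≠ 0) : m.leadTerm f ∈ m.leadIdeal S :=
  Ideal.subset_span ⟨f, ⟨hf, hf0⟩, rfl⟩

lemma support_leadTerm {f : MvPolynomial σ K} (hf : f ≠ 0) :
    (m.leadTerm f).support = {m.leadMonomial f} := by
  classical
  rw [MonomialOrder.leadTerm, MvPolynomial.support_monomial,
    if_neg (leadCoeff_ne_zero hf)]

lemma degS_sPair_lt {p q : MvPolynomial σ K} (hp : p ≠ 0) (hq : q ≠ 0)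
    (hγ : 0 < m.toSyn (m.leadMonomial p ⊔ m.leadMonomial q)) :
    degS m (m.sPair p q) < m.toSyn (m.leadMonomial p ⊔ m.leadMonomial q) := by
  classical
  set γ := m.leadMonomial p ⊔ m.leadMonomial q with hγdef
  set A := monomial (γ - m.leadMonomial p) (m.leadCoeff p)⁻¹ * p with hA
  set B := monomial (γ - m.leadMonomial q) (m.leadCoeff q)⁻¹ * q with hB
  have key : ∀ r : MvPolynomial σ K, r ≠ 0 → m.leadMonomial r ≤ γ →
      degS m (monomial (γ - m.leadMonomial r) (m.leadCoeff r)⁻¹ * r) ≤ m.toSyn γ := by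
    intro r hr hrγ
    refine degS_mul_le.trans ?_
    have : m.toSyn (γ - m.leadMonomial r) + degS m r = m.toSyn γ := by
      rw [← toSyn_leadMonomial, ← map_add, tsub_add_cancel_of_le hrγ]
    exact le_of_le_of_eq (add_le_add_left degS_monomial_le _) this
  have hAle : degS m A ≤ m.toSyn γ := key p hp le_sup_left
  have hBle : degS m B ≤ m.toSyn γ := key q hq le_sup_right
  have hcoeff : ∀ r : MvPolynomial σ K, r ≠ 0 → m.leadMonomial r ≤ γ →
      (monomial (γ - m.leadMonomial r) (m.leadCoeff r)⁻¹ * r).coeff γ = 1 := by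
    intro r hr hrγ
    rw [MvPolynomial.coeff_monomial_mul', if_pos tsub_le_self,
      tsub_tsub_cancel_of_le hrγ]
    exact inv_mul_cancel₀ (leadCoeff_ne_zero hr)
  have hc0 : (m.sPair p q).coeff γ = 0 := by
    rw [MonomialOrder.sPair, MvPolynomial.coeff_sub, ← hγdef,
      hcoeff p hp le_sup_left, hcoeff q hq le_sup_right, sub_self]
  have hle : degS m (m.sPair p q) ≤ m.toSyn γ := by
    rw [MonomialOrder.sPair, ← hγdef]
    exact degS_sub_le.trans (sup_le hAle hBle)
  rcases eq_or_ne (m.sPair p q) 0 with h0 | h0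
  · rw [h0, degS_zero]; exact hγ
  refine lt_of_le_of_ne hle (fun he => ?_)
  have hmem := lm_mem_support (m := m) h0
  have : m.leadMonomial (m.sPair p q) = γ :=
    m.toSyn.injective (by rw [toSyn_leadMonomial, he])
  rw [this] at hmem
  rw [MvPolynomial.mem_support_iff] at hmem
  exact hmem hc0

lemma reducesToZero_rep {G : Finset (MvPolynomial σ K)} {f : MvPolynomial σ K}
    (h : m.ReducesToZero (G : Set (MvPolynomial σ K)) f) :
    ∃ w : MvPolynomial σ K → MvPolynomial σ K,
      f = ∑ g ∈ G, w g * g ∧ ∀ g ∈ G, degS m (w g * g) ≤ degS m f := by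
  classical
  unfold MonomialOrder.ReducesToZero at h
  induction h using Relation.ReflTransGen.head_induction_on with
  | refl =>
    exact ⟨0, by simp, fun g hg => by simp [degS_zero]⟩
  | @head a b hstep _ ih =>
    obtain ⟨g₀, hg₀G, hg₀0, t, ht, hle, hb⟩ := hstep
    obtain ⟨w', hw'sum, hw'deg⟩ := ih
    set s : MvPolynomial σ K := monomial (t - m.leadMonomial g₀) (a.coeff t / m.leadCoeff g₀)
      with hs
    have hsdeg : degS m (s * g₀) ≤ degS m a := by
      refine degS_mul_le.trans ?_
      have h1 : degS m s ≤ m.toSyn (t - m.leadMonomial g₀) := degS_monomial_le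
      have h2 : m.toSyn (t - m.leadMonomial g₀) + degS m g₀
          ≤ m.toSyn (t - m.leadMonomial g₀) + m.toSyn (m.leadMonomial g₀) := by
        rw [toSyn_leadMonomial]
      calc degS m s + degS m g₀ ≤ m.toSyn (t - m.leadMonomial g₀) + degS m g₀ :=
            add_le_add_left h1 _
        _ = m.toSyn (t - m.leadMonomial g₀) + m.toSyn (m.leadMonomial g₀) := by
            rw [toSyn_leadMonomial]
        _ = m.toSyn t := by rw [← map_add, tsub_add_cancel_of_le hle]
        _ ≤ degS m a := le_degS ht
    have hbdeg : degS m b ≤ degS m a := by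
      rw [hb]
      exact degS_sub_le.trans (sup_le le_rfl hsdeg)
    refine ⟨fun g => w' g + if g = g₀ then s else 0, ?_, ?_⟩
    · have : ∑ g ∈ G, (w' g + if g = g₀ then s else 0) * g
          = (∑ g ∈ G, w' g * g) + ∑ g ∈ G, (if g = g₀ then s * g else 0) := by
        rw [← Finset.sum_add_distrib]
        refine Finset.sum_congr rfl (fun g _ => by split_ifs <;> ring)
      rw [this, ← hw'sum, Finset.sum_ite_eq' G g₀ (fun g => s * g),
        if_pos (Finset.mem_coe.mp hg₀G), hb]
      ring
    · intro g hg
      have : (w' g + if g = g₀ then s else 0) * g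
          = w' g * g + (if g = g₀ then s * g else 0) := by split_ifs <;> ring
      rw [this]
      refine degS_add_le.trans (sup_le ((hw'deg g hg).trans hbdeg) ?_)
      split_ifs with hgg
      · rw [hgg]; exact hsdeg
      · rw [degS_zero]
        exact m.bot_eq_zero ▸ bot_le

lemma reducesToZero_of_div {G : Finset (MvPolynomial σ K)} {I : Ideal (MvPolynomial σ K)}
    (hGI : (G : Set (MvPolynomial σ K)) ⊆ I)
    (hdiv : ∀ f : MvPolynomial σ K, f ∈ I → f ≠ 0 →
      ∃ g ∈ G, g ≠ 0 ∧ m.leadMonomial g ≤ m.leadMonomial f) :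
    ∀ f ∈ I, m.ReducesToZero (G : Set (MvPolynomial σ K)) f := by
  classical
  have main : ∀ d : m.syn, ∀ f ∈ I, degS m f = d →
      m.ReducesToZero (G : Set (MvPolynomial σ K)) f := by
    intro d
    induction d using WellFoundedLT.induction with
    | ind d IH =>
      intro f hfI hfd
      rcases eq_or_ne f 0 with rfl | hf0
      · exact Relation.ReflTransGen.refl
      obtain ⟨g, hgG, hg0, hglm⟩ := hdiv f hfI hf0
      set s : MvPolynomial σ K :=
        monomial (m.leadMonomial f - m.leadMonomial g) (f.coeff (m.leadMonomial f) / m.leadCoeff g)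
        with hs
      set f' := f - s * g with hf'
      have hstep : m.RedStep (G : Set (MvPolynomial σ K)) f f' :=
        ⟨g, hgG, hg0, m.leadMonomial f, lm_mem_support hf0, hglm, rfl⟩
      have hcoefftop : f'.coeff (m.leadMonomial f) = 0 := by
        rw [hf', MvPolynomial.coeff_sub, hs, MvPolynomial.coeff_monomial_mul',
          if_pos tsub_le_self, tsub_tsub_cancel_of_le hglm]
        change m.leadCoeff f - m.leadCoeff f / m.leadCoeff g * m.leadCoeff g = 0
        rw [div_mul_cancel₀ _ (leadCoeff_ne_zero hg0), sub_self]
      have hsle : degS m (s * g) ≤ degS m f := by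
        refine degS_mul_le.trans ?_
        calc degS m s + degS m g
            ≤ m.toSyn (m.leadMonomial f - m.leadMonomial g) + m.toSyn (m.leadMonomial g) := by
              rw [toSyn_leadMonomial]; exact add_le_add_left degS_monomial_le _
          _ = m.toSyn (m.leadMonomial f) := by rw [← map_add, tsub_add_cancel_of_le hglm]
          _ = degS m f := toSyn_leadMonomial f
      have hlt : ∀ t ∈ f'.support, m.toSyn t < degS m f := by
        intro t ht
        have h1 : m.toSyn t ≤ degS m f := by
          have := MvPolynomial.support_sub σ f (s * g) ht
          rcases Finset.mem_union.mp this with h | h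
          · exact le_degS h
          · exact (le_degS h).trans hsle
        refine lt_of_le_of_ne h1 (fun he => ?_)
        have htne : t = m.leadMonomial f := by
          apply m.toSyn.injective; rw [he, toSyn_leadMonomial]
        rw [MvPolynomial.mem_support_iff, htne] at ht
        exact ht hcoefftop
      have hf'I : f' ∈ I := sub_mem hfI (Ideal.mul_mem_left I s (hGI hgG))
      rcases eq_or_ne f' 0 with h0 | h0
      · show Relation.ReflTransGen (m.RedStep (G : Set (MvPolynomial σ K))) f 0
        exact h0 ▸ Relation.ReflTransGen.single hstep
      · have hdlt : degS m f' < d := by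
          rw [← hfd, ← toSyn_leadMonomial]
          exact hlt _ (lm_mem_support h0)
        exact Relation.ReflTransGen.head hstep (IH _ hdlt f' hf'I rfl)
  intro f hf
  exact main (degS m f) f hf rfl

lemma sPair_key {g₀ g₁ : MvPolynomial σ K} (h₀ : g₀ ≠ 0) (h₁ : g₁ ≠ 0) {δ' : σ →₀ ℕ}
    (hle₀ : m.leadMonomial g₀ ≤ δ') (hle₁ : m.leadMonomial g₁ ≤ δ') (a : K) :
    monomial (δ' - m.leadMonomial g₀) (a * (m.leadCoeff g₀)⁻¹) * g₀
      = C a * (monomial (δ' - (m.leadMonomial g₀ ⊔ m.leadMonomial g₁)) (1 : K)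
          * m.sPair g₀ g₁)
        + monomial (δ' - m.leadMonomial g₁) (a * (m.leadCoeff g₁)⁻¹) * g₁ := by
  set γ := m.leadMonomial g₀ ⊔ m.leadMonomial g₁ with hγ
  have hγδ : γ ≤ δ' := sup_le hle₀ hle₁
  have e : ∀ r : MvPolynomial σ K, m.leadMonomial r ≤ γ →
      monomial (δ' - γ) (1 : K) * (monomial (γ - m.leadMonomial r) (m.leadCoeff r)⁻¹ * r)
        = monomial (δ' - m.leadMonomial r) (m.leadCoeff r)⁻¹ * r := by
    intro r hr
    rw [← mul_assoc, MvPolynomial.monomial_mul, one_mul,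
      tsub_add_tsub_cancel hγδ hr]
  rw [MonomialOrder.sPair, mul_sub, e g₀ le_sup_left, e g₁ le_sup_right, mul_sub,
    ← mul_assoc, ← mul_assoc, MvPolynomial.C_mul_monomial, MvPolynomial.C_mul_monomial]
  ring

lemma cancellation {G : Finset (MvPolynomial σ K)} (hG0 : ∀ g ∈ G, g ≠ 0)
    (hGc : ∀ g ∈ G, m.leadMonomial g ≠ 0)
    (hS : ∀ f ∈ G, ∀ g ∈ G, m.ReducesToZero (G : Set (MvPolynomial σ K)) (m.sPair f g))
    (δ' : σ →₀ ℕ) (hδ : (0 : m.syn) < m.toSyn δ') :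
    ∀ T : Finset (MvPolynomial σ K), T ⊆ G → ∀ c : MvPolynomial σ K → K,
      (∀ g ∈ T, m.leadMonomial g ≤ δ') →
      (∑ g ∈ T, c g * m.leadCoeff g) = 0 →
      ∃ h : MvPolynomial σ K → MvPolynomial σ K,
        (∑ g ∈ T, monomial (δ' - m.leadMonomial g) (c g) * g) = ∑ g ∈ G, h g * g ∧
        ∀ g ∈ G, degS m (h g * g) < m.toSyn δ' := by
  classical
  intro T
  induction T using Finset.induction_on with
  | empty =>
    intro _ c _ _
    refine ⟨0, by simp, fun g hg => by rw [Pi.zero_apply, zero_mul, degS_zero]; exact hδ⟩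
  | insert _ _ hg₀T ih =>
    rename_i g₀ T
    intro hsub c hle hsum0
    have hg₀G : g₀ ∈ G := hsub (Finset.mem_insert_self g₀ T)
    have hTsub : T ⊆ G := fun x hx => hsub (Finset.mem_insert_of_mem hx)
    have hg₀0 : g₀ ≠ 0 := hG0 _ hg₀G
    rw [Finset.sum_insert hg₀T] at hsum0 ⊢
    rcases T.eq_empty_or_nonempty with rfl | ⟨g₁, hg₁T⟩
    · rw [Finset.sum_empty, add_zero] at hsum0
      have hc0 : c g₀ = 0 :=
        (mul_eq_zero.mp hsum0).resolve_right (leadCoeff_ne_zero hg₀0)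
      refine ⟨0, ?_, fun g hg => by rw [Pi.zero_apply, zero_mul, degS_zero]; exact hδ⟩
      rw [hc0, Finset.sum_empty, add_zero]
      simp
    · have hg₁G : g₁ ∈ G := hTsub hg₁T
      have hg₁0 : g₁ ≠ 0 := hG0 _ hg₁G
      set γ := m.leadMonomial g₀ ⊔ m.leadMonomial g₁ with hγ
      set a := c g₀ * m.leadCoeff g₀ with ha
      have hle₀ : m.leadMonomial g₀ ≤ δ' := hle _ (Finset.mem_insert_self g₀ T)
      have hle₁ : m.leadMonomial g₁ ≤ δ' := hle _ (Finset.mem_insert_of_mem hg₁T)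
      -- rewrite head term
      have hhead : monomial (δ' - m.leadMonomial g₀) (c g₀) * g₀
          = C a * (monomial (δ' - γ) (1 : K) * m.sPair g₀ g₁)
            + monomial (δ' - m.leadMonomial g₁) (a * (m.leadCoeff g₁)⁻¹) * g₁ := by
        have := sPair_key (m := m) hg₀0 hg₁0 hle₀ hle₁ a
        rw [ha, mul_assoc, mul_inv_cancel₀ (leadCoeff_ne_zero hg₀0), mul_one] at this
        exact this
      -- new coefficient function for T
      set c' : MvPolynomial σ K → K := fun g => if g = g₁ then c g + a * (m.leadCoeff g₁)⁻¹
        else c g with hc'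
      have hTsum : (∑ g ∈ T, monomial (δ' - m.leadMonomial g) (c' g) * g)
          = monomial (δ' - m.leadMonomial g₁) (a * (m.leadCoeff g₁)⁻¹) * g₁
            + ∑ g ∈ T, monomial (δ' - m.leadMonomial g) (c g) * g := by
        have : ∀ g ∈ T, monomial (δ' - m.leadMonomial g) (c' g) * g
            = monomial (δ' - m.leadMonomial g) (c g) * g
              + (if g = g₁ then monomial (δ' - m.leadMonomial g) (a * (m.leadCoeff g₁)⁻¹) * g
                 else 0) := by
          intro g hg
          by_cases hgg : g = g₁
          · subst hgg
            simp only [hc', if_pos rfl, if_true]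
            rw [map_add, add_mul]
          · simp only [hc', if_neg hgg, add_zero]
        rw [Finset.sum_congr rfl this, Finset.sum_add_distrib,
          Finset.sum_ite_eq' T g₁
            (fun g => monomial (δ' - m.leadMonomial g) (a * (m.leadCoeff g₁)⁻¹) * g),
          if_pos hg₁T, add_comm]
      -- apply IH with c'
      have hsum' : (∑ g ∈ T, c' g * m.leadCoeff g) = 0 := by
        have : ∀ g ∈ T, c' g * m.leadCoeff g
            = c g * m.leadCoeff g
              + (if g = g₁ then a * (m.leadCoeff g₁)⁻¹ * m.leadCoeff g else 0) := by
          intro g hg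
          by_cases hgg : g = g₁
          · subst hgg
            simp only [hc', if_pos rfl, if_true]
            ring
          · simp only [hc', if_neg hgg, add_zero]
        rw [Finset.sum_congr rfl this, Finset.sum_add_distrib,
          Finset.sum_ite_eq' T g₁ (fun g => a * (m.leadCoeff g₁)⁻¹ * m.leadCoeff g),
          if_pos hg₁T, mul_assoc, inv_mul_cancel₀ (leadCoeff_ne_zero hg₁0), mul_one]
        rw [add_comm] at hsum0
        exact hsum0
      obtain ⟨h₂, hh₂sum, hh₂deg⟩ := ih hTsub c' (fun g hg => hle _ (Finset.mem_insert_of_mem hg))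
        hsum'
      -- standard representation of the S-pair
      obtain ⟨w, hwsum, hwdeg⟩ := reducesToZero_rep (m := m) (hS g₀ hg₀G g₁ hg₁G)
      have hγδ : γ ≤ δ' := sup_le hle₀ hle₁
      have hγpos : (0 : m.syn) < m.toSyn γ := by
        have hne : m.toSyn (m.leadMonomial g₀) ≠ 0 := by
          intro h0
          exact hGc _ hg₀G (by simpa using m.toSyn.injective (by simpa using h0))
        have hb : (0 : m.syn) ≤ m.toSyn (m.leadMonomial g₀) := m.bot_eq_zero ▸ bot_le
        exact lt_of_lt_of_le (lt_of_le_of_ne hb (Ne.symm hne)) (m.toSyn_monotone le_sup_left)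
      have hsp : degS m (m.sPair g₀ g₁) < m.toSyn γ := by
        rcases eq_or_ne (m.sPair g₀ g₁) 0 with h0 | h0
        · rw [h0, degS_zero]; exact hγpos
        · exact degS_sPair_lt hg₀0 hg₁0 hγpos
      refine ⟨fun g => C a * monomial (δ' - γ) (1 : K) * w g + h₂ g, ?_, ?_⟩
      · have expand : ∀ g ∈ G, (C a * monomial (δ' - γ) (1 : K) * w g + h₂ g) * g
            = C a * monomial (δ' - γ) (1 : K) * (w g * g) + h₂ g * g := by
          intro g _; ring
        rw [Finset.sum_congr rfl expand, Finset.sum_add_distrib, ← Finset.mul_sum,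
          ← hwsum, ← hh₂sum, hTsum, hhead]
        ring
      · intro g hg
        have e : (C a * monomial (δ' - γ) (1 : K) * w g + h₂ g) * g
            = (C a * monomial (δ' - γ) (1 : K)) * (w g * g) + h₂ g * g := by ring
        rw [e]
        refine lt_of_le_of_lt degS_add_le (sup_lt_iff.mpr ⟨?_, hh₂deg g hg⟩)
        have h1 : degS m (C a * monomial (δ' - γ) (1 : K)) ≤ m.toSyn (δ' - γ) := by
          rw [MvPolynomial.C_mul_monomial, mul_one]
          exact degS_monomial_le
        calc degS m ((C a * monomial (δ' - γ) (1 : K)) * (w g * g))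
            ≤ degS m (C a * monomial (δ' - γ) (1 : K)) + degS m (w g * g) := degS_mul_le
          _ ≤ m.toSyn (δ' - γ) + degS m (m.sPair g₀ g₁) := add_le_add h1 (hwdeg g hg)
          _ < m.toSyn (δ' - γ) + m.toSyn γ := by
              exact add_lt_add_right hsp _
          _ = m.toSyn δ' := by rw [← map_add, tsub_add_cancel_of_le hγδ]

end Field
end Buch

open Buch in
theorem buchberger_criterionAux
    {n : ℕ} {K : Type*} [Field K] (m : MonomialOrder (Fin n))
    (G : Finset (MvPolynomial (Fin n) K)) (hG0 : ∀ g ∈ G, g ≠ 0)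
    (I : Ideal (MvPolynomial (Fin n) K))
    (hI : I = Ideal.span (G : Set (MvPolynomial (Fin n) K))) :
    m.leadIdeal (G : Set (MvPolynomial (Fin n) K)) =
        m.leadIdeal (I : Set (MvPolynomial (Fin n) K)) ↔
      ∀ f ∈ G, ∀ g ∈ G, m.ReducesToZero (G : Set (MvPolynomial (Fin n) K)) (m.sPair f g) := by
  classical
  have hGI : (G : Set (MvPolynomial (Fin n) K)) ⊆ (I : Set (MvPolynomial (Fin n) K)) := by
    rw [hI]; exact Ideal.subset_span
  constructor
  · -- Gröbner basis → S-pairs reduce to zero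
    intro hEq f hf g hg
    have hspI : m.sPair f g ∈ I := by
      rw [MonomialOrder.sPair]
      exact sub_mem (Ideal.mul_mem_left _ _ (hGI hf))
        (Ideal.mul_mem_left _ _ (hGI hg))
    refine reducesToZero_of_div hGI ?_ _ hspI
    intro p hpI hp0
    have hmem : m.leadTerm p ∈ m.leadIdeal (G : Set (MvPolynomial (Fin n) K)) := by
      rw [hEq]
      exact leadTerm_mem hpI hp0
    rw [mem_leadIdeal_iff] at hmem
    obtain ⟨g', hg'G, hg'0, hg'le⟩ := hmem (m.leadMonomial p)
      (by rw [support_leadTerm hp0]; exact Finset.mem_singleton_self _)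
    exact ⟨g', Finset.mem_coe.mp hg'G, hg'0, hg'le⟩
  · -- S-pairs reduce to zero → Gröbner basis
    intro hS
    apply le_antisymm
    · rw [MonomialOrder.leadIdeal, Ideal.span_le]
      rintro _ ⟨g, ⟨hgG, hg0⟩, rfl⟩
      exact leadTerm_mem (hGI hgG) hg0
    · show Ideal.span (m.leadTerm ''
          {f | f ∈ (I : Set (MvPolynomial (Fin n) K)) ∧ f ≠ 0})
          ≤ m.leadIdeal (G : Set (MvPolynomial (Fin n) K))
      rw [Ideal.span_le]
      rintro _ ⟨f, ⟨hfI, hf0⟩, rfl⟩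
      show m.leadTerm f ∈ m.leadIdeal (G : Set (MvPolynomial (Fin n) K))
      -- dispose of the case of a nonzero constant in G
      by_cases hGc : ∀ g ∈ G, m.leadMonomial g ≠ 0
      swap
      · push_neg at hGc
        obtain ⟨g, hgG, hglm⟩ := hGc
        rw [mem_leadIdeal_iff]
        intro t _
        exact ⟨g, Finset.mem_coe.mpr hgG, hG0 g hgG, by rw [hglm]; exact zero_le⟩
      -- minimal representation degree
      set Δ : Set m.syn := {d | ∃ h : MvPolynomial (Fin n) K → MvPolynomial (Fin n) K,
        f = ∑ g ∈ G, h g * g ∧ ∀ g ∈ G, degS m (h g * g) ≤ d} with hΔ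
      have hΔne : Δ.Nonempty := by
        have : f ∈ Ideal.span (G : Set (MvPolynomial (Fin n) K)) := by rw [← hI]; exact hfI
        rw [Ideal.span, Submodule.mem_span_set] at this
        obtain ⟨c, hcsupp, hcsum⟩ := this
        have hGsub : c.support ⊆ G := fun x hx => Finset.mem_coe.mp (hcsupp hx)
        have hext : ∑ x ∈ c.support, c x • x = ∑ x ∈ G, c x • x :=
          Finset.sum_subset hGsub
            (fun x _ hx => by rw [Finsupp.notMem_support_iff.mp hx, zero_smul])
        have hsum : f = ∑ g ∈ G, c g * g := by
          rw [← hcsum, Finsupp.sum, hext]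
          simp_rw [smul_eq_mul]
        exact ⟨G.sup (fun g => degS m (c g * g)), fun g => c g, hsum,
          fun g hg => Finset.le_sup (f := fun g => degS m (c g * g)) hg⟩
      obtain ⟨δ, hδΔ, hmin⟩ := (IsWellFounded.wf
        (r := ((· < ·) : m.syn → m.syn → Prop))).has_min Δ hΔne
      obtain ⟨h, hhsum, hhdeg⟩ := hδΔ
      have hfle : degS m f ≤ δ := by
        rw [hhsum]
        exact (degS_sum_le G _).trans (Finset.sup_le hhdeg)
      rcases eq_or_lt_of_le hfle with hfeq | hflt
      · -- δ = deg f : extract a divisor of the lead monomial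
        set t0 := m.leadMonomial f with ht0
        have hlc : f.coeff t0 ≠ 0 := leadCoeff_ne_zero hf0
        have : ∃ g ∈ G, (h g * g).coeff t0 ≠ 0 := by
          by_contra hno
          push_neg at hno
          rw [hhsum, MvPolynomial.coeff_sum] at hlc
          exact hlc (Finset.sum_eq_zero hno)
        obtain ⟨g, hgG, hgne⟩ := this
        have hg0 : g ≠ 0 := hG0 g hgG
        have hhg0 : h g ≠ 0 := by
          intro h0; rw [h0, zero_mul, MvPolynomial.coeff_zero] at hgne; exact hgne rfl
        have h1 : m.toSyn t0 ≤ degS m (h g * g) := le_degS_of_coeff hgne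
        have h2 : degS m (h g * g) ≤ m.toSyn t0 := by
          rw [ht0, toSyn_leadMonomial, hfeq]; exact hhdeg g hgG
        have hlm : t0 = m.leadMonomial (h g * g) :=
          eq_lm_of_degS (MvPolynomial.mem_support_iff.mpr hgne) (le_antisymm h1 h2)
        have hdvd : m.leadMonomial g ≤ t0 := by
          rw [hlm, lm_mul hhg0 hg0]
          exact le_add_self
        rw [mem_leadIdeal_iff]
        intro t ht
        rw [support_leadTerm hf0, Finset.mem_singleton] at ht
        exact ⟨g, Finset.mem_coe.mpr hgG, hg0, ht ▸ hdvd⟩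
      · -- deg f < δ : contradiction with minimality
        exfalso
        set δ' := m.toSyn.symm δ with hδ'
        have hδ'syn : m.toSyn δ' = δ := m.toSyn.apply_symm_apply δ
        have hδpos : (0 : m.syn) < m.toSyn δ' := by
          rw [hδ'syn]
          exact lt_of_le_of_lt (m.bot_eq_zero ▸ bot_le) hflt
        set T : Finset (MvPolynomial (Fin n) K) :=
          G.filter (fun g => degS m (h g * g) = δ) with hT
        have hTG : T ⊆ G := Finset.filter_subset _ _
        have hTfacts : ∀ g ∈ T, h g ≠ 0 ∧ g ≠ 0 ∧
            m.leadMonomial (h g) + m.leadMonomial g = δ' ∧ m.leadMonomial g ≤ δ' := by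
          intro g hg
          obtain ⟨hgG, hgδ⟩ := Finset.mem_filter.mp hg
          have hne : h g * g ≠ 0 := by
            intro h0
            rw [h0, degS_zero] at hgδ
            exact absurd (hgδ ▸ hδpos) (by rw [hδ'syn]; exact lt_irrefl δ)
          have hhg0 : h g ≠ 0 := fun h0 => hne (by rw [h0, zero_mul])
          have hg0 : g ≠ 0 := fun h0 => hne (by rw [h0, mul_zero])
          have hlm : m.leadMonomial (h g) + m.leadMonomial g = δ' := by
            apply m.toSyn.injective
            rw [hδ'syn, ← lm_mul hhg0 hg0, toSyn_leadMonomial, hgδ]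
          exact ⟨hhg0, hg0, hlm, hlm ▸ le_add_self⟩
        -- c g := lead coefficient of h g
        set c : MvPolynomial (Fin n) K → K := fun g => m.leadCoeff (h g) with hc
        set htail : MvPolynomial (Fin n) K → MvPolynomial (Fin n) K :=
          fun g => if g ∈ T then h g - m.leadTerm (h g) else h g with htl
        -- decomposition of f
        have hdecomp : f = (∑ g ∈ T, monomial (δ' - m.leadMonomial g) (c g) * g)
            + ∑ g ∈ G, htail g * g := by
          have e1 : ∀ g ∈ T, monomial (δ' - m.leadMonomial g) (c g) * g
              = m.leadTerm (h g) * g := by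
            intro g hg
            obtain ⟨hhg0, hg0, hlm, hle⟩ := hTfacts g hg
            rw [MonomialOrder.leadTerm, hc]
            congr 1
            rw [← hlm, add_tsub_cancel_right]
          rw [Finset.sum_congr rfl e1]
          have e2 : ∀ g ∈ G, htail g * g
              = h g * g - (if g ∈ T then m.leadTerm (h g) * g else 0) := by
            intro g hg
            by_cases hgg : g ∈ T
            · simp only [htl, if_pos hgg]; ring
            · simp only [htl, if_neg hgg]; ring
          rw [Finset.sum_congr rfl e2, Finset.sum_sub_distrib, Finset.sum_ite_mem,
            Finset.inter_eq_right.mpr hTG, ← hhsum]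
          ring
        -- all terms of the remainder are below δ
        have hRlt : ∀ g ∈ G, ∀ t ∈ (htail g * g).support, m.toSyn t < δ := by
          intro g hgG t ht
          by_cases hgT : g ∈ T
          · obtain ⟨hhg0, hg0, hlm, hle⟩ := hTfacts g hgT
            simp only [htl, if_pos hgT] at ht
            have := MvPolynomial.support_mul _ _ ht
            rw [Finset.mem_add] at this
            obtain ⟨u, hu, v, hv, rfl⟩ := this
            have h1 : m.toSyn u < degS m (h g) := degS_tail_lt hu
            have h2 : m.toSyn v ≤ degS m g := le_degS hv
            have h3 : degS m (h g) + degS m g = δ := by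
              rw [← toSyn_leadMonomial, ← toSyn_leadMonomial, ← map_add, hlm, hδ'syn]
            calc m.toSyn (u + v) = m.toSyn u + m.toSyn v := map_add _ _ _
              _ < degS m (h g) + degS m g := add_lt_add_of_lt_of_le h1 h2
              _ = δ := h3
          · simp only [htl, if_neg hgT] at ht
            have hne : degS m (h g * g) ≠ δ := by
              intro he
              exact hgT (Finset.mem_filter.mpr ⟨hgG, he⟩)
            exact lt_of_le_of_lt (le_degS ht) (lt_of_le_of_ne (hhdeg g hgG) hne)
        -- the sum of lead coefficients over T vanishes
        have hsum0 : (∑ g ∈ T, c g * m.leadCoeff g) = 0 := by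
          have hcf : f.coeff δ' = 0 := by
            apply coeff_eq_zero_of_lt
            rw [hδ'syn]
            exact hflt
          have hcR : (∑ g ∈ G, htail g * g).coeff δ' = 0 := by
            rw [MvPolynomial.coeff_sum]
            refine Finset.sum_eq_zero (fun g hg => ?_)
            by_contra hne
            have := hRlt g hg δ' (MvPolynomial.mem_support_iff.mpr hne)
            rw [hδ'syn] at this
            exact lt_irrefl δ this
          have hcT : (∑ g ∈ T, monomial (δ' - m.leadMonomial g) (c g) * g).coeff δ'
              = ∑ g ∈ T, c g * m.leadCoeff g := by
            rw [MvPolynomial.coeff_sum]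
            refine Finset.sum_congr rfl (fun g hg => ?_)
            obtain ⟨hhg0, hg0, hlm, hle⟩ := hTfacts g hg
            rw [MvPolynomial.coeff_monomial_mul', if_pos tsub_le_self,
              tsub_tsub_cancel_of_le hle]
            rfl
          have := hdecomp ▸ hcf
          rw [MvPolynomial.coeff_add, hcT, hcR, add_zero] at this
          exact this
        -- apply cancellation
        obtain ⟨h', hh'sum, hh'deg⟩ := cancellation hG0 hGc hS δ' hδpos T hTG c
          (fun g hg => (hTfacts g hg).2.2.2) hsum0
        -- new representation with smaller degree
        set h'' : MvPolynomial (Fin n) K → MvPolynomial (Fin n) K :=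
          fun g => h' g + htail g with hh''
        have hsum'' : f = ∑ g ∈ G, h'' g * g := by
          rw [hdecomp, hh'sum]
          rw [← Finset.sum_add_distrib]
          exact Finset.sum_congr rfl (fun g _ => by rw [hh'']; ring)
        have hbound : ∀ g ∈ G, degS m (h'' g * g) < δ := by
          intro g hg
          have e : h'' g * g = h' g * g + htail g * g := by rw [hh'']; ring
          rw [e]
          refine lt_of_le_of_lt degS_add_le (sup_lt_iff.mpr ⟨?_, ?_⟩)
          · rw [← hδ'syn]; exact hh'deg g hg
          · rcases eq_or_ne (htail g * g) 0 with h0 | h0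
            · rw [h0, degS_zero]
              rw [← hδ'syn]
              exact hδpos
            · rw [← toSyn_leadMonomial]
              exact hRlt g hg _ (lm_mem_support h0)
        have hd' : G.sup (fun g => degS m (h'' g * g)) ∈ Δ :=
          ⟨h'', hsum'', fun g hg => Finset.le_sup (f := fun g => degS m (h'' g * g)) hg⟩
        refine hmin _ hd' ?_
        refine Finset.sup_lt_iff ?_ |>.mpr hbound
        exact lt_of_le_of_lt (m.bot_eq_zero ▸ bot_le : (⊥ : m.syn) ≤ degS m f) hflt

/-- **Buchberger's criterion.** Let `G` be a finite set of nonzero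
polynomials generating the ideal `I` and `m` a global monomial order. Then `G` is a
Gröbner basis of `I` w.r.t. `m` (i.e. `L(G) = L(I)`) if and only if for all `f, g ∈ G`
the S-pair `S(f,g)` reduces to zero w.r.t. `G`. -/
theorem buchberger_criterion
    {n : ℕ} {K : Type*} [Field K] (m : MonomialOrder (Fin n))
    (G : Finset (MvPolynomial (Fin n) K)) (hG0 : ∀ g ∈ G, g ≠ 0)
    (I : Ideal (MvPolynomial (Fin n) K))
    (hI : I = Ideal.span (G : Set (MvPolynomial (Fin n) K))) :
    m.leadIdeal (G : Set (MvPolynomial (Fin n) K)) =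
        m.leadIdeal (I : Set (MvPolynomial (Fin n) K)) ↔
      ∀ f ∈ G, ∀ g ∈ G, m.ReducesToZero (G : Set (MvPolynomial (Fin n) K)) (m.sPair f g) := by
  open Buch in
  exact buchberger_criterionAux m G hG0 I hI
end

section
/- Shape Lemma: let K be a perfect field with algebraic closure K̄, and let I ⊆ K[x_1,…,x_n] be a radical zero-dimensional ideal with D = dim_K K[x_1,…,x_n]/I. Suppose the x_n-coordinates of the points of V(I) ⊆ K̄^n are pairwise distinct. Then the reduced Gröbner basis of I w.r.t. the lexicographic order with x_1 > … > x_n is of the form {w(x_n), x_{n-1} + u_{n-1}(x_n), …, x_1 + u_1(x_n)}, where w ∈ K[x_n] is monic, squarefree, of degree D, and deg u_i < D for all i. -/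
open MvPolynomial

namespace ShapeAux
open Finsupp Module
section Lemmas1


open Finsupp

variable {σ R : Type*} [CommSemiring R]

theorem leadMonomial_eq (m : MonomialOrder σ) {f : MvPolynomial σ R} {t : σ →₀ ℕ}
    (ht : t ∈ f.support) (h : ∀ s ∈ f.support, m.toSyn s ≤ m.toSyn t) :
    m.leadMonomial f = t := by
  have : f.support.sup (fun t => m.toSyn t) = m.toSyn t :=
    le_antisymm (Finset.sup_le h) (Finset.le_sup ht)
  rw [MonomialOrder.leadMonomial, this, AddEquiv.symm_apply_apply]

theorem leadMonomial_mem (m : MonomialOrder σ) {f : MvPolynomial σ R} (hf : f ≠ 0) :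
    m.leadMonomial f ∈ f.support := by
  obtain ⟨t, ht, hsup⟩ := Finset.exists_mem_eq_sup f.support
    (MvPolynomial.support_nonempty.mpr hf) (fun t => m.toSyn t)
  rw [MonomialOrder.leadMonomial, hsup, AddEquiv.symm_apply_apply]
  exact ht

theorem toSyn_le_leadMonomial (m : MonomialOrder σ) {f : MvPolynomial σ R} {s : σ →₀ ℕ}
    (hs : s ∈ f.support) : m.toSyn s ≤ m.toSyn (m.leadMonomial f) := by
  rw [MonomialOrder.leadMonomial, AddEquiv.apply_symm_apply]
  exact Finset.le_sup hs

variable {N : Type*} [LinearOrder N]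

theorem toLex_single_lt_single {i j : N} (hij : i < j) {a : ℕ} (ha : a ≠ 0) (b : ℕ) :
    toLex (Finsupp.single j b) < toLex (Finsupp.single i a) := by
  rw [Finsupp.Lex.lt_iff]
  refine ⟨i, fun d hd => ?_, ?_⟩
  · simp only [ofLex_toLex]
    rw [Finsupp.single_eq_of_ne' (hd.trans hij).ne', Finsupp.single_eq_of_ne' hd.ne']
  · simp only [ofLex_toLex]
    rw [Finsupp.single_eq_of_ne' hij.ne', Finsupp.single_eq_same]
    omega

theorem toLex_single_lt_single_same {j : N} {a b : ℕ} (h : a < b) :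
    toLex (Finsupp.single j a) < toLex (Finsupp.single j b) := by
  rw [Finsupp.Lex.lt_iff]
  refine ⟨j, fun d hd => ?_, ?_⟩
  · simp only [ofLex_toLex]
    rw [Finsupp.single_eq_of_ne' hd.ne', Finsupp.single_eq_of_ne' hd.ne']
  · simp [h]

theorem toLex_single_le_single_iff {j : N} {a b : ℕ} :
    toLex (Finsupp.single j a) ≤ toLex (Finsupp.single j b) ↔ a ≤ b := by
  constructor
  · intro h
    by_contra hab
    exact absurd (toLex_single_lt_single_same (by omega : b < a)) (not_lt.mpr h)
  · intro h
    rcases eq_or_lt_of_le h with rfl | h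
    · exact le_rfl
    · exact (toLex_single_lt_single_same h).le

end Lemmas1
section Lemmas2

variable {K : Type*} [Field K] {σ : Type*}

theorem aevalX_eq_sum [DecidableEq σ] (j : σ) (q : Polynomial K) :
    Polynomial.aeval (X j : MvPolynomial σ K) q =
      ∑ k ∈ q.support, monomial (Finsupp.single j k) (q.coeff k) := by
  rw [Polynomial.aeval_def, Polynomial.eval₂_eq_sum, Polynomial.sum_def]
  refine Finset.sum_congr rfl fun k _ => ?_
  rw [X_pow_eq_monomial, MvPolynomial.algebraMap_eq, C_mul_monomial, mul_one]

theorem coeff_aevalX_single [DecidableEq σ] (j : σ) (q : Polynomial K) (k : ℕ) :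
    (Polynomial.aeval (X j : MvPolynomial σ K) q).coeff (Finsupp.single j k) = q.coeff k := by
  rw [aevalX_eq_sum, MvPolynomial.coeff_sum]
  simp only [coeff_monomial]
  rw [Finset.sum_congr rfl (g := fun k' => if k' = k then q.coeff k' else 0)
    (fun k' _ => by
      congr 1
      simp [Finsupp.single_left_inj, eq_comm, Finsupp.single_injective j |>.eq_iff])]
  · by_cases hk : k ∈ q.support
    · rw [Finset.sum_ite_eq' q.support k (fun k' => q.coeff k')]
      simp [hk]
    · rw [Finset.sum_ite_eq' q.support k (fun k' => q.coeff k')]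
      simp only [hk, if_false]
      exact (Polynomial.notMem_support_iff.mp hk).symm

theorem support_aevalX [DecidableEq σ] (j : σ) (q : Polynomial K) :
    (Polynomial.aeval (X j : MvPolynomial σ K) q).support ⊆
      q.support.image (Finsupp.single j ·) := by
  rw [aevalX_eq_sum]
  refine (MvPolynomial.support_sum ..).trans ?_
  intro t ht
  simp only [Finset.mem_biUnion] at ht
  obtain ⟨k, hk, hkt⟩ := ht
  have := MvPolynomial.support_monomial_subset hkt
  simp only [Finset.mem_singleton] at this
  subst this
  exact Finset.mem_image_of_mem _ hk

theorem coeff_aevalX_eq_zero [DecidableEq σ] (j : σ) (q : Polynomial K) {t : σ →₀ ℕ}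
    (ht : ∀ k, t ≠ Finsupp.single j k) :
    (Polynomial.aeval (X j : MvPolynomial σ K) q).coeff t = 0 := by
  rw [← MvPolynomial.notMem_support_iff]
  intro hmem
  obtain ⟨k, _, hk⟩ := Finset.mem_image.mp (support_aevalX j q hmem)
  exact ht k hk.symm


variable {K : Type*} [Field K] {n : ℕ}

theorem supported_of_lex_le {s t : Fin (n + 1) →₀ ℕ} (h : toLex s ≤ toLex t)
    (ht : ∀ j, j ≠ Fin.last n → t j = 0) : ∀ j, j ≠ Fin.last n → s j = 0 := by
  by_contra hc
  push_neg at hc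
  obtain ⟨j0, hj0ne, hj0⟩ := hc
  classical
  set F := s.support.filter (fun j => j ≠ Fin.last n) with hF
  have hFne : F.Nonempty := ⟨j0, by simp [hF, Finsupp.mem_support_iff, hj0, hj0ne]⟩
  set j1 := F.min' hFne with hj1
  have hj1F : j1 ∈ F := Finset.min'_mem F hFne
  have hj1ne : j1 ≠ Fin.last n := (Finset.mem_filter.mp hj1F).2
  have hj1s : s j1 ≠ 0 := Finsupp.mem_support_iff.mp (Finset.mem_filter.mp hj1F).1
  have : toLex t < toLex s := by
    rw [Finsupp.Lex.lt_iff]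
    refine ⟨j1, fun d hd => ?_, ?_⟩
    · have hdne : d ≠ Fin.last n := by
        intro hdeq
        exact absurd (hdeq ▸ hd) (not_lt.mpr (Fin.le_last j1))
      have hsd : s d = 0 := by
        by_contra hsd
        have : d ∈ F := Finset.mem_filter.mpr ⟨Finsupp.mem_support_iff.mpr hsd, hdne⟩
        exact absurd hd (not_lt.mpr (Finset.min'_le F d this))
      simp only [ofLex_toLex, hsd, ht d hdne]
    · simp only [ofLex_toLex, ht j1 hj1ne]
      omega
  exact absurd h (not_le.mpr this)

theorem eq_single_last_of_supported {s : Fin (n + 1) →₀ ℕ}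
    (hs : ∀ j, j ≠ Fin.last n → s j = 0) : s = Finsupp.single (Fin.last n) (s (Fin.last n)) := by
  ext j
  by_cases hj : j = Fin.last n
  · subst hj; simp
  · rw [hs j hj, Finsupp.single_eq_of_ne' (Ne.symm hj)]

theorem aevalX_monomial [DecidableEq (Fin (n+1))] (j : Fin (n+1)) (k : ℕ) (c : K) :
    Polynomial.aeval (X j : MvPolynomial (Fin (n+1)) K) (Polynomial.monomial k c) =
      monomial (Finsupp.single j k) c := by
  rw [Polynomial.aeval_monomial, MvPolynomial.algebraMap_eq, X_pow_eq_monomial, C_mul_monomial,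
    mul_one]

theorem exists_poly_of_supported {f : MvPolynomial (Fin (n + 1)) K}
    (hf : ∀ s ∈ f.support, ∀ j, j ≠ Fin.last n → s j = 0) :
    ∃ q : Polynomial K, Polynomial.aeval (X (Fin.last n) : MvPolynomial (Fin (n+1)) K) q = f := by
  classical
  refine ⟨∑ s ∈ f.support, Polynomial.monomial (s (Fin.last n)) (f.coeff s), ?_⟩
  rw [map_sum]
  have : ∀ s ∈ f.support,
      Polynomial.aeval (X (Fin.last n) : MvPolynomial (Fin (n+1)) K)
        (Polynomial.monomial (s (Fin.last n)) (f.coeff s)) = monomial s (f.coeff s) := by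
    intro s hs
    rw [aevalX_monomial, ← eq_single_last_of_supported (hf s hs)]
  rw [Finset.sum_congr rfl this, MvPolynomial.support_sum_monomial_coeff]

end Lemmas2
section Lemmas4


theorem finrank_le_nat_card_algHom (K A L : Type*) [Field K] [PerfectField K] [CommRing A]
    [Algebra K A] [IsReduced A] [Module.Finite K A] [Field L] [Algebra K L] [IsAlgClosed L]
    [Finite (A →ₐ[K] L)] :
    Module.finrank K A ≤ Nat.card (A →ₐ[K] L) := by
  classical
  haveI : IsArtinianRing A := .of_finite K A
  set M := {m : Ideal A | m.IsMaximal} with hM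
  haveI : Finite M := (IsArtinianRing.setOfPred_isMaximal_finite A).to_subtype
  haveI : Fintype M := Fintype.ofFinite M
  haveI hmax : ∀ m : M, (m : Ideal A).IsMaximal := fun m => m.2
  haveI hfd : ∀ m : M, Module.Finite K (A ⧸ (m : Ideal A)) := fun m =>
    Module.Finite.of_surjective (Ideal.Quotient.mkₐ K (m : Ideal A)).toLinearMap
      Ideal.Quotient.mk_surjective
  -- step 1 : A embeds into the product of its residue fields
  set Φ : A →ₗ[K] ((m : M) → A ⧸ (m : Ideal A)) :=
    LinearMap.pi (fun m : M => (Ideal.Quotient.mkₐ K (m : Ideal A)).toLinearMap) with hΦ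
  have hΦinj : Function.Injective Φ := by
    rw [← LinearMap.ker_eq_bot, LinearMap.ker_eq_bot']
    intro x hx
    have hx' : ∀ m : M, x ∈ (m : Ideal A) := by
      intro m
      have := congrFun hx m
      simpa [hΦ, Ideal.Quotient.eq_zero_iff_mem] using this
    have : IsNilpotent x := by
      rw [nilpotent_iff_mem_prime]
      intro J hJ
      haveI := hJ
      exact hx' ⟨J, IsArtinianRing.isMaximal_of_isPrime J⟩
    exact this.eq_zero
  have h1 : finrank K A ≤ finrank K ((m : M) → A ⧸ (m : Ideal A)) :=
    LinearMap.finrank_le_finrank_of_injective hΦinj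
  have h2 : finrank K ((m : M) → A ⧸ (m : Ideal A)) = ∑ m : M, finrank K (A ⧸ (m : Ideal A)) :=
    Module.finrank_pi_fintype K
  -- step 2 : each residue field contributes exactly its rank many algebra maps
  have hfinm : ∀ m : M, Finite ((A ⧸ (m : Ideal A)) →ₐ[K] L) := by
    intro m
    letI : Field (A ⧸ (m : Ideal A)) := Ideal.Quotient.field (m : Ideal A)
    haveI : FiniteDimensional K (A ⧸ (m : Ideal A)) := hfd m
    exact Finite.of_fintype _
  have key : ∀ m : M, finrank K (A ⧸ (m : Ideal A)) =
      Nat.card ((A ⧸ (m : Ideal A)) →ₐ[K] L) := by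
    intro m
    letI : Field (A ⧸ (m : Ideal A)) := Ideal.Quotient.field (m : Ideal A)
    haveI : FiniteDimensional K (A ⧸ (m : Ideal A)) := hfd m
    haveI : Algebra.IsAlgebraic K (A ⧸ (m : Ideal A)) := Algebra.IsAlgebraic.of_finite K _
    rw [Nat.card_eq_fintype_card, AlgHom.card]
  -- step 3 : gluing, the sigma type injects into `A →ₐ[K] L`
  have h3 : ∑ m : M, Nat.card ((A ⧸ (m : Ideal A)) →ₐ[K] L) =
      Nat.card ((m : M) × ((A ⧸ (m : Ideal A)) →ₐ[K] L)) := by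
    haveI : ∀ m : M, Fintype ((A ⧸ (m : Ideal A)) →ₐ[K] L) := fun m => Fintype.ofFinite _
    rw [Nat.card_eq_fintype_card, Fintype.card_sigma]
    exact Finset.sum_congr rfl fun m _ => (Nat.card_eq_fintype_card)
  have h4 : Nat.card ((m : M) × ((A ⧸ (m : Ideal A)) →ₐ[K] L)) ≤ Nat.card (A →ₐ[K] L) := by
    have hker : ∀ (x : (m : M) × ((A ⧸ (m : Ideal A)) →ₐ[K] L)),
        RingHom.ker (x.2.comp (Ideal.Quotient.mkₐ K (x.1 : Ideal A))) = (x.1 : Ideal A) := by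
      rintro ⟨m, ψ⟩
      letI : Field (A ⧸ (m : Ideal A)) := Ideal.Quotient.field (m : Ideal A)
      ext x
      simp only [RingHom.mem_ker, AlgHom.comp_apply, Ideal.Quotient.mkₐ_eq_mk]
      rw [show (ψ (Ideal.Quotient.mk (m : Ideal A) x) = 0 ↔
          Ideal.Quotient.mk (m : Ideal A) x = 0) from
        ⟨fun h => ψ.toRingHom.injective (by simpa using h), fun h => by simp [h]⟩,
        Ideal.Quotient.eq_zero_iff_mem]
    refine Nat.card_le_card_of_injective
      (fun x => x.2.comp (Ideal.Quotient.mkₐ K (x.1 : Ideal A))) ?_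
    rintro ⟨m, ψ⟩ ⟨m', ψ'⟩ h
    have hm : m = m' := by
      have := (hker ⟨m, ψ⟩).symm.trans ((congrArg RingHom.ker (congrArg AlgHom.toRingHom h)).trans
        (hker ⟨m', ψ'⟩))
      exact Subtype.ext this
    subst hm
    have : ψ = ψ' := Ideal.Quotient.algHom_ext K h
    rw [this]
  calc finrank K A ≤ _ := h1
    _ = _ := h2
    _ = _ := Finset.sum_congr rfl fun m _ => key m
    _ = _ := h3
    _ ≤ _ := h4

end Lemmas4
end ShapeAux

set_option maxHeartbeats 1000000 in
set_option synthInstance.maxHeartbeats 400000 in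
/-- **Shape Lemma.** Let `K` be a perfect field with algebraic closure `L`
and `I ⊆ K[x_0,…,x_n]` a proper radical zero-dimensional ideal with
`D = dim_K K[x_0,…,x_n]/I`. Suppose the last coordinates of the points of `V(I) ⊆ L^{n+1}`
are pairwise distinct. Then the reduced Gröbner basis of `I` w.r.t. the lexicographic
order with `x_0 > x_1 > … > x_n` is
`{w(x_n), x_{n-1} + u_{n-1}(x_n), …, x_0 + u_0(x_n)}` with `w` monic, squarefree, of
degree `D` and `deg u_i < D`. -/
theorem shape_lemma
    {n : ℕ} {K L : Type*} [Field K] [PerfectField K] [Field L] [Algebra K L]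
    [IsAlgClosure K L]
    (I : Ideal (MvPolynomial (Fin (n + 1)) K)) (hI : I ≠ ⊤) (hrad : I.IsRadical)
    [FiniteDimensional K (MvPolynomial (Fin (n + 1)) K ⧸ I)]
    (hsep : Set.InjOn (fun a => a (Fin.last n))
      {a : Fin (n + 1) → L | ∀ f ∈ I, MvPolynomial.aeval a f = 0}) :
    ∃ (w : Polynomial K) (u : Fin n → Polynomial K),
      w.Monic ∧ Squarefree w ∧
      w.natDegree = Module.finrank K (MvPolynomial (Fin (n + 1)) K ⧸ I) ∧
      (∀ i, (u i).natDegree < Module.finrank K (MvPolynomial (Fin (n + 1)) K ⧸ I)) ∧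
      (MonomialOrder.lex).IsReducedGroebnerBasis I
        ({Polynomial.aeval (X (Fin.last n) : MvPolynomial (Fin (n + 1)) K) w} ∪
          Set.range (fun i : Fin n =>
            X i.castSucc +
              Polynomial.aeval (X (Fin.last n) : MvPolynomial (Fin (n + 1)) K) (u i))) := by
  classical
  haveI hred : IsReduced (MvPolynomial (Fin (n + 1)) K ⧸ I) :=
    (Ideal.isRadical_iff_quotient_reduced I).mp hrad
  haveI hnt : Nontrivial (MvPolynomial (Fin (n + 1)) K ⧸ I) := Ideal.Quotient.nontrivial_iff.mpr hI
  haveI : IsAlgClosed L := IsAlgClosure.isAlgClosed K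
  let π : MvPolynomial (Fin (n + 1)) K →ₐ[K] (MvPolynomial (Fin (n + 1)) K ⧸ I) :=
    Ideal.Quotient.mkₐ K I
  set a : MvPolynomial (Fin (n + 1)) K ⧸ I := π (X (Fin.last n)) with ha
  haveI : Algebra.IsIntegral K (MvPolynomial (Fin (n + 1)) K ⧸ I) :=
    Algebra.IsIntegral.of_finite K _
  have hint : IsIntegral K a := Algebra.IsIntegral.isIntegral a
  set w : Polynomial K := minpoly K a with hwdef
  have hwmonic : w.Monic := minpoly.monic hint
  have hw0 : w ≠ 0 := hwmonic.ne_zero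
  set D := Module.finrank K (MvPolynomial (Fin (n + 1)) K ⧸ I) with hDdef
  have hD1 : 0 < D := Module.finrank_pos
  have haw : Polynomial.aeval a w = 0 := minpoly.aeval K a
  -- the kernel of evaluation at `a` is generated by the minimal polynomial
  have hker : RingHom.ker (Polynomial.aeval a : Polynomial K →ₐ[K] _) = Ideal.span {w} := by
    ext q
    rw [RingHom.mem_ker, Ideal.mem_span_singleton]
    refine ⟨fun h => minpoly.dvd K a h, ?_⟩
    rintro ⟨c, rfl⟩
    rw [map_mul, haw, zero_mul]
  -- the subalgebra generated by `a` has rank `natDegree w`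
  have hBrank : Module.finrank K
      (Polynomial.aeval a : Polynomial K →ₐ[K] _).range = w.natDegree := by
    have e : (AdjoinRoot w) ≃ₐ[K] (Polynomial.aeval a : Polynomial K →ₐ[K] _).range :=
      (Ideal.quotientEquivAlgOfEq K hker.symm).trans
        (Ideal.quotientKerEquivRange (Polynomial.aeval a : Polynomial K →ₐ[K] _))
    rw [← e.toLinearEquiv.finrank_eq, (AdjoinRoot.powerBasis hw0).finrank]
    rfl
  -- algebra maps to `L` are points of the variety
  have hpt : ∀ φ : (MvPolynomial (Fin (n + 1)) K ⧸ I) →ₐ[K] L,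
      (fun j => φ (π (X j))) ∈ {p : Fin (n + 1) → L | ∀ f ∈ I, MvPolynomial.aeval p f = 0} := by
    intro φ f hf
    have hcomp : (MvPolynomial.aeval (fun j => φ (π (X j))) :
        MvPolynomial (Fin (n + 1)) K →ₐ[K] L) = φ.comp π := by
      apply MvPolynomial.algHom_ext
      intro j
      simp [π]
    have h2 := DFunLike.congr_fun hcomp f
    refine h2.trans ?_
    have : π f = 0 := by
      simpa [π, Ideal.Quotient.mkₐ_eq_mk] using (Ideal.Quotient.eq_zero_iff_mem).mpr hf
    rw [AlgHom.comp_apply, this, map_zero]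
  have hinj : Function.Injective (fun φ : (MvPolynomial (Fin (n + 1)) K ⧸ I) →ₐ[K] L => φ a) := by
    intro φ ψ h
    have h2 : (fun j => φ (π (X j))) = (fun j => ψ (π (X j))) :=
      hsep (hpt φ) (hpt ψ) (by simpa [ha] using h)
    have h3 : φ.comp π = ψ.comp π := by
      apply MvPolynomial.algHom_ext
      intro j
      simpa using congrFun h2 j
    exact Ideal.Quotient.algHom_ext K h3
  have hroot : ∀ φ : (MvPolynomial (Fin (n + 1)) K ⧸ I) →ₐ[K] L,
      φ a ∈ (w.aroots L).toFinset := by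
    intro φ
    rw [Multiset.mem_toFinset, Polynomial.mem_aroots]
    exact ⟨hw0, by rw [Polynomial.aeval_algHom_apply, haw, map_zero]⟩
  haveI hfin : Finite ((MvPolynomial (Fin (n + 1)) K ⧸ I) →ₐ[K] L) := by
    refine Finite.of_injective
      (fun φ => (⟨φ a, hroot φ⟩ : {y : L // y ∈ (w.aroots L).toFinset})) ?_
    intro φ ψ h
    exact hinj (by simpa using congrArg Subtype.val h)
  have hcard1 : D ≤ Nat.card ((MvPolynomial (Fin (n + 1)) K ⧸ I) →ₐ[K] L) :=
    ShapeAux.finrank_le_nat_card_algHom K _ L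
  have hcard2 : Nat.card ((MvPolynomial (Fin (n + 1)) K ⧸ I) →ₐ[K] L) ≤ w.natDegree := by
    have h1 : Nat.card ((MvPolynomial (Fin (n + 1)) K ⧸ I) →ₐ[K] L) ≤
        Nat.card {y : L // y ∈ (w.aroots L).toFinset} := by
      refine Nat.card_le_card_of_injective
        (fun φ => (⟨φ a, hroot φ⟩ : {y : L // y ∈ (w.aroots L).toFinset})) ?_
      intro φ ψ h
      exact hinj (by simpa using congrArg Subtype.val h)
    calc Nat.card ((MvPolynomial (Fin (n + 1)) K ⧸ I) →ₐ[K] L)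
        ≤ (w.aroots L).toFinset.card := by
          rwa [Nat.card_eq_finsetCard] at h1
      _ ≤ Multiset.card (w.aroots L) := Multiset.toFinset_card_le _
      _ ≤ (w.map (algebraMap K L)).natDegree := by
          rw [Polynomial.aroots_def]
          exact Polynomial.card_roots' _
      _ = w.natDegree := Polynomial.natDegree_map_eq_of_injective (algebraMap K L).injective _
  have hDw : w.natDegree = D := by
    refine le_antisymm ?_ (hcard1.trans hcard2)
    rw [← hBrank]
    exact Submodule.finrank_le
      (Subalgebra.toSubmodule (Polynomial.aeval a : Polynomial K →ₐ[K] _).range)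
  have hBtop : (Polynomial.aeval a : Polynomial K →ₐ[K] _).range = ⊤ := by
    rw [← Algebra.toSubmodule_eq_top]
    exact Submodule.eq_top_of_finrank_eq (by rw [← hDdef, ← hDw, ← hBrank]; rfl)
  have hmem : ∀ i : Fin n, ∃ q : Polynomial K, Polynomial.aeval a q = π (X i.castSucc) := by
    intro i
    have : π (X i.castSucc) ∈ (Polynomial.aeval a : Polynomial K →ₐ[K] _).range := by
      rw [hBtop]; trivial
    exact this
  choose p hp using hmem
  -- squarefreeness
  have hsqf : Squarefree w := by
    intro x hx
    obtain ⟨c, hc⟩ := hx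
    have hx0 : x ≠ 0 := by
      rintro rfl
      exact hw0 (by simpa using hc)
    have hxc : x * c ≠ 0 := by
      intro h0
      exact hw0 (by rw [hc, mul_assoc, h0, mul_zero])
    have h1 : Polynomial.aeval a (x * c) = 0 := by
      have hsq : (x * c) ^ 2 = w * c := by rw [hc]; ring
      have h2 : (Polynomial.aeval a (x * c)) ^ 2 = 0 := by
        rw [← map_pow, hsq, map_mul, haw, zero_mul]
      exact IsNilpotent.eq_zero ⟨2, h2⟩
    obtain ⟨d, hd⟩ := minpoly.dvd K a h1
    have hd' : x * c = w * d := by rw [hwdef]; exact hd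
    have h3 : (x * c) * 1 = (x * c) * (x * d) := by
      rw [mul_one]
      conv_lhs => rw [hd', hc]
      ring
    exact IsUnit.of_mul_eq_one d (mul_left_cancel₀ hxc h3).symm
  -- remaining degree facts
  have hwne1 : w ≠ 1 := by
    intro h
    rw [h, Polynomial.natDegree_one] at hDw
    omega
  have hudeg : ∀ i : Fin n, (-(p i %ₘ w)).natDegree < D := by
    intro i
    rw [Polynomial.natDegree_neg, ← hDw]
    exact Polynomial.natDegree_modByMonic_lt _ hwmonic hwne1
  refine ⟨w, fun i => -(p i %ₘ w), hwmonic, hsqf, hDw, hudeg, ?_⟩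
  beta_reduce
  set u : Fin n → Polynomial K := fun i => -(p i %ₘ w) with hudef
  set W : MvPolynomial (Fin (n + 1)) K :=
    Polynomial.aeval (X (Fin.last n) : MvPolynomial (Fin (n + 1)) K) w with hWdef
  set g : Fin n → MvPolynomial (Fin (n + 1)) K := fun i =>
    X i.castSucc + Polynomial.aeval (X (Fin.last n) : MvPolynomial (Fin (n + 1)) K)
      (u i) with hgdef
  set Gm : Set ((Fin (n + 1)) →₀ ℕ) :=
    {Finsupp.single (Fin.last n) D} ∪
      Set.range (fun i : Fin n => Finsupp.single (Fin.castSucc i) 1) with hGmdef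
  have hlastne : ∀ i : Fin n, (Fin.castSucc i) ≠ Fin.last n := fun i => (Fin.castSucc_lt_last i).ne
  have hsne : ∀ (i : Fin n) (k : ℕ),
      Finsupp.single (Fin.castSucc i) 1 ≠ Finsupp.single (Fin.last n) k := by
    intro i k h
    have h2 := DFunLike.congr_fun h (Fin.castSucc i)
    rw [Finsupp.single_eq_same, Finsupp.single_eq_of_ne' (Ne.symm (hlastne i))] at h2
    exact one_ne_zero h2
  -- facts about `W`
  have hWsupp : W.support ⊆ w.support.image (fun k => Finsupp.single (Fin.last n) k) := by
    rw [hWdef]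
    exact ShapeAux.support_aevalX _ w
  have hWD : W.coeff (Finsupp.single (Fin.last n) D) = 1 := by
    rw [hWdef, ShapeAux.coeff_aevalX_single, ← hDw]
    exact hwmonic.coeff_natDegree
  have hWne : W ≠ 0 := fun h => one_ne_zero (by rw [← hWD, h, MvPolynomial.coeff_zero])
  have hWlm : MonomialOrder.lex.leadMonomial W = Finsupp.single (Fin.last n) D := by
    apply ShapeAux.leadMonomial_eq
    · rw [MvPolynomial.mem_support_iff, hWD]
      exact one_ne_zero
    · intro s hs
      obtain ⟨k, hk, rfl⟩ := Finset.mem_image.mp (hWsupp hs)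
      exact (MonomialOrder.lex_le_iff).mpr (ShapeAux.toLex_single_le_single_iff.mpr
        (hDw ▸ Polynomial.le_natDegree_of_ne_zero (Polynomial.mem_support_iff.mp hk)))
  have hWlc : MonomialOrder.lex.leadCoeff W = 1 := by
    rw [MonomialOrder.leadCoeff, hWlm]
    exact hWD
  have hWlt : MonomialOrder.lex.leadTerm W = monomial (Finsupp.single (Fin.last n) D) 1 := by
    rw [MonomialOrder.leadTerm, hWlm, hWlc]
  -- facts about `g i`
  have hgsupp : ∀ i, (g i).support ⊆ insert (Finsupp.single (Fin.castSucc i) 1)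
      ((u i).support.image (fun k => Finsupp.single (Fin.last n) k)) := by
    intro i
    rw [hgdef]
    refine (MvPolynomial.support_add).trans ?_
    rw [MvPolynomial.support_X]
    intro t ht
    rcases Finset.mem_union.mp ht with h | h
    · exact Finset.mem_insert.mpr (Or.inl (Finset.mem_singleton.mp h))
    · exact Finset.mem_insert.mpr (Or.inr (ShapeAux.support_aevalX _ _ h))
  have hgcoeff : ∀ i, (g i).coeff (Finsupp.single (Fin.castSucc i) 1) = 1 := by
    intro i
    rw [hgdef]
    rw [MvPolynomial.coeff_add, MvPolynomial.coeff_X,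
      ShapeAux.coeff_aevalX_eq_zero _ _ (fun k => hsne i k), add_zero]
    exact if_pos rfl
  have hgne : ∀ i, g i ≠ 0 := fun i h =>
    one_ne_zero (by rw [← hgcoeff i, h, MvPolynomial.coeff_zero])
  have hglm : ∀ i, MonomialOrder.lex.leadMonomial (g i) = Finsupp.single (Fin.castSucc i) 1 := by
    intro i
    apply ShapeAux.leadMonomial_eq
    · rw [MvPolynomial.mem_support_iff, hgcoeff i]
      exact one_ne_zero
    · intro s hs
      rcases Finset.mem_insert.mp (hgsupp i hs) with rfl | h
      · exact le_rfl
      · obtain ⟨k, hk, rfl⟩ := Finset.mem_image.mp h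
        exact (MonomialOrder.lex_le_iff).mpr
          (ShapeAux.toLex_single_lt_single (Fin.castSucc_lt_last i) one_ne_zero k).le
  have hglc : ∀ i, MonomialOrder.lex.leadCoeff (g i) = 1 := by
    intro i
    rw [MonomialOrder.leadCoeff, hglm i]
    exact hgcoeff i
  have hglt : ∀ i, MonomialOrder.lex.leadTerm (g i) =
      monomial (Finsupp.single (Fin.castSucc i) 1) 1 := by
    intro i
    rw [MonomialOrder.leadTerm, hglm i, hglc i]
  -- membership in the ideal
  have hWI : W ∈ I := by
    have h1 : π W = Polynomial.aeval a w := by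
      rw [hWdef, ha]
      exact (Polynomial.aeval_algHom_apply π (X (Fin.last n)) w).symm
    rw [haw] at h1
    have := Ideal.Quotient.eq_zero_iff_mem.mp (by simpa [π, Ideal.Quotient.mkₐ_eq_mk] using h1)
    exact this
  have hgI : ∀ i, g i ∈ I := by
    intro i
    have h1 : π (Polynomial.aeval (X (Fin.last n) : MvPolynomial (Fin (n + 1)) K) (u i)) =
        Polynomial.aeval a (u i) := by
      rw [ha]
      exact (Polynomial.aeval_algHom_apply π (X (Fin.last n)) (u i)).symm
    have h2 : Polynomial.aeval a (p i %ₘ w) = Polynomial.aeval a (p i) := by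
      conv_rhs => rw [← Polynomial.modByMonic_add_div (p i) w]
      rw [map_add, map_mul, haw, zero_mul, add_zero]
    have h3 : π (g i) = 0 := by
      rw [hgdef]
      rw [map_add, h1, hudef]
      simp only [map_neg]
      rw [h2, hp i]
      ring
    have := Ideal.Quotient.eq_zero_iff_mem.mp (by simpa [π, Ideal.Quotient.mkₐ_eq_mk] using h3)
    exact this
  have hGsub : ({W} ∪ Set.range g : Set (MvPolynomial (Fin (n + 1)) K)) ⊆ (I : Set _) := by
    rintro f (hf | ⟨i, rfl⟩)
    · rw [Set.mem_singleton_iff] at hf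
      subst hf
      exact hWI
    · exact hgI i
  have hGfin : ({W} ∪ Set.range g : Set (MvPolynomial (Fin (n + 1)) K)).Finite :=
    (Set.finite_singleton W).union (Set.finite_range g)
  -- the set of lead terms
  have hset : {f | f ∈ ({W} ∪ Set.range g : Set (MvPolynomial (Fin (n + 1)) K)) ∧ f ≠ 0} =
      ({W} ∪ Set.range g : Set (MvPolynomial (Fin (n + 1)) K)) := by
    ext f
    simp only [Set.mem_setOf_eq, and_iff_left_iff_imp]
    rintro (hf | ⟨i, rfl⟩)
    · rw [Set.mem_singleton_iff] at hf
      subst hf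
      exact hWne
    · exact hgne i
  have himage : MonomialOrder.lex.leadTerm ''
      ({W} ∪ Set.range g : Set (MvPolynomial (Fin (n + 1)) K)) =
      (fun s => monomial s (1 : K)) '' Gm := by
    rw [Set.image_union, Set.image_singleton, hWlt, hGmdef, Set.image_union, Set.image_singleton]
    congr 1
    rw [← Set.range_comp, ← Set.range_comp]
    exact congrArg Set.range (funext fun i => hglt i)
  -- the two inclusions between lead ideals
  have hspan1 : Ideal.span ((fun s => monomial s (1 : K)) '' Gm) ≤
      MonomialOrder.lex.leadIdeal (I : Set (MvPolynomial (Fin (n + 1)) K)) := by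
    rw [Ideal.span_le]
    rintro _ ⟨s, hs, rfl⟩
    rcases hs with hs | ⟨i, rfl⟩
    · rw [Set.mem_singleton_iff] at hs
      subst hs
      exact Ideal.subset_span ⟨W, ⟨hWI, hWne⟩, hWlt⟩
    · exact Ideal.subset_span ⟨g i, ⟨hgI i, hgne i⟩, hglt i⟩
  have hspan2 : MonomialOrder.lex.leadIdeal (I : Set (MvPolynomial (Fin (n + 1)) K)) ≤
      Ideal.span ((fun s => monomial s (1 : K)) '' Gm) := by
    rw [MonomialOrder.leadIdeal, Ideal.span_le]
    rintro _ ⟨f, ⟨hfI, hfne⟩, rfl⟩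
    rw [SetLike.mem_coe, MvPolynomial.mem_ideal_span_monomial_image]
    intro t ht
    have hlm := ShapeAux.leadMonomial_mem MonomialOrder.lex hfne
    have hlc : MonomialOrder.lex.leadCoeff f ≠ 0 := MvPolynomial.mem_support_iff.mp hlm
    rw [MonomialOrder.leadTerm, MvPolynomial.support_monomial, if_neg hlc,
      Finset.mem_singleton] at ht
    subst ht
    by_cases hcase : ∃ i : Fin n, (MonomialOrder.lex.leadMonomial f) (Fin.castSucc i) ≠ 0
    · obtain ⟨i, hi⟩ := hcase
      exact ⟨Finsupp.single (Fin.castSucc i) 1, Or.inr ⟨i, rfl⟩,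
        Finsupp.single_le_iff.mpr (by omega)⟩
    · push_neg at hcase
      have hsupp0 : ∀ j, j ≠ Fin.last n → (MonomialOrder.lex.leadMonomial f) j = 0 := by
        intro j hj
        obtain ⟨i, rfl⟩ := Fin.exists_castSucc_eq.mpr hj
        exact hcase i
      have hsuppall : ∀ s ∈ f.support, ∀ j, j ≠ Fin.last n → s j = 0 := fun s hs =>
        ShapeAux.supported_of_lex_le
          ((MonomialOrder.lex_le_iff).mp (ShapeAux.toSyn_le_leadMonomial MonomialOrder.lex hs))
          hsupp0
      obtain ⟨q, hq⟩ := ShapeAux.exists_poly_of_supported hsuppall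
      have hq0 : q ≠ 0 := by
        rintro rfl
        rw [map_zero] at hq
        exact hfne hq.symm
      have hqa : Polynomial.aeval a q = 0 := by
        rw [ha, Polynomial.aeval_algHom_apply, hq]
        simpa [π, Ideal.Quotient.mkₐ_eq_mk] using
          Ideal.Quotient.eq_zero_iff_mem.mpr (SetLike.mem_coe.mp hfI)
      have hdvd : w ∣ q := by
        rw [hwdef]
        exact minpoly.dvd K a hqa
      have hdeg : w.natDegree ≤ q.natDegree := Polynomial.natDegree_le_of_dvd hdvd hq0
      have hqcoeff : f.coeff (Finsupp.single (Fin.last n) q.natDegree) ≠ 0 := by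
        rw [← hq, ShapeAux.coeff_aevalX_single]
        exact Polynomial.leadingCoeff_ne_zero.mpr hq0
      have hmemsup : Finsupp.single (Fin.last n) q.natDegree ∈ f.support :=
        MvPolynomial.mem_support_iff.mpr hqcoeff
      have hle := ShapeAux.toSyn_le_leadMonomial MonomialOrder.lex hmemsup
      have hlmeq : MonomialOrder.lex.leadMonomial f =
          Finsupp.single (Fin.last n) ((MonomialOrder.lex.leadMonomial f) (Fin.last n)) :=
        ShapeAux.eq_single_last_of_supported hsupp0
      rw [hlmeq] at hle
      have hfin2 : q.natDegree ≤ (MonomialOrder.lex.leadMonomial f) (Fin.last n) :=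
        ShapeAux.toLex_single_le_single_iff.mp ((MonomialOrder.lex_le_iff).mp hle)
      refine ⟨Finsupp.single (Fin.last n) D, Or.inl rfl, ?_⟩
      rw [hlmeq]
      refine Finsupp.single_le_iff.mpr ?_
      rw [Finsupp.single_eq_same, ← hDw]
      omega
  -- assembling
  refine ⟨⟨hGfin, hGsub, ?_⟩, ?_, ?_⟩
  · rw [MonomialOrder.leadIdeal, hset, himage]
    exact le_antisymm hspan1 hspan2
  · rintro f (hf | ⟨i, rfl⟩)
    · rw [Set.mem_singleton_iff] at hf
      subst hf
      exact hWlc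
    · exact hglc i
  · intro f hfG t ht hmem2
    rcases hfG with hf | ⟨i, rfl⟩
    · rw [Set.mem_singleton_iff] at hf
      subst hf
      have hbound : MonomialOrder.lex.leadIdeal
          (({W} ∪ Set.range g : Set (MvPolynomial (Fin (n + 1)) K)) \ {W}) ≤
          Ideal.span ((fun s => monomial s (1 : K)) ''
            (Set.range (fun j : Fin n => Finsupp.single (Fin.castSucc j) 1))) := by
        rw [MonomialOrder.leadIdeal, Ideal.span_le]
        rintro _ ⟨f', ⟨hf'mem, hf'ne⟩, rfl⟩
        have hex : ∃ j : Fin n, f' = g j := by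
          rcases hf'mem.1 with h | ⟨j, rfl⟩
          · exact absurd h hf'mem.2
          · exact ⟨j, rfl⟩
        obtain ⟨j, rfl⟩ := hex
        exact Ideal.subset_span ⟨_, ⟨j, rfl⟩, (hglt j).symm⟩
      have h2 := hbound hmem2
      rw [MvPolynomial.mem_ideal_span_monomial_image] at h2
      obtain ⟨s, ⟨j, rfl⟩, hle⟩ := h2 t (by
        rw [MvPolynomial.support_monomial, if_neg (one_ne_zero : (1 : K) ≠ 0)]
        exact Finset.mem_singleton_self t)
      obtain ⟨k, hk, rfl⟩ := Finset.mem_image.mp (hWsupp ht)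
      have h3 := Finsupp.le_def.mp hle (Fin.castSucc j)
      rw [Finsupp.single_eq_same, Finsupp.single_eq_of_ne' (Ne.symm (hlastne j))] at h3
      omega
    · have hbound : MonomialOrder.lex.leadIdeal
          (({W} ∪ Set.range g : Set (MvPolynomial (Fin (n + 1)) K)) \ {g i}) ≤
          Ideal.span ((fun s => monomial s (1 : K)) ''
            ({Finsupp.single (Fin.last n) D} ∪
              (fun j : Fin n => Finsupp.single (Fin.castSucc j) 1) '' {j | j ≠ i})) := by
        rw [MonomialOrder.leadIdeal, Ideal.span_le]
        rintro _ ⟨f', ⟨hf'mem, hf'ne⟩, rfl⟩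
        rcases hf'mem.1 with h | ⟨j, rfl⟩
        · rw [Set.mem_singleton_iff] at h
          subst h
          exact Ideal.subset_span ⟨_, Or.inl rfl, hWlt.symm⟩
        · have hji : j ≠ i := by
            intro h
            subst h
            exact hf'mem.2 rfl
          exact Ideal.subset_span ⟨_, Or.inr ⟨j, hji, rfl⟩, (hglt j).symm⟩
      have h2 := hbound hmem2
      rw [MvPolynomial.mem_ideal_span_monomial_image] at h2
      obtain ⟨s, hsT, hle⟩ := h2 t (by
        rw [MvPolynomial.support_monomial, if_neg (one_ne_zero : (1 : K) ≠ 0)]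
        exact Finset.mem_singleton_self t)
      rcases Finset.mem_insert.mp (hgsupp i ht) with rfl | himg
      · rcases hsT with hs | ⟨j, hji, rfl⟩
        · rw [Set.mem_singleton_iff] at hs
          subst hs
          have h3 := Finsupp.le_def.mp hle (Fin.last n)
          rw [Finsupp.single_eq_same, Finsupp.single_eq_of_ne' (hlastne i)] at h3
          omega
        · have h3 := Finsupp.le_def.mp hle (Fin.castSucc j)
          rw [Finsupp.single_eq_same,
            Finsupp.single_eq_of_ne' (fun h => hji (Fin.castSucc_injective n h).symm)] at h3
          omega
      · obtain ⟨k, hk, rfl⟩ := Finset.mem_image.mp himg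
        have hkD : k < D := lt_of_le_of_lt
          (Polynomial.le_natDegree_of_ne_zero (Polynomial.mem_support_iff.mp hk)) (by
            rw [hudef] at *
            exact hudeg i)
        rcases hsT with hs | ⟨j, hji, rfl⟩
        · rw [Set.mem_singleton_iff] at hs
          subst hs
          have h3 := Finsupp.le_def.mp hle (Fin.last n)
          rw [Finsupp.single_eq_same, Finsupp.single_eq_same] at h3
          omega
        · have h3 := Finsupp.le_def.mp hle (Fin.castSucc j)
          rw [Finsupp.single_eq_same, Finsupp.single_eq_of_ne' (Ne.symm (hlastne j))] at h3
          omega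
end

section
/- Descartes' rule of signs: let f ∈ ℝ[x] be a nonzero polynomial, let σ(f) be the number of sign variations in the sequence of its nonzero coefficients, and let r be the number of roots of f in (0, ∞) counted with multiplicity. Then σ(f) − r is a nonnegative even integer. -/
open Polynomial

/-- The number of sign variations in the sequence of the nonzero coefficients of a real
polynomial, taken in order of increasing degree: the number of indices at which two
consecutive nonzero coefficients have opposite signs. -/
noncomputable def signVariations (f : Polynomial ℝ) : ℕ :=
  let l : List ℝ := (f.support.sort (· ≤ ·)).map f.coeff
  (l.zip l.tail).countP fun p => decide (p.1 * p.2 < 0)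

namespace DescartesAux

noncomputable def ind (x y : ℝ) : ℕ := if x * y < 0 then 1 else 0

noncomputable def alt : List ℝ → ℕ
  | [] => 0
  | [_] => 0
  | x :: y :: r => ind x y + alt (y :: r)

lemma alt_cons_cons (x y : ℝ) (r : List ℝ) : alt (x :: y :: r) = ind x y + alt (y :: r) := rfl

lemma alt_eq_countP : ∀ l : List ℝ,
    alt l = (l.zip l.tail).countP fun p => decide (p.1 * p.2 < 0)
  | [] => rfl
  | [_] => rfl
  | x :: y :: r => by
      rw [alt_cons_cons, alt_eq_countP (y :: r)]
      show _ = List.countP _ ((x, y) :: (y :: r).zip r)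
      rw [List.countP_cons]
      simp only [ind, decide_eq_true_eq, List.tail_cons]
      split <;> omega

lemma ind_sign_trans {x y z : ℝ} (hy : y ≠ 0) : ind x z ≤ ind x y + ind y z := by
  unfold ind
  by_cases h1 : x * z < 0
  · by_cases h2 : x * y < 0
    · rw [if_pos h1, if_pos h2]; omega
    · by_cases h3 : y * z < 0
      · rw [if_pos h1, if_neg h2, if_pos h3]
      · exfalso
        nlinarith [mul_nonneg (not_lt.mp h2) (not_lt.mp h3),
          mul_pos (neg_pos.mpr h1) (mul_self_pos.mpr hy)]
  · rw [if_neg h1]; exact Nat.zero_le _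

lemma alt_le_cons (x : ℝ) (l : List ℝ) : alt l ≤ alt (x :: l) := by
  cases l with
  | nil => exact le_rfl
  | cons y r => rw [alt_cons_cons]; omega

lemma alt_cons_le {y z : ℝ} (hz : z ≠ 0) (l : List ℝ) :
    alt (y :: l) ≤ ind y z + alt (z :: l) := by
  cases l with
  | nil => exact Nat.zero_le _
  | cons h r =>
    rw [alt_cons_cons, alt_cons_cons]
    have := ind_sign_trans (x := y) (z := h) hz
    omega

lemma alt_sublist_cons {t l : List ℝ} (h : t.Sublist l) :
    (∀ x ∈ l, x ≠ 0) → ∀ y : ℝ, alt (y :: t) ≤ alt (y :: l) := by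
  induction h with
  | slnil => intro _ _; exact le_rfl
  | @cons l₁ l₂ a h ih =>
    intro hl y
    refine (ih (fun x hx => hl x (List.mem_cons_of_mem _ hx)) y).trans ?_
    refine (alt_cons_le (hl a (List.mem_cons_self)) l₂).trans_eq ?_
    rw [alt_cons_cons]
  | @cons_cons l₁ l₂ a h ih =>
    intro hl y
    rw [alt_cons_cons, alt_cons_cons]
    have := ih (fun x hx => hl x (List.mem_cons_of_mem _ hx)) a
    omega

lemma alt_sublist {t l : List ℝ} (h : t.Sublist l) (hl : ∀ x ∈ l, x ≠ 0) :
    alt t ≤ alt l := by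
  induction h with
  | slnil => exact le_rfl
  | @cons l₁ l₂ a h ih =>
    exact (ih (fun x hx => hl x (List.mem_cons_of_mem _ hx))).trans (alt_le_cons _ _)
  | @cons_cons l₁ l₂ a h ih =>
    exact alt_sublist_cons h (fun x hx => hl x (List.mem_cons_of_mem _ hx)) a

lemma alt_even_iff_cons : ∀ (l : List ℝ) (x : ℝ), (∀ e ∈ x :: l, e ≠ 0) →
    (Even (alt (x :: l)) ↔ 0 < x * (x :: l).getLast (List.cons_ne_nil x l)) := by
  intro l
  induction l with
  | nil =>
    intro x hx
    simp only [alt, List.getLast_singleton]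
    simpa using mul_self_pos.mpr (hx x (List.mem_cons_self))
  | cons y r ih =>
    intro x hx
    have hxne : x ≠ 0 := hx x (List.mem_cons_self)
    have hyne : y ≠ 0 := hx y (List.mem_cons_of_mem _ (List.mem_cons_self))
    rw [alt_cons_cons, List.getLast_cons (List.cons_ne_nil y r)]
    have hih := ih y (fun e he => hx e (List.mem_cons_of_mem _ he))
    set L := (y :: r).getLast (List.cons_ne_nil y r) with hL
    have hLne : L ≠ 0 := hx L (List.mem_cons_of_mem _ (List.getLast_mem _))
    rcases (mul_ne_zero hxne hyne).lt_or_gt with hxy | hxy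
    · have h1 : ind x y = 1 := if_pos hxy
      rw [h1, add_comm, Nat.even_add_one, hih, not_lt]
      constructor
      · intro h
        have hyL : y * L < 0 := lt_of_le_of_ne h (mul_ne_zero hyne hLne)
        nlinarith [mul_self_pos.mpr hyne]
      · intro h
        nlinarith [mul_self_pos.mpr hxne]
    · have : ind x y = 0 := if_neg (not_lt.mpr hxy.le)
      rw [this, zero_add, hih]
      constructor
      · intro h; nlinarith [mul_self_pos.mpr hyne]
      · intro h; nlinarith [mul_self_pos.mpr hyne]

lemma alt_of_chain : ∀ (l : List ℝ) (x : ℝ),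
    (x :: l).IsChain (fun a b => a * b < 0) → alt (x :: l) = l.length := by
  intro l
  induction l with
  | nil => intro x _; rfl
  | cons y r ih =>
    intro x hc
    rw [List.isChain_cons_cons] at hc
    rw [alt_cons_cons, ih y hc.2, ind, if_pos hc.1]
    simp only [List.length_cons]
    omega

lemma chain_ne_zero : ∀ (l : List ℝ) (x y : ℝ),
    (x :: y :: l).IsChain (fun a b => a * b < 0) → ∀ e ∈ x :: y :: l, e ≠ 0 := by
  intro l
  induction l with
  | nil =>
    intro x y hc e he he0
    rw [List.isChain_cons_cons] at hc
    have h1 := hc.1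
    rcases List.mem_cons.mp he with rfl | he
    · rw [he0, zero_mul] at h1; exact absurd h1 (lt_irrefl 0)
    · rcases List.mem_cons.mp he with rfl | he
      · rw [he0, mul_zero] at h1; exact absurd h1 (lt_irrefl 0)
      · simp at he
  | cons z r ih =>
    intro x y hc e he
    rw [List.isChain_cons_cons] at hc
    rcases List.mem_cons.mp he with rfl | he
    · intro he0; rw [he0, zero_mul] at hc; exact absurd hc.1 (lt_irrefl 0)
    · exact ih y z hc.2 e he


lemma sublist_of_sorted : ∀ (l t : List ℕ), l.Pairwise (· < ·) → t.Pairwise (· < ·) →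
    (∀ x ∈ t, x ∈ l) → t.Sublist l := by
  intro l
  induction l with
  | nil =>
    intro t _ _ hsub
    have : t = [] := List.eq_nil_iff_forall_not_mem.mpr fun a ha => by simpa using hsub a ha
    simp [this]
  | cons x l' ih =>
    intro t hs ht hsub
    cases t with
    | nil => simp
    | cons a t' =>
      rw [List.pairwise_cons] at hs ht
      by_cases hax : a = x
      · subst hax
        refine List.Sublist.cons₂ a (ih t' hs.2 ht.2 ?_)
        intro e he
        rcases List.mem_cons.mp (hsub e (List.mem_cons_of_mem _ he)) with rfl | h
        · exact absurd (ht.1 e he) (lt_irrefl e)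
        · exact h
      · have hal : a ∈ l' := by
          rcases List.mem_cons.mp (hsub a (List.mem_cons_self)) with h | h
          · exact absurd h hax
          · exact h
        refine List.Sublist.cons x (ih (a :: t') hs.2 (List.pairwise_cons.mpr ht) ?_)
        intro e he
        rcases List.mem_cons.mp (hsub e he) with rfl | h
        · exfalso
          have hxa : e < a := hs.1 a hal
          rcases List.mem_cons.mp he with rfl | h'
          · exact absurd hxa (lt_irrefl _)
          · exact absurd (lt_trans hxa (ht.1 e h')) (lt_irrefl e)
        · exact h
  -- done

/-- adjacent entries of a strictly sorted list have no list member strictly between -/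
lemma chain_gap {l : List ℕ} (hs : l.Pairwise (· < ·)) :
    l.IsChain (fun p q => ∀ e, p < e → e < q → e ∉ l) := by
  rw [List.isChain_iff_getElem]
  intro i hi e hpe heq hmem
  obtain ⟨k, hek⟩ := List.mem_iff_get.mp hmem
  have hmono := hs.sortedLT.strictMono_get
  subst hek
  have h1 : i < (k : ℕ) := by
    by_contra h
    have : l.get k ≤ l.get ⟨i, by omega⟩ := by
      rcases eq_or_lt_of_le (not_lt.mp h) with h' | h'
      · exact le_of_eq (congrArg l.get (Fin.ext h'))
      · exact le_of_lt (hmono (by exact h'))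
    simp only [List.get_eq_getElem] at this hpe
    omega
  have h2 : l.get ⟨i + 1, by omega⟩ ≤ l.get k := by
    rcases eq_or_lt_of_le (Nat.succ_le_of_lt h1) with h' | h'
    · exact le_of_eq (congrArg l.get (Fin.ext h'))
    · exact le_of_lt (hmono h')
  simp only [List.get_eq_getElem] at h2 heq
  omega

lemma sort_ne_nil {f : ℝ[X]} (hf : f ≠ 0) : f.support.sort (· ≤ ·) ≠ [] := by
  have h1 : (f.support.sort (· ≤ ·)).length = f.support.card := Finset.length_sort _
  have hc : 0 < f.support.card := Finset.card_pos.mpr (support_nonempty.mpr hf)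
  intro h
  rw [h] at h1
  simp at h1
  omega

lemma lcoe_nonzero (f : ℝ[X]) : ∀ x ∈ (f.support.sort (· ≤ ·)).map f.coeff, x ≠ 0 := by
  intro x hx
  obtain ⟨d, hd, rfl⟩ := List.mem_map.mp hx
  exact mem_support_iff.mp ((Finset.mem_sort _).mp hd)

lemma lcoe_ne_nil {f : ℝ[X]} (hf : f ≠ 0) : (f.support.sort (· ≤ ·)).map f.coeff ≠ [] := by
  simpa using sort_ne_nil hf

lemma sort_head {f : ℝ[X]} (hf : f ≠ 0) :
    (f.support.sort (· ≤ ·)).head (sort_ne_nil hf) = f.natTrailingDegree := by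
  rw [List.head_eq_getElem, Finset.sorted_zero_eq_min', natTrailingDegree_eq_support_min' hf]

lemma sort_getLast {f : ℝ[X]} (hf : f ≠ 0) :
    (f.support.sort (· ≤ ·)).getLast (sort_ne_nil hf) = f.natDegree := by
  rw [List.getLast_eq_getElem, Finset.sorted_last_eq_max', natDegree_eq_support_max' hf]

lemma lcoe_head {f : ℝ[X]} (hf : f ≠ 0) :
    ((f.support.sort (· ≤ ·)).map f.coeff).head (lcoe_ne_nil hf) = f.trailingCoeff := by
  rw [List.head_map, sort_head hf]
  rfl

lemma lcoe_getLast {f : ℝ[X]} (hf : f ≠ 0) :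
    ((f.support.sort (· ≤ ·)).map f.coeff).getLast (lcoe_ne_nil hf) = f.leadingCoeff := by
  rw [List.getLast_map, sort_getLast hf]
  rfl

section coeffs
variable (a : ℝ) (g : ℝ[X])

lemma coeff_zero_f : ((X - C a) * g).coeff 0 = -(a * g.coeff 0) := by
  rw [mul_coeff_zero]
  simp

lemma coeff_succ_f (i : ℕ) :
    ((X - C a) * g).coeff (i + 1) = g.coeff i - a * g.coeff (i + 1) := by
  rw [sub_mul, coeff_sub, coeff_X_mul, coeff_C_mul]

end coeffs

/-- Key inductive construction: an alternating set of coefficient indices of `(X - C a) * g`. -/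
lemma auxstep (g : ℝ[X]) {a : ℝ} (ha : 0 < a) :
    ∀ (ds : List ℕ) (d : ℕ),
    (d :: ds).IsChain (fun p q => p < q ∧ ∀ e, p < e → e < q → g.coeff e = 0) →
    (∀ e ∈ d :: ds, g.coeff e ≠ 0) →
    (d :: ds).getLast (List.cons_ne_nil _ _) = g.natDegree →
    ∃ (t0 : ℕ) (tr : List ℕ),
      (t0 :: tr).IsChain (· < ·) ∧
      ((t0 :: tr).map (((X - C a) * g).coeff)).IsChain (fun x y => x * y < 0) ∧
      (t0 :: tr).length = alt ((d :: ds).map g.coeff) + 1 ∧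
      d < t0 ∧
      0 < ((X - C a) * g).coeff t0 * g.coeff d := by
  intro ds
  induction ds with
  | nil =>
    intro d _ hnz hlast
    have hd : g.coeff (d + 1) = 0 := by
      apply coeff_eq_zero_of_natDegree_lt
      simp only [List.getLast_singleton] at hlast
      omega
    have hc : ((X - C a) * g).coeff (d + 1) = g.coeff d := by
      rw [coeff_succ_f, hd, mul_zero, sub_zero]
    refine ⟨d + 1, [], List.isChain_singleton _, List.isChain_singleton _, rfl, Nat.lt_succ_self d, ?_⟩
    rw [hc]
    exact mul_self_pos.mpr (hnz d (List.mem_cons_self))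
  | cons d' ds' ih =>
    intro d hch hnz hlast
    rw [List.isChain_cons_cons] at hch
    have hlast' : (d' :: ds').getLast (List.cons_ne_nil _ _) = g.natDegree := by
      rw [← hlast, List.getLast_cons (List.cons_ne_nil _ _)]
    obtain ⟨t0, tr, hc1, hc2, hlen, hd't0, hsign⟩ :=
      ih d' hch.2 (fun e he => hnz e (List.mem_cons_of_mem _ he)) hlast'
    have hdnz : g.coeff d ≠ 0 := hnz d (List.mem_cons_self)
    have hd'nz : g.coeff d' ≠ 0 := hnz d' (List.mem_cons_of_mem _ (List.mem_cons_self))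
    have hdd' : d < d' := hch.1.1
    rcases (mul_ne_zero hdnz hd'nz).lt_or_gt with hlt | hgt
    · -- sign change between d and d'
      have hc : 0 < ((X - C a) * g).coeff (d + 1) * g.coeff d := by
        rcases eq_or_lt_of_le (Nat.succ_le_of_lt hdd') with heq | hlt2
        · have heq' : d + 1 = d' := heq
          rw [coeff_succ_f, heq']
          nlinarith [mul_self_pos.mpr hdnz]
        · have h0 : g.coeff (d + 1) = 0 := hch.1.2 (d + 1) (Nat.lt_succ_self d) hlt2
          rw [coeff_succ_f, h0, mul_zero, sub_zero]
          exact mul_self_pos.mpr hdnz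
      have hopp : ((X - C a) * g).coeff (d + 1) * ((X - C a) * g).coeff t0 < 0 := by
        nlinarith [mul_pos hc hsign]
      refine ⟨d + 1, t0 :: tr, ?_, ?_, ?_, Nat.lt_succ_self d, hc⟩
      · exact List.isChain_cons_cons.mpr ⟨lt_of_le_of_lt (Nat.succ_le_of_lt hdd') hd't0, hc1⟩
      · rw [List.map_cons, List.map_cons]
        rw [List.map_cons] at hc2
        exact List.isChain_cons_cons.mpr ⟨hopp, hc2⟩
      · rw [List.map_cons, List.map_cons, alt_cons_cons, ind, if_pos hlt]
        rw [List.map_cons] at hlen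
        simp only [List.length_cons] at hlen ⊢
        omega
    · -- no sign change
      refine ⟨t0, tr, hc1, hc2, ?_, lt_trans hdd' hd't0, ?_⟩
      · rw [List.map_cons, List.map_cons, alt_cons_cons, ind, if_neg (not_lt.mpr hgt.le)]
        rw [List.map_cons] at hlen
        omega
      · nlinarith [mul_pos hsign hgt, mul_self_pos.mpr hd'nz]

lemma sv_eq_alt (f : ℝ[X]) :
    _root_.signVariations f = alt ((f.support.sort (· ≤ ·)).map f.coeff) := by
  rw [alt_eq_countP]; rfl

/-- support sort chain with gaps -/
lemma support_chain (g : ℝ[X]) :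
    (g.support.sort (· ≤ ·)).IsChain
      (fun p q => p < q ∧ ∀ e, p < e → e < q → g.coeff e = 0) := by
  have h1 : (g.support.sort (· ≤ ·)).IsChain (· < ·) :=
    (Finset.sortedLT_sort _).isChain
  have h2 := chain_gap (Finset.sortedLT_sort g.support).pairwise
  rw [List.isChain_iff_getElem] at h1 h2 ⊢
  intro i hi
  refine ⟨h1 i hi, fun e he1 he2 => ?_⟩
  by_contra hne
  exact h2 i hi e he1 he2 ((Finset.mem_sort _).mpr (mem_support_iff.mpr hne))

/-- Lemma B: multiplying by a factor with positive root increases sign variations. -/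
lemma sv_mul_X_sub_C {g : ℝ[X]} (hg : g ≠ 0) {a : ℝ} (ha : 0 < a) :
    _root_.signVariations g + 1 ≤ _root_.signVariations ((X - C a) * g) := by
  set c := ((X - C a) * g).coeff with hcdef
  have hfne : (X - C a) * g ≠ 0 := mul_ne_zero (X_sub_C_ne_zero a) hg
  obtain ⟨d0, ds, hs⟩ := List.exists_cons_of_ne_nil (sort_ne_nil hg)
  have hch : (d0 :: ds).IsChain (fun p q => p < q ∧ ∀ e, p < e → e < q → g.coeff e = 0) := by
    rw [← hs]; exact support_chain g
  have hnz : ∀ e ∈ d0 :: ds, g.coeff e ≠ 0 := by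
    rw [← hs]; exact fun e he => mem_support_iff.mp ((Finset.mem_sort _).mp he)
  have hlast : (d0 :: ds).getLast (List.cons_ne_nil _ _) = g.natDegree := by
    have h : (g.support.sort (· ≤ ·)).getLast? = some g.natDegree := by
      rw [List.getLast?_eq_getLast (sort_ne_nil hg), sort_getLast hg]
    rw [hs, List.getLast?_eq_getLast (List.cons_ne_nil _ _)] at h
    exact Option.some_injective _ h
  obtain ⟨t0, tr, hc1, hc2, hlen, hd0t0, hsign⟩ := auxstep g ha ds d0 hch hnz hlast
  -- value at d0
  have hd0 : d0 = g.natTrailingDegree := by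
    have h : (g.support.sort (· ≤ ·)).head? = some g.natTrailingDegree := by
      rw [List.head?_eq_head (sort_ne_nil hg), sort_head hg]
    rw [hs, List.head?_eq_head (List.cons_ne_nil _ _)] at h
    exact Option.some_injective _ h
  have hcd0 : c d0 = -(a * g.coeff d0) := by
    cases d0 with
    | zero => exact coeff_zero_f a g
    | succ n =>
      rw [hcdef, coeff_succ_f]
      have : g.coeff n = 0 := coeff_eq_zero_of_lt_natTrailingDegree (by omega)
      rw [this, zero_sub]
  have hopp0 : c d0 * c t0 < 0 := by
    rw [hcd0]
    nlinarith [hsign, mul_pos hsign ha]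
  -- the alternating list
  have hchainT : (d0 :: t0 :: tr).IsChain (· < ·) := List.isChain_cons_cons.mpr ⟨hd0t0, hc1⟩
  have hchainC : ((d0 :: t0 :: tr).map c).IsChain (fun x y => x * y < 0) := by
    rw [List.map_cons]
    rw [List.map_cons] at hc2 ⊢
    exact List.isChain_cons_cons.mpr ⟨hopp0, hc2⟩
  have hne : ∀ x ∈ (d0 :: t0 :: tr).map c, x ≠ 0 := by
    rw [List.map_cons, List.map_cons]
    exact chain_ne_zero _ _ _ (by simpa using hchainC)
  have hmem : ∀ i ∈ d0 :: t0 :: tr, i ∈ ((X - C a) * g).support.sort (· ≤ ·) := by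
    intro i hi
    refine (Finset.mem_sort _).mpr (mem_support_iff.mpr ?_)
    exact hne (c i) (List.mem_map_of_mem hi)
  have hsubl : (d0 :: t0 :: tr).Sublist (((X - C a) * g).support.sort (· ≤ ·)) := by
    apply sublist_of_sorted _ _ (Finset.sortedLT_sort _).pairwise _ hmem
    exact List.isChain_iff_pairwise.mp hchainT
  have hmapsub : ((d0 :: t0 :: tr).map c).Sublist
      ((((X - C a) * g).support.sort (· ≤ ·)).map c) := hsubl.map c
  have h1 : alt ((d0 :: t0 :: tr).map c) = (t0 :: tr).length := by
    rw [List.map_cons]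
    rw [alt_of_chain _ _ (by rw [List.map_cons] at hchainC ⊢; exact hchainC)]
    simp
  have h2 : alt ((d0 :: t0 :: tr).map c) ≤ alt ((((X - C a) * g).support.sort (· ≤ ·)).map c) :=
    alt_sublist hmapsub (lcoe_nonzero _)
  rw [sv_eq_alt, sv_eq_alt, hs]
  rw [h1, hlen] at h2
  simp only [hcdef] at h2
  omega


/-- parity of sign variations -/
lemma sv_even_iff {f : ℝ[X]} (hf : f ≠ 0) :
    Even (_root_.signVariations f) ↔ 0 < f.trailingCoeff * f.leadingCoeff := by
  rw [sv_eq_alt]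
  obtain ⟨x, l, hl⟩ := List.exists_cons_of_ne_nil (lcoe_ne_nil hf)
  have hnz : ∀ e ∈ x :: l, e ≠ 0 := by rw [← hl]; exact lcoe_nonzero f
  have hhead : x = f.trailingCoeff := by
    have h : ((f.support.sort (· ≤ ·)).map f.coeff).head? = some f.trailingCoeff := by
      rw [List.head?_eq_head (lcoe_ne_nil hf), lcoe_head hf]
    rw [hl, List.head?_eq_head (List.cons_ne_nil _ _)] at h
    exact Option.some_injective _ h
  have hlast : (x :: l).getLast (List.cons_ne_nil _ _) = f.leadingCoeff := by
    have h : ((f.support.sort (· ≤ ·)).map f.coeff).getLast? = some f.leadingCoeff := by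
      rw [List.getLast?_eq_getLast (lcoe_ne_nil hf), lcoe_getLast hf]
    rw [hl, List.getLast?_eq_getLast (List.cons_ne_nil _ _)] at h
    exact Option.some_injective _ h
  rw [hl, alt_even_iff_cons l x hnz, hlast, hhead]

/-- if a polynomial with positive leading coefficient has no positive roots then
it is positive at zero -/
lemma eval_zero_pos_aux {u : ℝ[X]} (hdeg : 0 < u.degree) (hl : 0 < u.leadingCoeff)
    (h0 : eval 0 u ≠ 0) (h : ∀ x : ℝ, 0 < x → eval x u ≠ 0) : 0 < eval 0 u := by
  by_contra hneg
  have h0' : eval 0 u < 0 := lt_of_le_of_ne (not_lt.mp hneg) h0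
  have htop : Filter.Tendsto (fun x => eval x u) Filter.atTop Filter.atTop :=
    tendsto_atTop_of_leadingCoeff_nonneg u hdeg hl.le
  obtain ⟨M, hM1, hM0⟩ :=
    ((htop.eventually_ge_atTop 1).and (Filter.eventually_gt_atTop 0)).exists
  have hIoo : (0 : ℝ) ∈ Set.Ioo (eval 0 u) (eval M u) := ⟨h0', by linarith⟩
  obtain ⟨c, hc, hc0⟩ := intermediate_value_Ioo hM0.le
    ((Polynomial.continuous u).continuousOn (s := Set.Icc 0 M)) hIoo
  exact h c hc.1 hc0

/-- a nonzero real polynomial with no positive roots has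
`0 < trailingCoeff * leadingCoeff`. -/
lemma trailing_mul_leading_pos {f : ℝ[X]} (hf : f ≠ 0)
    (h : ∀ x : ℝ, 0 < x → eval x f ≠ 0) : 0 < f.trailingCoeff * f.leadingCoeff := by
  obtain ⟨u, hu⟩ : X ^ f.natTrailingDegree ∣ f :=
    X_pow_dvd_iff.mpr fun d hd => coeff_eq_zero_of_lt_natTrailingDegree hd
  have hu0 : u ≠ 0 := by rintro rfl; rw [mul_zero] at hu; exact hf hu
  have hcoe : u.coeff 0 = f.trailingCoeff := by
    have := coeff_X_pow_mul u f.natTrailingDegree 0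
    rw [← hu, zero_add] at this
    exact this.symm
  have hlead : u.leadingCoeff = f.leadingCoeff := by
    rw [hu, leadingCoeff_mul, leadingCoeff_X_pow, one_mul]
  have hev0 : eval 0 u = f.trailingCoeff := by
    rw [← coeff_zero_eq_eval_zero, hcoe]
  have htne : f.trailingCoeff ≠ 0 := trailingCoeff_nonzero_iff_nonzero.mpr hf
  have hux : ∀ x : ℝ, 0 < x → eval x u ≠ 0 := by
    intro x hx hux
    apply h x hx
    rw [hu, eval_mul, hux, mul_zero]
  rw [← hcoe, ← hlead, coeff_zero_eq_eval_zero]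
  by_cases hdeg : u.degree ≤ 0
  · have hC := eq_C_of_degree_le_zero hdeg
    have : eval 0 u = u.leadingCoeff := by
      conv_rhs => rw [hC]
      rw [leadingCoeff_C, ← coeff_zero_eq_eval_zero]
    rw [← this]
    apply mul_self_pos.mpr
    rw [hev0]; exact htne
  · have hdeg' : 0 < u.degree := not_le.mp hdeg
    have hune0 : eval 0 u ≠ 0 := by rw [hev0]; exact htne
    rcases (leadingCoeff_ne_zero.mpr hu0).lt_or_gt with hneg | hpos
    · have h1 : 0 < eval 0 (-u) := by
        apply eval_zero_pos_aux (u := -u)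
        · rwa [degree_neg]
        · rwa [leadingCoeff_neg, neg_pos]
        · rw [eval_neg]; exact neg_ne_zero.mpr hune0
        · intro x hx; rw [eval_neg]; exact neg_ne_zero.mpr (hux x hx)
      rw [eval_neg] at h1
      nlinarith
    · have h1 : 0 < eval 0 u := eval_zero_pos_aux hdeg' hpos hune0 hux
      exact mul_pos h1 hpos

lemma trailingCoeff_X_sub_C {a : ℝ} (ha : a ≠ 0) : (X - C a).trailingCoeff = -a := by
  have hcoef : (X - C a).coeff 0 = -a := by simp
  have h0 : (X - C a).natTrailingDegree = 0 :=
    Nat.eq_zero_of_le_zero (natTrailingDegree_le_of_ne_zero (by rw [hcoef]; simpa using ha))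
  rw [trailingCoeff, h0, hcoef]

end DescartesAux

/-- **Descartes' rule of signs.** Let `f ∈ ℝ[x]` be nonzero, `σ(f)` its
number of sign variations and `r` its number of roots in `(0, ∞)` counted with
multiplicity. Then `σ(f) − r` is a nonnegative even integer, i.e. `σ(f) = r + 2k` for
some `k ∈ ℕ`. -/
theorem descartes_rule_of_signs (f : Polynomial ℝ) (hf : f ≠ 0) :
    ∃ k : ℕ, _root_.signVariations f =
      (f.roots.filter (fun x : ℝ => 0 < x)).card + 2 * k := by
  suffices H : ∀ (n : ℕ) (f : ℝ[X]), f ≠ 0 →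
      (f.roots.filter (fun x : ℝ => 0 < x)).card = n →
      ∃ k : ℕ, _root_.signVariations f = n + 2 * k by
    obtain ⟨k, hk⟩ := H _ f hf rfl
    exact ⟨k, hk⟩
  intro n
  induction n using Nat.strong_induction_on with
  | _ n ih =>
    intro f hf hcard
    rcases Nat.eq_zero_or_pos n with rfl | hn
    · -- no positive roots
      have hnoroot : ∀ x : ℝ, 0 < x → eval x f ≠ 0 := by
        intro x hx hev
        have hmem : x ∈ f.roots.filter (fun x : ℝ => 0 < x) :=
          Multiset.mem_filter.mpr ⟨(Polynomial.mem_roots hf).mpr hev, hx⟩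
        have := Multiset.card_pos_iff_exists_mem.mpr ⟨x, hmem⟩
        omega
      have hpos := DescartesAux.trailing_mul_leading_pos hf hnoroot
      have heven := (DescartesAux.sv_even_iff hf).mpr hpos
      obtain ⟨k, hk⟩ := heven
      exact ⟨k, by omega⟩
    · -- at least one positive root
      obtain ⟨x, hmem⟩ := Multiset.card_pos_iff_exists_mem.mp (hcard ▸ hn)
      have hx : 0 < x := (Multiset.mem_filter.mp hmem).2
      have hroot : Polynomial.IsRoot f x :=
        (Polynomial.mem_roots hf).mp (Multiset.mem_filter.mp hmem).1
      obtain ⟨g, hg⟩ := (Polynomial.dvd_iff_isRoot).mpr hroot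
      have hgne : g ≠ 0 := by rintro rfl; rw [mul_zero] at hg; exact hf hg
      have hfactor : f = (X - C x) * g := hg
      have hXne : (X - C x) ≠ 0 := Polynomial.X_sub_C_ne_zero x
      -- root counts
      have hroots : f.roots = (X - C x).roots + g.roots := by
        rw [hfactor, Polynomial.roots_mul (hfactor ▸ hf)]
      have hcards : (f.roots.filter (fun y : ℝ => 0 < y)).card =
          (g.roots.filter (fun y : ℝ => 0 < y)).card + 1 := by
        rw [hroots, Multiset.filter_add, Multiset.card_add, Polynomial.roots_X_sub_C]
        have : ({x} : Multiset ℝ).filter (fun y : ℝ => 0 < y) = {x} :=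
          Multiset.filter_eq_self.mpr (by intro y hy; rw [Multiset.mem_singleton] at hy; rwa [hy])
        rw [this]
        simp [add_comm]
      have hgcard : (g.roots.filter (fun y : ℝ => 0 < y)).card = n - 1 := by omega
      obtain ⟨k, hk⟩ := ih (n - 1) (by omega) g hgne hgcard
      -- inequality
      have hineq : _root_.signVariations g + 1 ≤ _root_.signVariations f := by
        rw [hfactor]
        exact DescartesAux.sv_mul_X_sub_C hgne hx
      -- parity
      have htf : f.trailingCoeff = -x * g.trailingCoeff := by
        rw [hfactor, Polynomial.trailingCoeff_mul,
          DescartesAux.trailingCoeff_X_sub_C (ne_of_gt hx)]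
      have hlf : f.leadingCoeff = g.leadingCoeff := by
        rw [hfactor, Polynomial.leadingCoeff_mul, Polynomial.leadingCoeff_X_sub_C, one_mul]
      have hgtl : g.trailingCoeff * g.leadingCoeff ≠ 0 :=
        mul_ne_zero (Polynomial.trailingCoeff_nonzero_iff_nonzero.mpr hgne)
          (Polynomial.leadingCoeff_ne_zero.mpr hgne)
      have hparf := DescartesAux.sv_even_iff hf
      have hparg := DescartesAux.sv_even_iff hgne
      have hflip : (0 < f.trailingCoeff * f.leadingCoeff) ↔
          ¬(0 < g.trailingCoeff * g.leadingCoeff) := by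
        rw [htf, hlf]
        constructor
        · intro h1 h2; nlinarith
        · intro h1
          have h2 : g.trailingCoeff * g.leadingCoeff < 0 :=
            lt_of_le_of_ne (not_lt.mp h1) hgtl
          nlinarith
      have hpar : Even (_root_.signVariations f) ↔ ¬ Even (_root_.signVariations g) := by
        rw [hparf, hflip, hparg]
      -- combine
      rw [Nat.even_iff, Nat.even_iff] at hpar
      have h2 : _root_.signVariations f % 2 ≠ _root_.signVariations g % 2 := by omega
      refine ⟨(_root_.signVariations f - n) / 2, ?_⟩
      omega
end

section
/- Let f ∈ ℝ[x] be nonzero and σ(f) the number of sign variations of its coefficient sequence. If σ(f) = 0 then f has no root in (0, ∞). If σ(f) = 1 then f has exactly one root in (0, ∞) counted with multiplicity; in particular this root is simple. -/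
open Polynomial


lemma sign_trans {x y b : ℝ} (h1 : 0 < x * y) (h2 : 0 < y * b) : 0 < x * b := by
  nlinarith [sq_nonneg y, mul_pos h1 h2]

lemma sign_trans' {x y b : ℝ} (h1 : 0 < x * y) (h2 : y * b < 0) : x * b < 0 := by
  nlinarith [sq_nonneg y]

lemma sign_trans'' {x y b : ℝ} (h1 : x * y < 0) (h2 : 0 < y * b) : x * b < 0 := by
  nlinarith [sq_nonneg y]

lemma count_zero_same_sign : ∀ (l : List ℝ), (∀ a ∈ l, a ≠ 0) →
    (l.zip l.tail).countP (fun p => decide (p.1 * p.2 < 0)) = 0 →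
    ∀ a ∈ l, ∀ b ∈ l, 0 < a * b
  | [], _, _ => by simp
  | [x], hnz, _ => by
      intro a ha b hb
      simp only [List.mem_singleton] at ha hb
      rw [ha, hb]
      exact mul_self_pos.mpr (hnz x (by simp))
  | x :: y :: t, hnz, hc => by
      simp only [List.tail_cons, List.zip_cons_cons, List.countP_cons, decide_eq_true_eq] at hc
      have h1 : ¬ (x * y < 0) := by
        intro h; rw [if_pos h] at hc; omega
      rw [if_neg h1] at hc
      have hxy : 0 < x * y := by
        rcases lt_or_eq_of_le (not_lt.mp h1) with h | h
        · exact h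
        · exact absurd (mul_eq_zero.mp h.symm)
            (by push_neg; exact ⟨hnz x (by simp), hnz y (by simp)⟩)
      have ih := count_zero_same_sign (y :: t)
        (fun a ha => hnz a (List.mem_cons_of_mem x ha)) hc
      intro a ha b hb
      rcases List.mem_cons.mp ha with h | ha' <;> rcases List.mem_cons.mp hb with h2 | hb'
      · rw [h, h2]; exact mul_self_pos.mpr (hnz x (by simp))
      · rw [h]; exact sign_trans hxy (ih y (by simp) b hb')
      · rw [h2]
        have := sign_trans hxy (ih y (by simp) a ha')
        linarith [mul_comm a x]
      · exact ih a ha' b hb'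

lemma count_one_split : ∀ (l : List ℝ), (∀ a ∈ l, a ≠ 0) →
    (l.zip l.tail).countP (fun p => decide (p.1 * p.2 < 0)) = 1 →
    ∃ l1 l2 : List ℝ, l = l1 ++ l2 ∧ l1 ≠ [] ∧ l2 ≠ [] ∧
      (∀ a ∈ l1, ∀ b ∈ l1, 0 < a * b) ∧ (∀ a ∈ l2, ∀ b ∈ l2, 0 < a * b) ∧
      (∀ a ∈ l1, ∀ b ∈ l2, a * b < 0)
  | [], _, hc => by simp at hc
  | [x], _, hc => by simp at hc
  | x :: y :: t, hnz, hc => by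
      simp only [List.tail_cons, List.zip_cons_cons, List.countP_cons, decide_eq_true_eq] at hc
      have hnz' : ∀ a ∈ y :: t, a ≠ 0 := fun a ha => hnz a (List.mem_cons_of_mem x ha)
      by_cases hxy : x * y < 0
      · rw [if_pos hxy] at hc
        have hc0 : ((y :: t).zip t).countP (fun p => decide (p.1 * p.2 < 0)) = 0 := by omega
        have hsame := count_zero_same_sign (y :: t) hnz' hc0
        refine ⟨[x], y :: t, by simp, by simp, by simp, ?_, hsame, ?_⟩
        · intro a ha b hb
          simp only [List.mem_singleton] at ha hb
          rw [ha, hb]; exact mul_self_pos.mpr (hnz x (by simp))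
        · intro a ha b hb
          simp only [List.mem_singleton] at ha
          rw [ha]
          exact sign_trans'' hxy (hsame y (by simp) b hb)
      · rw [if_neg hxy] at hc
        have hxy' : 0 < x * y := by
          rcases lt_or_eq_of_le (not_lt.mp hxy) with h | h
          · exact h
          · exact absurd (mul_eq_zero.mp h.symm)
              (by push_neg; exact ⟨hnz x (by simp), hnz y (by simp)⟩)
        have hc1 : ((y :: t).zip t).countP (fun p => decide (p.1 * p.2 < 0)) = 1 := by omega
        obtain ⟨l1, l2, heq, hl1, hl2, hs1, hs2, hcross⟩ := count_one_split (y :: t) hnz' hc1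
        have hy1 : y ∈ l1 := by
          cases l1 with
          | nil => exact absurd rfl hl1
          | cons z l1' => simp only [List.cons_append, List.cons.injEq] at heq; simp [heq.1]
        refine ⟨x :: l1, l2, by simp [heq], by simp, hl2, ?_, hs2, ?_⟩
        · intro a ha b hb
          rcases List.mem_cons.mp ha with h | ha' <;> rcases List.mem_cons.mp hb with h2 | hb'
          · rw [h, h2]; exact mul_self_pos.mpr (hnz x (by simp))
          · rw [h]; exact sign_trans hxy' (hs1 y hy1 b hb')
          · rw [h2]
            have := sign_trans hxy' (hs1 y hy1 a ha')
            linarith [mul_comm a x]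
          · exact hs1 a ha' b hb'
        · intro a ha b hb
          rcases List.mem_cons.mp ha with h | ha'
          · rw [h]; exact sign_trans' hxy' (hcross y hy1 b hb)
          · exact hcross a ha' b hb


lemma descartes_key (f : Polynomial ℝ) (hf : f ≠ 0) (m : ℕ)
    (h1 : ∀ i ∈ f.support, i < m → f.coeff i < 0)
    (h2 : ∀ i ∈ f.support, m ≤ i → 0 < f.coeff i)
    (hlow : ∃ i ∈ f.support, i < m)
    (hhigh : ∃ i ∈ f.support, m ≤ i) :
    (f.roots.filter (fun x : ℝ => 0 < x)).card = 1 := by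
  obtain ⟨i0, hi0s, hi0m⟩ := hlow
  obtain ⟨i1, hi1s, hi1m⟩ := hhigh
  have hm1 : 1 ≤ m := Nat.one_le_iff_ne_zero.mpr (by rintro rfl; omega)
  set c : ℝ := (m : ℝ) - 1/2 with hc
  have hcpos : 0 < c := by
    have : (1:ℝ) ≤ (m:ℝ) := by exact_mod_cast hm1
    simp only [hc]; linarith
  -- key positivity
  have hkey : ∀ x : ℝ, 0 < x → 0 < x * (derivative f).eval x - c * f.eval x := by
    intro x hx
    have hfe : f.eval x = ∑ i ∈ f.support, f.coeff i * x ^ i := by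
      rw [Polynomial.eval_eq_sum, Polynomial.sum_def]
    have hde : (derivative f).eval x = ∑ i ∈ f.support, f.coeff i * i * x ^ (i - 1) := by
      rw [Polynomial.derivative_apply, Polynomial.sum_def, Polynomial.eval_finset_sum]
      simp [Polynomial.eval_mul, Polynomial.eval_pow]
    rw [hfe, hde, Finset.mul_sum, Finset.mul_sum, ← Finset.sum_sub_distrib]
    apply Finset.sum_pos
    · intro i hi
      rcases Nat.eq_zero_or_pos i with rfl | hipos
      · have ha := h1 0 hi (by omega)
        simp only [Nat.cast_zero, mul_zero, zero_mul, pow_zero, mul_one]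
        nlinarith
      · have hxpow : x * (f.coeff i * i * x ^ (i - 1)) = (i : ℝ) * f.coeff i * x ^ i := by
          have : x ^ i = x ^ (i - 1) * x := by
            rw [← pow_succ]
            congr 1
            omega
          rw [this]; ring
        rw [hxpow]
        have hxi : 0 < x ^ i := pow_pos hx i
        rcases lt_or_ge i m with him | him
        · have ha := h1 i hi him
          have hic : (i : ℝ) - c < 0 := by
            have : (i : ℝ) ≤ (m : ℝ) - 1 := by
              have : i + 1 ≤ m := him
              have := (Nat.cast_le (α := ℝ)).mpr this
              push_cast at this; linarith
            simp only [hc]; linarith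
          have : ((i : ℝ) - c) * f.coeff i * x ^ i > 0 := by
            have := mul_pos_of_neg_of_neg hic ha
            positivity
          nlinarith
        · have ha := h2 i hi him
          have hic : 0 < (i : ℝ) - c := by
            have : (m : ℝ) ≤ (i : ℝ) := by exact_mod_cast him
            simp only [hc]; linarith
          have : ((i : ℝ) - c) * f.coeff i * x ^ i > 0 := by positivity
          nlinarith
    · exact ⟨i0, hi0s⟩
  -- strict monotonicity of x ↦ f(x) * x^(-c) on (0, ∞)
  set h : ℝ → ℝ := fun x => f.eval x * x ^ (-c) with hdefh
  have hcont : ContinuousOn h (Set.Ioi (0:ℝ)) := by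
    intro x hx
    exact ((f.continuous_aeval.continuousAt).mul
      (Real.continuousAt_rpow_const x (-c) (Or.inl (ne_of_gt hx)))).continuousWithinAt
  have hderiv : ∀ x ∈ interior (Set.Ioi (0:ℝ)), 0 < deriv h x := by
    rw [interior_Ioi]
    intro x hx
    have H1 : HasDerivAt (fun y : ℝ => f.eval y) ((derivative f).eval x) x := f.hasDerivAt x
    have H2 : HasDerivAt (fun y : ℝ => y ^ (-c)) (-c * x ^ (-c - 1)) x :=
      Real.hasDerivAt_rpow_const (Or.inl (ne_of_gt hx))
    have H := H1.mul H2
    rw [show h = ((fun y : ℝ => f.eval y) * fun y : ℝ => y ^ (-c)) from rfl, H.deriv]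
    have hxc : x ^ (-c) = x ^ (-c - 1) * x := by
      have : x ^ (-c) = x ^ (-c - 1 + 1) := by norm_num
      rw [this, Real.rpow_add hx, Real.rpow_one]
    have heq : (derivative f).eval x * x ^ (-c) + f.eval x * (-c * x ^ (-c - 1)) =
        x ^ (-c - 1) * (x * (derivative f).eval x - c * f.eval x) := by
      rw [hxc]; ring
    rw [heq]
    exact mul_pos (Real.rpow_pos_of_pos hx _) (hkey x hx)
  have hmono : StrictMonoOn h (Set.Ioi (0:ℝ)) :=
    strictMonoOn_of_deriv_pos (convex_Ioi 0) hcont hderiv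
  -- uniqueness of positive roots
  have huniq : ∀ x ∈ Set.Ioi (0:ℝ), ∀ y ∈ Set.Ioi (0:ℝ),
      f.eval x = 0 → f.eval y = 0 → x = y := by
    intro x hx y hy hfx hfy
    exact hmono.injOn hx hy (by simp [hdefh, hfx, hfy])
  -- existence via IVT
  set n0 : ℕ := f.natTrailingDegree with hn0
  obtain ⟨g, hgf⟩ : (X : ℝ[X]) ^ n0 ∣ f :=
    Polynomial.X_pow_dvd_iff.mpr fun d hd => Polynomial.coeff_eq_zero_of_lt_natTrailingDegree hd
  have hfg : ∀ t : ℝ, f.eval t = t ^ n0 * g.eval t := by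
    intro t; rw [hgf]; simp
  have hn0m : n0 < m := lt_of_le_of_lt (Polynomial.natTrailingDegree_le_of_mem_supp i0 hi0s) hi0m
  have hg0 : g.eval 0 < 0 := by
    have hc0 : g.eval 0 = f.coeff n0 := by
      rw [← Polynomial.coeff_zero_eq_eval_zero, hgf]
      have := Polynomial.coeff_X_pow_mul g n0 0
      simpa using this.symm
    rw [hc0]
    exact h1 n0 (Polynomial.natTrailingDegree_mem_support_of_nonzero hf) hn0m
  -- small positive point where g < 0
  have hev : ∀ᶠ x in nhds (0:ℝ), g.eval x < 0 :=
    Filter.Tendsto.eventually_lt_const hg0 (g.continuous_aeval.tendsto 0)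
  have hev2 : ∀ᶠ x in nhdsWithin (0:ℝ) (Set.Ioi 0), g.eval x < 0 ∧ x ∈ Set.Ioi (0:ℝ) :=
    (hev.filter_mono nhdsWithin_le_nhds).and self_mem_nhdsWithin
  obtain ⟨ε, hgε, hεpos⟩ := hev2.exists
  -- large point where f > 0
  have hdegpos : 0 < f.degree := by
    rw [← Polynomial.natDegree_pos_iff_degree_pos]
    have := Polynomial.le_natDegree_of_ne_zero (Polynomial.mem_support_iff.mp hi1s)
    omega
  have hlead : 0 ≤ f.leadingCoeff := by
    apply le_of_lt
    apply h2 f.natDegree (Polynomial.natDegree_mem_support_of_nonzero hf)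
    exact le_trans hi1m (Polynomial.le_natDegree_of_ne_zero (Polynomial.mem_support_iff.mp hi1s))
  have htop := Polynomial.tendsto_atTop_of_leadingCoeff_nonneg f hdegpos hlead
  obtain ⟨M, hεM, hfM⟩ : ∃ M, ε < M ∧ 0 < f.eval M := by
    have h3 := (htop.eventually_gt_atTop 0).and (Filter.eventually_gt_atTop ε)
    obtain ⟨M, hM1, hM2⟩ := h3.exists
    exact ⟨M, hM2, hM1⟩
  have hMpos : 0 < M := lt_trans hεpos hεM
  have hgM : 0 < g.eval M := by
    have := hfg M
    nlinarith [pow_pos hMpos n0]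
  obtain ⟨r, hrmem, hgr⟩ : ∃ r ∈ Set.Icc ε M, g.eval r = 0 := by
    have hsub := intermediate_value_Icc (le_of_lt hεM) (g.continuous_aeval.continuousOn)
    have h0mem : (0:ℝ) ∈ Set.Icc (g.eval ε) (g.eval M) := ⟨le_of_lt hgε, le_of_lt hgM⟩
    obtain ⟨r, hr1, hr2⟩ := hsub h0mem
    exact ⟨r, hr1, hr2⟩
  have hrpos : 0 < r := lt_of_lt_of_le hεpos hrmem.1
  have hfr : f.eval r = 0 := by rw [hfg r, hgr, mul_zero]
  -- the root is simple
  have hdr : (derivative f).eval r ≠ 0 := by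
    intro hd
    have := hkey r hrpos
    rw [hfr, hd] at this
    simp at this
  have hmult : f.rootMultiplicity r = 1 := by
    have hpos : 0 < f.rootMultiplicity r := (Polynomial.rootMultiplicity_pos hf).mpr hfr
    by_contra hne
    have h2le : 2 ≤ f.rootMultiplicity r := by omega
    have := Polynomial.isRoot_iterate_derivative_of_lt_rootMultiplicity
      (p := f) (t := r) (n := 1) (by omega)
    simp only [Function.iterate_one] at this
    exact hdr this
  -- conclude
  have hfilter : f.roots.filter (fun x : ℝ => 0 < x) = {r} := by
    apply Multiset.ext.mpr
    intro a
    rw [Multiset.count_filter]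
    by_cases hpa : 0 < a
    · rw [if_pos hpa, Polynomial.count_roots]
      by_cases har : a = r
      · subst har
        simp [Multiset.count_singleton, hmult]
      · have : f.eval a ≠ 0 := by
          intro h0
          exact har (huniq a hpa r hrpos h0 hfr)
        rw [Polynomial.rootMultiplicity_eq_zero this]
        simp [Multiset.count_singleton, har]
    · rw [if_neg hpa]
      have har : a ≠ r := by rintro rfl; exact hpa hrpos
      simp [Multiset.count_singleton, har]
  rw [hfilter]
  simp

/-- Let `f ∈ ℝ[x]` be nonzero with `σ(f)` sign variations. If
`σ(f) = 0` then `f` has no root in `(0, ∞)`; if `σ(f) = 1` then `f` has exactly one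
root in `(0, ∞)` counted with multiplicity (in particular this root is simple). -/
theorem descartes_zero_or_one_sign_variation (f : Polynomial ℝ) (hf : f ≠ 0) :
    (_root_.signVariations f = 0 → ∀ x : ℝ, 0 < x → f.eval x ≠ 0) ∧
    (_root_.signVariations f = 1 →
      (f.roots.filter (fun x : ℝ => 0 < x)).card = 1) := by
  set L : List ℕ := f.support.sort (· ≤ ·) with hL
  set l : List ℝ := L.map f.coeff with hl
  have hmemL : ∀ i : ℕ, i ∈ L ↔ i ∈ f.support := fun i => Finset.mem_sort _
  have hnz : ∀ a ∈ l, a ≠ 0 := by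
    intro a ha
    obtain ⟨i, hi, rfl⟩ := List.mem_map.mp ha
    exact Polynomial.mem_support_iff.mp ((hmemL i).mp hi)
  have hsv : _root_.signVariations f = (l.zip l.tail).countP fun p => decide (p.1 * p.2 < 0) := rfl
  constructor
  · -- zero sign variations
    intro h0 x hx hfx
    rw [hsv] at h0
    have hsame := count_zero_same_sign l hnz h0
    set s : ℝ := f.coeff f.natTrailingDegree with hs
    have hsl : s ∈ l := List.mem_map.mpr ⟨f.natTrailingDegree,
      (hmemL _).mpr (Polynomial.natTrailingDegree_mem_support_of_nonzero hf), rfl⟩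
    have hfe : f.eval x = ∑ i ∈ f.support, f.coeff i * x ^ i := by
      rw [Polynomial.eval_eq_sum, Polynomial.sum_def]
    have hpos : 0 < f.eval x * s := by
      rw [hfe, Finset.sum_mul]
      apply Finset.sum_pos
      · intro i hi
        have hcl : f.coeff i ∈ l := List.mem_map.mpr ⟨i, (hmemL i).mpr hi, rfl⟩
        have := hsame _ hcl _ hsl
        have hxi : 0 < x ^ i := pow_pos hx i
        nlinarith
      · exact Polynomial.support_nonempty.mpr hf
    rw [hfx, zero_mul] at hpos
    exact lt_irrefl 0 hpos
  · -- one sign variation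
    intro h1
    rw [hsv] at h1
    obtain ⟨l1, l2, heq, hl1ne, hl2ne, hs1, hs2, hcross⟩ := count_one_split l hnz h1
    set L1 : List ℕ := L.take l1.length with hL1
    set L2 : List ℕ := L.drop l1.length with hL2
    have hL1map : L1.map f.coeff = l1 := by
      rw [hL1, List.map_take, ← hl, heq, List.take_left]
    have hL2map : L2.map f.coeff = l2 := by
      rw [hL2, List.map_drop, ← hl, heq, List.drop_left]
    have hLsplit : L1 ++ L2 = L := List.take_append_drop _ _
    have hL2ne : L2 ≠ [] := by
      intro h; rw [h] at hL2map; exact hl2ne (by simpa using hL2map.symm)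
    have hL1ne : L1 ≠ [] := by
      intro h; rw [h] at hL1map; exact hl1ne (by simpa using hL1map.symm)
    obtain ⟨m, L2', hL2eq⟩ := List.exists_cons_of_ne_nil hL2ne
    have hsorted : L.Pairwise (· < ·) := List.sortedLT_iff_pairwise.mp (Finset.sortedLT_sort f.support)
    rw [← hLsplit] at hsorted
    rw [List.pairwise_append] at hsorted
    obtain ⟨hsort1, hsort2, hord⟩ := hsorted
    -- position facts
    have hmL2 : m ∈ L2 := by rw [hL2eq]; simp
    have hmsupp : m ∈ f.support := (hmemL m).mp (by rw [← hLsplit]; exact List.mem_append_right _ hmL2)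
    have hlt : ∀ i ∈ L1, i < m := fun i hi => hord i hi m hmL2
    have hge : ∀ i ∈ L2, m ≤ i := by
      intro i hi
      rw [hL2eq] at hi hsort2
      rcases List.mem_cons.mp hi with rfl | hi'
      · exact le_refl _
      · exact le_of_lt (List.rel_of_pairwise_cons hsort2 hi')
    have hin1 : ∀ i ∈ f.support, i < m → i ∈ L1 := by
      intro i hi him
      have : i ∈ L1 ++ L2 := by rw [hLsplit]; exact (hmemL i).mpr hi
      rcases List.mem_append.mp this with h | h
      · exact h
      · exact absurd (hge i h) (by omega)
    have hin2 : ∀ i ∈ f.support, m ≤ i → i ∈ L2 := by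
      intro i hi him
      have : i ∈ L1 ++ L2 := by rw [hLsplit]; exact (hmemL i).mpr hi
      rcases List.mem_append.mp this with h | h
      · exact absurd (hlt i h) (by omega)
      · exact h
    have hc1 : ∀ i ∈ L1, f.coeff i ∈ l1 := by
      intro i hi; rw [← hL1map]; exact List.mem_map.mpr ⟨i, hi, rfl⟩
    have hc2 : ∀ i ∈ L2, f.coeff i ∈ l2 := by
      intro i hi; rw [← hL2map]; exact List.mem_map.mpr ⟨i, hi, rfl⟩
    set s : ℝ := f.coeff m with hsdef
    have hsl2 : s ∈ l2 := hc2 m hmL2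
    have hsne : s ≠ 0 := Polynomial.mem_support_iff.mp hmsupp
    -- low element
    obtain ⟨j0, hj0⟩ := List.exists_mem_of_ne_nil L1 hL1ne
    have hj0supp : j0 ∈ f.support := (hmemL j0).mp (by rw [← hLsplit]; exact List.mem_append_left _ hj0)
    rcases lt_trichotomy s 0 with hsneg | hszero | hspos
    · -- apply key to -f
      have hfneg : (-f : ℝ[X]) ≠ 0 := neg_ne_zero.mpr hf
      have hroots : (-f : ℝ[X]).roots = f.roots := by
        have : (-f : ℝ[X]) = C (-1) * f := by
          rw [map_neg, map_one]; ring
        rw [this, Polynomial.roots_C_mul f (by norm_num : (-1:ℝ) ≠ 0)]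
      have := descartes_key (-f) hfneg m
        (by
          intro i hi him
          rw [Polynomial.support_neg] at hi
          have hil1 := hc1 i (hin1 i hi him)
          have := hcross _ hil1 _ hsl2
          rw [Polynomial.coeff_neg]
          nlinarith)
        (by
          intro i hi him
          rw [Polynomial.support_neg] at hi
          have hil2 := hc2 i (hin2 i hi him)
          have := hs2 _ hil2 _ hsl2
          rw [Polynomial.coeff_neg]
          nlinarith)
        ⟨j0, by rw [Polynomial.support_neg]; exact hj0supp, hlt j0 hj0⟩
        ⟨m, by rw [Polynomial.support_neg]; exact hmsupp, le_refl m⟩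
      rwa [hroots] at this
    · exact absurd hszero hsne
    · exact descartes_key f hf m
        (by
          intro i hi him
          have hil1 := hc1 i (hin1 i hi him)
          have := hcross _ hil1 _ hsl2
          nlinarith)
        (by
          intro i hi him
          have hil2 := hc2 i (hin2 i hi him)
          have := hs2 _ hil2 _ hsl2
          nlinarith)
        ⟨j0, hj0supp, hlt j0 hj0⟩
        ⟨m, hmsupp, le_refl m⟩
end

section
/- Let f ∈ ℝ[x] be nonzero of degree d and define f̃(x) = (x+1)^d · f(1/(x+1)), which is a polynomial of degree at most d. Then the map t ↦ 1/(t+1) is a bijection from (0, ∞) to (0, 1) that carries the roots of f̃ in (0, ∞) bijectively, preserving multiplicities, onto the roots of f in (0, 1); in particular the number of roots of f in (0, 1) counted with multiplicity equals the number of roots of f̃ in (0, ∞) counted with multiplicity. -/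
open Polynomial

lemma rev_pow (p : Polynomial ℝ) (n : ℕ) : (p ^ n).reverse = p.reverse ^ n := by
  induction n with
  | zero => simp [reverse]
  | succ n ih => rw [pow_succ, reverse_mul_of_domain, ih, pow_succ]

lemma rev_linear (r : ℝ) : (X - C r : Polynomial ℝ).reverse = 1 - C r * X := by
  unfold reverse
  rw [natDegree_X_sub_C]
  have h : (X - C r : Polynomial ℝ) = X ^ 1 + C (-r) := by
    rw [map_neg]; ring
  rw [h, reflect_add, reflect_monomial, reflect_C, revAt_le (le_refl 1), map_neg]
  ring_nf

lemma eval_rev (g : Polynomial ℝ) {r : ℝ} (hr : r ≠ 0) :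
    g.reverse.eval r⁻¹ * r ^ g.natDegree = g.eval r := by
  letI := invertibleOfNonzero hr
  have := eval₂_reverse_mul_pow (RingHom.id ℝ) r g
  rwa [invOf_eq_inv, eval₂_eq_eval_map, eval₂_eq_eval_map, Polynomial.map_id,
    Polynomial.map_id] at this

lemma keyMul (f : Polynomial ℝ) (hf : f ≠ 0) (t : ℝ) (ht : 0 < t) :
    (f.reverse.comp (X + 1)).rootMultiplicity t = f.rootMultiplicity (1 / (t + 1)) := by
  have ht1 : (0:ℝ) < t + 1 := by linarith
  set r : ℝ := 1 / (t + 1) with hrdef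
  have hr0 : r ≠ 0 := by positivity
  have hrinv : r⁻¹ = t + 1 := by rw [hrdef, one_div, inv_inv]
  set m := f.rootMultiplicity r with hm
  set g := f /ₘ (X - C r) ^ m with hgdef
  have hfg : (X - C r) ^ m * g = f := pow_mul_divByMonic_rootMultiplicity_eq f r
  have hg : g.eval r ≠ 0 := eval_divByMonic_pow_rootMultiplicity_ne_zero r hf
  have hgrev : g.reverse.eval (t + 1) ≠ 0 := by
    intro h0
    apply hg
    rw [← eval_rev g hr0, hrinv, h0, zero_mul]
  have h1 : C r * (C t + 1) = (1 : Polynomial ℝ) := by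
    rw [show (C t + 1 : Polynomial ℝ) = C (t + 1) by rw [C_add, C_1], ← C_mul,
      show r * (t + 1) = 1 by rw [hrdef, one_div, inv_mul_cancel₀ ht1.ne'], C_1]
  have hlin : ((1 : Polynomial ℝ) - C r * X).comp (X + 1) = (-C r) * (X - C t) := by
    rw [sub_comp, one_comp, mul_comp, C_comp, X_comp]
    linear_combination -h1
  have hsplit : f.reverse.comp (X + 1)
      = (-C r) ^ m * ((X - C t) ^ m * (g.reverse.comp (X + 1))) := by
    conv_lhs => rw [← hfg]
    rw [reverse_mul_of_domain, rev_pow, rev_linear, mul_comp, pow_comp, hlin, mul_pow]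
    ring
  have hC : ((-C r : Polynomial ℝ)) ^ m = C ((-r) ^ m) := by
    rw [← C_neg, ← C_pow]
  have hq : (g.reverse.comp (X + 1)).eval t ≠ 0 := by
    rwa [eval_comp, eval_add, eval_X, eval_one]
  have hqne : g.reverse.comp (X + 1) ≠ 0 := fun h => hq (by rw [h, eval_zero])
  have hne : (X - C t) ^ m * (g.reverse.comp (X + 1)) ≠ 0 :=
    mul_ne_zero (pow_ne_zero _ (X_sub_C_ne_zero t)) hqne
  rw [hsplit, rootMultiplicity_mul (mul_ne_zero (pow_ne_zero _ (neg_ne_zero.mpr (C_ne_zero.mpr hr0))) hne), hC,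
    rootMultiplicity_C, rootMultiplicity_mul hne, rootMultiplicity_X_sub_C_pow,
    rootMultiplicity_eq_zero hq, hm]
  simp [hrdef]

/-- Let `f ∈ ℝ[x]` be nonzero of degree `d` and let
`f̃(x) = (x+1)^d · f(1/(x+1))`, i.e. the reversal of `f` composed with `X + 1`. Then
`f̃` is a polynomial of degree at most `d`, the map `t ↦ 1/(t+1)` is a bijection from
`(0,∞)` onto `(0,1)` which carries the roots of `f̃` in `(0,∞)` bijectively, preserving
multiplicities, onto the roots of `f` in `(0,1)`; in particular the number of roots of
`f` in `(0,1)` counted with multiplicity equals the number of roots of `f̃` in `(0,∞)`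
counted with multiplicity. -/
theorem descartes_interval_transformation (f : Polynomial ℝ) (hf : f ≠ 0)
    (ft : Polynomial ℝ) (hft : ft = f.reverse.comp (X + 1)) :
    ft.natDegree ≤ f.natDegree ∧
    Set.BijOn (fun t : ℝ => 1 / (t + 1)) (Set.Ioi 0) (Set.Ioo 0 1) ∧
    (∀ t : ℝ, 0 < t →
      ft.rootMultiplicity t = f.rootMultiplicity (1 / (t + 1))) ∧
    (ft.roots.filter (fun x : ℝ => 0 < x)).card =
      (f.roots.filter (fun x : ℝ => 0 < x ∧ x < 1)).card := by
  have hft0 : ft ≠ 0 := by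
    intro h
    have h2 : (f.reverse.comp (X + 1)).comp (X - 1) = 0 := by rw [← hft, h, zero_comp]
    rw [comp_assoc, add_comp, X_comp, one_comp, sub_add_cancel, comp_X] at h2
    exact hf (reverse_eq_zero.mp h2)
  have hmul : ∀ t : ℝ, 0 < t →
      ft.rootMultiplicity t = f.rootMultiplicity (1 / (t + 1)) := by
    intro t ht
    rw [hft]
    exact keyMul f hf t ht
  have hmaps : ∀ t : ℝ, 0 < t → (1 / (t + 1)) ∈ Set.Ioo (0:ℝ) 1 := by
    intro t ht
    constructor
    · positivity
    · rw [div_lt_one (by linarith)]; linarith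
  have hbij : Set.BijOn (fun t : ℝ => 1 / (t + 1)) (Set.Ioi 0) (Set.Ioo 0 1) := by
    refine ⟨fun t ht => hmaps t ht, ?_, ?_⟩
    · intro a ha b hb hab
      have ha1 : a + 1 ≠ 0 := by have := Set.mem_Ioi.mp ha; positivity
      have hb1 : b + 1 ≠ 0 := by have := Set.mem_Ioi.mp hb; positivity
      field_simp at hab
      linarith
    · intro x hx
      obtain ⟨hx0, hx1⟩ := hx
      refine ⟨1 / x - 1, ?_, ?_⟩
      · have : 1 < 1 / x := by rw [lt_div_iff₀ hx0]; linarith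
        simp only [Set.mem_Ioi]; linarith
      · show 1 / (1 / x - 1 + 1) = x
        rw [sub_add_cancel, one_div_one_div]
  have hinj : Function.Injective (fun t : ℝ => 1 / (t + 1)) := by
    intro a b hab
    simp only [one_div] at hab
    have := inv_injective hab
    linarith
  refine ⟨?_, hbij, hmul, ?_⟩
  · rw [hft, natDegree_comp]
    have : (X + 1 : Polynomial ℝ).natDegree = 1 := by
      rw [show (X + 1 : Polynomial ℝ) = X + C 1 by rw [C_1], natDegree_X_add_C]
    rw [this, mul_one]
    exact reverse_natDegree_le f
  · have hmap : (f.roots.filter (fun x : ℝ => 0 < x ∧ x < 1)) =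
        (ft.roots.filter (fun x : ℝ => 0 < x)).map (fun t : ℝ => 1 / (t + 1)) := by
      classical
      ext a
      by_cases ha : 0 < a ∧ a < 1
      · have ht0 : 0 < 1 / a - 1 := by
          have : 1 < 1 / a := by rw [lt_div_iff₀ ha.1]; linarith [ha.2]
          linarith
        have hφ : (fun t : ℝ => 1 / (t + 1)) (1 / a - 1) = a := by
          show 1 / (1 / a - 1 + 1) = a
          rw [sub_add_cancel, one_div_one_div]
        rw [Multiset.count_filter_of_pos (p := fun x : ℝ => 0 < x ∧ x < 1) ha, ← hφ,
          Multiset.count_map_eq_count' _ _ hinj,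
          Multiset.count_filter_of_pos (p := fun x : ℝ => 0 < x) ht0, count_roots, count_roots,
          hmul _ ht0]
      · rw [Multiset.count_filter_of_neg (p := fun x : ℝ => 0 < x ∧ x < 1) ha, eq_comm, Multiset.count_eq_zero]
        intro hmem
        obtain ⟨t, htmem, hta⟩ := Multiset.mem_map.mp hmem
        have ht : 0 < t := (Multiset.mem_filter.mp htmem).2
        exact ha (hta ▸ hmaps t ht)
    rw [hmap, Multiset.card_map]
end

section
/- Good primes for modular Gröbner basis computation: let F ⊂ ℤ[x_1,…,x_n] be a finite set of polynomials, < a global monomial order, and G ⊂ ℚ[x_1,…,x_n] the reduced Gröbner basis of the ideal generated by F over ℚ. Then for all but finitely many prime numbers p: every coefficient of every element of G has denominator not divisible by p, and the image of G under reduction modulo p is the reduced Gröbner basis w.r.t. < of the ideal of F_p[x_1,…,x_n] generated by the images of the elements of F modulo p. -/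
open MvPolynomial

open MvPolynomial in
/-- Coefficientwise reduction modulo `p` of a polynomial with rational coefficients
whose denominators are prime to `p`: each coefficient `a/b` is sent to
`(a mod p)·(b mod p)⁻¹`. -/
noncomputable def modpReduction (p : ℕ) {n : ℕ} (g : MvPolynomial (Fin n) ℚ) :
    MvPolynomial (Fin n) (ZMod p) :=
  ∑ t ∈ g.support,
    monomial t (((g.coeff t).num : ZMod p) * ((g.coeff t).den : ZMod p)⁻¹)


section Aux

open MvPolynomial

variable {p : ℕ} [Fact p.Prime]

noncomputable def chi (p : ℕ) (q : ℚ) : ZMod p := (q.num : ZMod p) * ((q.den : ℕ) : ZMod p)⁻¹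

lemma den_cast_ne {q : ℚ} (h : ¬ p ∣ q.den) : ((q.den : ℕ) : ZMod p) ≠ 0 := by
  simpa [ZMod.natCast_eq_zero_iff] using h

lemma chi_eq (q : ℚ) (A B : ℤ) (hB : ¬ (p:ℤ) ∣ B) (h : q * B = A) :
    ¬ p ∣ q.den ∧ chi p q = (A : ZMod p) * ((B : ZMod p))⁻¹ := by
  have hB0 : B ≠ 0 := by rintro rfl; exact hB (dvd_zero _)
  have key : q.num * B = A * q.den := by
    have h2 := h
    rw [← Rat.num_div_den q] at h2
    rw [div_mul_eq_mul_div, div_eq_iff (by exact_mod_cast q.den_nz)] at h2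
    exact_mod_cast h2
  have hdvd : (q.den : ℤ) ∣ B := by
    have h1 : (q.den : ℤ) ∣ q.num * B := ⟨A, by linarith [key]⟩
    have hcop : Int.gcd (q.den : ℤ) q.num = 1 := by
      simpa [Int.gcd, Nat.coprime_comm] using q.reduced
    exact Int.dvd_of_dvd_mul_right_of_gcd_one h1 hcop
  have hpden : ¬ p ∣ q.den := by
    intro hp
    exact hB (dvd_trans (Int.natCast_dvd_natCast.mpr hp) hdvd)
  refine ⟨hpden, ?_⟩
  have hd : ((q.den : ℕ) : ZMod p) ≠ 0 := den_cast_ne hpden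
  have hBz : ((B : ℤ) : ZMod p) ≠ 0 := by
    simpa [ZMod.intCast_zmod_eq_zero_iff_dvd] using hB
  have keyz : (q.num : ZMod p) * (B : ZMod p) = (A : ZMod p) * ((q.den : ℕ) : ZMod p) := by
    exact_mod_cast congrArg (Int.cast : ℤ → ZMod p) key
  unfold chi
  field_simp
  linear_combination keyz

lemma chi_def' {q : ℚ} : chi p q = (q.num : ZMod p) * ((q.den : ℕ) : ZMod p)⁻¹ := rfl

lemma qden_cast (q : ℚ) : ((q.den : ℤ) : ℚ) = (q.den : ℚ) := by push_cast; ring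


lemma mul_den_eq (q : ℚ) : q * (q.den : ℚ) = (q.num : ℚ) := by
  have h : (q.num : ℚ) / q.den * q.den = q.num :=
    div_mul_cancel₀ _ (by exact_mod_cast q.den_nz)
  calc q * (q.den : ℚ) = (q.num : ℚ) / q.den * q.den := by rw [Rat.num_div_den]
  _ = q.num := h

lemma chi_add {a b : ℚ} (ha : ¬ p ∣ a.den) (hb : ¬ p ∣ b.den) :
    ¬ p ∣ (a+b).den ∧ chi p (a+b) = chi p a + chi p b := by
  have hB : ¬ (p:ℤ) ∣ (a.den : ℤ) * (b.den : ℤ) := by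
    intro h
    rcases (Int.Prime.dvd_mul' (by exact_mod_cast (Fact.out : p.Prime)) h) with h | h <;>
      [exact ha (by exact_mod_cast h); exact hb (by exact_mod_cast h)]
  have h1 := mul_den_eq a
  have h2 := mul_den_eq b
  have hkey : (a+b) * (((a.den : ℤ) * (b.den : ℤ) : ℤ) : ℚ)
      = ((a.num * b.den + b.num * a.den : ℤ) : ℚ) := by
    push_cast
    linear_combination (b.den : ℚ) * h1 + (a.den : ℚ) * h2
  obtain ⟨hh1, hh2⟩ := chi_eq (a+b) _ _ hB hkey
  refine ⟨hh1, ?_⟩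
  rw [hh2, chi_def', chi_def']
  have hda : ((a.den : ℕ) : ZMod p) ≠ 0 := den_cast_ne ha
  have hdb : ((b.den : ℕ) : ZMod p) ≠ 0 := den_cast_ne hb
  push_cast
  field_simp

lemma chi_mul {a b : ℚ} (ha : ¬ p ∣ a.den) (hb : ¬ p ∣ b.den) :
    ¬ p ∣ (a*b).den ∧ chi p (a*b) = chi p a * chi p b := by
  have hB : ¬ (p:ℤ) ∣ (a.den : ℤ) * (b.den : ℤ) := by
    intro h
    rcases (Int.Prime.dvd_mul' (by exact_mod_cast (Fact.out : p.Prime)) h) with h | h <;>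
      [exact ha (by exact_mod_cast h); exact hb (by exact_mod_cast h)]
  have h1 := mul_den_eq a
  have h2 := mul_den_eq b
  have hkey : (a*b) * (((a.den : ℤ) * (b.den : ℤ) : ℤ) : ℚ)
      = ((a.num * b.num : ℤ) : ℚ) := by
    push_cast
    linear_combination (b * (b.den : ℚ)) * h1 + (a.num : ℚ) * h2
  obtain ⟨hh1, hh2⟩ := chi_eq (a*b) _ _ hB hkey
  refine ⟨hh1, ?_⟩
  rw [hh2, chi_def', chi_def']
  have hda : ((a.den : ℕ) : ZMod p) ≠ 0 := den_cast_ne ha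
  have hdb : ((b.den : ℕ) : ZMod p) ≠ 0 := den_cast_ne hb
  push_cast
  field_simp

@[simp] lemma chi_zero : chi p 0 = 0 := by simp [chi]

@[simp] lemma chi_intCast (z : ℤ) : chi p (z : ℚ) = (z : ZMod p) := by
  simp [chi, Rat.num_intCast, Rat.den_intCast]

@[simp] lemma chi_natCast (z : ℕ) : chi p (z : ℚ) = (z : ZMod p) := by
  have := chi_intCast (p := p) (z : ℤ)
  rw [Int.cast_natCast] at this
  exact_mod_cast this

lemma chi_one : chi p 1 = 1 := by
  simpa using chi_intCast (p := p) 1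

lemma not_dvd_one' : ¬ p ∣ 1 := by
  intro h
  exact (Nat.Prime.ne_one (Fact.out : p.Prime)) (Nat.dvd_one.mp h)

lemma den_int (z : ℤ) : ¬ p ∣ ((z : ℚ)).den := by
  rw [Rat.den_intCast]; exact not_dvd_one'

lemma chi_neg (a : ℚ) : chi p (-a) = - chi p a := by
  simp [chi, Rat.num_neg_eq_neg_num, Rat.den_neg_eq_den]

lemma chi_ne_zero_iff {q : ℚ} (h : ¬ p ∣ q.den) : chi p q ≠ 0 ↔ ¬ (p:ℤ) ∣ q.num := by
  unfold chi
  have hd := den_cast_ne (p := p) h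
  rw [mul_ne_zero_iff]
  simp [inv_ne_zero hd, ZMod.intCast_zmod_eq_zero_iff_dvd]

open MvPolynomial


/-- the coefficients of `f` are `p`-integral -/
def PIP (p : ℕ) {n : ℕ} (f : MvPolynomial (Fin n) ℚ) : Prop :=
  ∀ t, ¬ p ∣ (f.coeff t).den

variable {n : ℕ}

lemma coeff_modp (f : MvPolynomial (Fin n) ℚ) (t : Fin n →₀ ℕ) :
    (modpReduction p f).coeff t = chi p (f.coeff t) := by
  classical
  unfold modpReduction
  rw [show (∑ s ∈ f.support,
      monomial s (((f.coeff s).num : ZMod p) * ((f.coeff s).den : ZMod p)⁻¹))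
      = ∑ s ∈ f.support, monomial s (chi p (f.coeff s)) from rfl]
  rw [MvPolynomial.coeff_sum]
  simp only [MvPolynomial.coeff_monomial]
  rw [Finset.sum_ite_eq' f.support t (fun s => chi p (f.coeff s))]
  by_cases h : t ∈ f.support
  · simp [h]
  · simp only [h, if_false]
    rw [MvPolynomial.notMem_support_iff] at h
    simp [h]

lemma modp_zero : modpReduction p (0 : MvPolynomial (Fin n) ℚ) = 0 := by
  ext t; simp [coeff_modp]

lemma modp_eq_zero {f : MvPolynomial (Fin n) ℚ} (h : f = 0) : modpReduction p f = 0 := by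
  subst h; exact modp_zero

lemma PIP.zero : PIP p (0 : MvPolynomial (Fin n) ℚ) := by
  intro t; simp only [MvPolynomial.coeff_zero]
  simpa [Rat.den_ofNat] using (not_dvd_one' (p := p))

lemma PIP.add {f g : MvPolynomial (Fin n) ℚ} (hf : PIP p f) (hg : PIP p g) :
    PIP p (f + g) := by
  intro t
  rw [MvPolynomial.coeff_add]
  exact (chi_add (hf t) (hg t)).1

lemma modp_add {f g : MvPolynomial (Fin n) ℚ} (hf : PIP p f) (hg : PIP p g) :
    modpReduction p (f + g) = modpReduction p f + modpReduction p g := by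
  ext t
  rw [MvPolynomial.coeff_add, coeff_modp, MvPolynomial.coeff_add, coeff_modp, coeff_modp]
  exact (chi_add (hf t) (hg t)).2

lemma chi_sum {α : Type*} (s : Finset α) (F : α → ℚ) (h : ∀ a ∈ s, ¬ p ∣ (F a).den) :
    ¬ p ∣ (∑ a ∈ s, F a).den ∧ chi p (∑ a ∈ s, F a) = ∑ a ∈ s, chi p (F a) := by
  classical
  induction s using Finset.cons_induction with
  | empty => simpa [Rat.den_ofNat] using (not_dvd_one' (p := p))
  | cons a s ha ih =>
    obtain ⟨ih1, ih2⟩ := ih (fun b hb => h b (Finset.mem_cons_of_mem hb))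
    have ha' := h a (Finset.mem_cons_self a s)
    rw [Finset.sum_cons, Finset.sum_cons]
    obtain ⟨c1, c2⟩ := chi_add ha' ih1
    exact ⟨c1, by rw [c2, ih2]⟩

lemma PIP.mul {f g : MvPolynomial (Fin n) ℚ} (hf : PIP p f) (hg : PIP p g) :
    PIP p (f * g) := by
  classical
  intro t
  rw [MvPolynomial.coeff_mul]
  exact (chi_sum _ _ (fun a _ => (chi_mul (hf a.1) (hg a.2)).1)).1

lemma modp_mul {f g : MvPolynomial (Fin n) ℚ} (hf : PIP p f) (hg : PIP p g) :
    modpReduction p (f * g) = modpReduction p f * modpReduction p g := by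
  classical
  ext t
  rw [coeff_modp, MvPolynomial.coeff_mul, MvPolynomial.coeff_mul]
  rw [(chi_sum _ _ (fun a _ => (chi_mul (hf a.1) (hg a.2)).1)).2]
  exact Finset.sum_congr rfl (fun a _ => by
    rw [(chi_mul (hf a.1) (hg a.2)).2, coeff_modp, coeff_modp])

lemma PIP.neg {f : MvPolynomial (Fin n) ℚ} (hf : PIP p f) : PIP p (-f) := by
  intro t
  rw [MvPolynomial.coeff_neg]
  rw [Rat.den_neg_eq_den]
  exact hf t

lemma modp_neg {f : MvPolynomial (Fin n) ℚ} : modpReduction p (-f) = - modpReduction p f := by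
  ext t
  rw [coeff_modp, MvPolynomial.coeff_neg, MvPolynomial.coeff_neg, coeff_modp, chi_neg]

lemma PIP.sub {f g : MvPolynomial (Fin n) ℚ} (hf : PIP p f) (hg : PIP p g) :
    PIP p (f - g) := by
  rw [sub_eq_add_neg]; exact hf.add hg.neg

lemma modp_sub {f g : MvPolynomial (Fin n) ℚ} (hf : PIP p f) (hg : PIP p g) :
    modpReduction p (f - g) = modpReduction p f - modpReduction p g := by
  rw [sub_eq_add_neg, modp_add hf hg.neg, modp_neg, sub_eq_add_neg]

lemma PIP.monomial {t : Fin n →₀ ℕ} {c : ℚ} (hc : ¬ p ∣ c.den) :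
    PIP p (MvPolynomial.monomial t c) := by
  classical
  intro s
  rw [MvPolynomial.coeff_monomial]
  split_ifs
  · exact hc
  · simpa [Rat.den_ofNat] using (not_dvd_one' (p := p))

lemma modp_monomial (t : Fin n →₀ ℕ) (c : ℚ) :
    modpReduction p (MvPolynomial.monomial t c) = MvPolynomial.monomial t (chi p c) := by
  classical
  ext s
  rw [coeff_modp, MvPolynomial.coeff_monomial, MvPolynomial.coeff_monomial]
  split_ifs <;> simp

lemma PIP.map (f : MvPolynomial (Fin n) ℤ) : PIP p (MvPolynomial.map (Int.castRingHom ℚ) f) := by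
  intro t
  rw [MvPolynomial.coeff_map]
  exact den_int _

lemma modp_map (f : MvPolynomial (Fin n) ℤ) :
    modpReduction p (MvPolynomial.map (Int.castRingHom ℚ) f)
      = MvPolynomial.map (Int.castRingHom (ZMod p)) f := by
  ext t
  rw [coeff_modp, MvPolynomial.coeff_map, MvPolynomial.coeff_map]
  simp

lemma PIP.finset_sum {α : Type*} (s : Finset α) (F : α → MvPolynomial (Fin n) ℚ)
    (h : ∀ a ∈ s, PIP p (F a)) :
    PIP p (∑ a ∈ s, F a) ∧
      modpReduction p (∑ a ∈ s, F a) = ∑ a ∈ s, modpReduction p (F a) := by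
  classical
  induction s using Finset.cons_induction with
  | empty => exact ⟨PIP.zero, by simp [modp_zero]⟩
  | cons a s ha ih =>
    obtain ⟨ih1, ih2⟩ := ih (fun b hb => h b (Finset.mem_cons_of_mem hb))
    have ha' := h a (Finset.mem_cons_self a s)
    rw [Finset.sum_cons, Finset.sum_cons]
    exact ⟨ha'.add ih1, by rw [modp_add ha' ih1, ih2]⟩

noncomputable def liftZ (q : MvPolynomial (Fin n) (ZMod p)) : MvPolynomial (Fin n) ℚ :=
  ∑ t ∈ q.support, MvPolynomial.monomial t (((q.coeff t).val : ℕ) : ℚ)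

lemma coeff_liftZ (q : MvPolynomial (Fin n) (ZMod p)) (t : Fin n →₀ ℕ) :
    (liftZ q).coeff t = (((q.coeff t).val : ℕ) : ℚ) := by
  classical
  unfold liftZ
  rw [MvPolynomial.coeff_sum]
  simp only [MvPolynomial.coeff_monomial]
  rw [Finset.sum_ite_eq' q.support t]
  by_cases h : t ∈ q.support
  · simp [h]
  · simp only [h, if_false]
    rw [MvPolynomial.notMem_support_iff] at h
    simp [h]

lemma PIP.liftZ (q : MvPolynomial (Fin n) (ZMod p)) : PIP p (liftZ q) := by
  intro t
  rw [coeff_liftZ]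
  rw [Rat.den_natCast]
  exact not_dvd_one'

lemma modp_liftZ (q : MvPolynomial (Fin n) (ZMod p)) : modpReduction p (liftZ q) = q := by
  haveI : NeZero p := ⟨(Fact.out : p.Prime).ne_zero⟩
  ext t
  rw [coeff_modp, coeff_liftZ, chi_natCast]
  exact ZMod.natCast_rightInverse _

namespace MonomialOrder

variable {σ R : Type*} [CommSemiring R] (m : MonomialOrder σ)

variable {m}

lemma toSyn_leadMonomial (f : MvPolynomial σ R) :
    m.toSyn (m.leadMonomial f) = f.support.sup (fun t => m.toSyn t) := by
  unfold leadMonomial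
  exact m.toSyn.apply_symm_apply _

lemma leadMonomial_mem_support {f : MvPolynomial σ R} (hf : f ≠ 0) :
    m.leadMonomial f ∈ f.support := by
  have hne : f.support.Nonempty := MvPolynomial.support_nonempty.mpr hf
  obtain ⟨t, ht, hts⟩ := Finset.exists_mem_eq_sup f.support hne (fun t => m.toSyn t)
  have : m.leadMonomial f = t := by
    unfold leadMonomial
    rw [hts]
    exact m.toSyn.symm_apply_apply t
  rwa [this]

lemma leadCoeff_ne_zero {f : MvPolynomial σ R} (hf : f ≠ 0) : m.leadCoeff f ≠ 0 := by
  have := leadMonomial_mem_support (m := m) hf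
  rwa [MvPolynomial.mem_support_iff] at this

lemma le_leadMonomial {f : MvPolynomial σ R} {t : σ →₀ ℕ} (ht : t ∈ f.support) :
    m.toSyn t ≤ m.toSyn (m.leadMonomial f) := by
  rw [toSyn_leadMonomial]
  exact Finset.le_sup ht

lemma leadMonomial_eq {f : MvPolynomial σ R} {μ : σ →₀ ℕ} (hμ : f.coeff μ ≠ 0)
    (h : ∀ t ∈ f.support, m.toSyn t ≤ m.toSyn μ) : m.leadMonomial f = μ := by
  apply m.toSyn.injective
  rw [toSyn_leadMonomial]
  apply le_antisymm
  · exact Finset.sup_le h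
  · exact Finset.le_sup (MvPolynomial.mem_support_iff.mpr hμ)

/-- key facts about `monomial ν c * g` -/
lemma mul_monomial_lead {ν : σ →₀ ℕ} {c : R} {g : MvPolynomial σ R}
    (hc : c * m.leadCoeff g ≠ 0) (hg : g ≠ 0) :
    m.leadMonomial ((monomial ν c) * g) = ν + m.leadMonomial g ∧
      m.leadCoeff ((monomial ν c) * g) = c * m.leadCoeff g := by
  classical
  have hcoeff : ∀ τ, ((monomial ν c) * g).coeff τ =
      if ν ≤ τ then c * g.coeff (τ - ν) else 0 := fun τ =>
    MvPolynomial.coeff_monomial_mul' τ ν c g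
  have h1 : ((monomial ν c) * g).coeff (ν + m.leadMonomial g) = c * m.leadCoeff g := by
    rw [hcoeff]
    rw [if_pos le_self_add]
    rw [add_tsub_cancel_left]
    rfl
  have h2 : ∀ t ∈ ((monomial ν c) * g).support,
      m.toSyn t ≤ m.toSyn (ν + m.leadMonomial g) := by
    intro t ht
    rw [MvPolynomial.mem_support_iff, hcoeff] at ht
    by_cases hle : ν ≤ t
    · rw [if_pos hle] at ht
      have ht' : g.coeff (t - ν) ≠ 0 := fun h => ht (by rw [h, mul_zero])
      have := le_leadMonomial (m := m) (MvPolynomial.mem_support_iff.mpr ht')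
      calc m.toSyn t = m.toSyn (ν + (t - ν)) := by
            congr 1
            rw [add_comm]
            exact (tsub_add_cancel_of_le hle).symm
      _ = m.toSyn ν + m.toSyn (t - ν) := by rw [map_add]
      _ ≤ m.toSyn ν + m.toSyn (m.leadMonomial g) := by exact add_le_add le_rfl this
      _ = m.toSyn (ν + m.leadMonomial g) := by rw [map_add]
    · rw [if_neg hle] at ht
      exact absurd rfl ht
  have hlm : m.leadMonomial ((monomial ν c) * g) = ν + m.leadMonomial g :=
    leadMonomial_eq (by rw [h1]; exact hc) h2
  refine ⟨hlm, ?_⟩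
  unfold leadCoeff
  rw [hlm, h1]
  rfl

end MonomialOrder

section MonIdeal

open MvPolynomial

variable {σ : Type*} {R : Type*} [CommRing R]

lemma monomial_mem_span_iff {S : Set (σ →₀ ℕ)} {μ : σ →₀ ℕ} {c : R} (hc : c ≠ 0)
    (h : (monomial μ c : MvPolynomial σ R) ∈
      Ideal.span ((fun ν => (monomial ν (1 : R) : MvPolynomial σ R)) '' S)) :
    ∃ ν ∈ S, ν ≤ μ := by
  classical
  by_contra hcon
  push_neg at hcon
  rw [Ideal.span, Submodule.mem_span_set] at h
  obtain ⟨d, hsupp, hsum⟩ := h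
  apply hc
  have h0 := congrArg (MvPolynomial.coeff μ) hsum
  rw [MvPolynomial.coeff_monomial, if_pos rfl] at h0
  rw [← h0, Finsupp.sum, MvPolynomial.coeff_sum]
  apply Finset.sum_eq_zero
  intro x hx
  obtain ⟨ν, hνS, rfl⟩ := hsupp hx
  rw [smul_eq_mul, MvPolynomial.coeff_mul_monomial']
  rw [if_neg (hcon ν hνS)]

end MonIdeal

section SpanLemmas

open MvPolynomial

variable {σ : Type*} {R : Type*} [CommRing R]

lemma monomial_dvd_mem_span {S : Set (σ →₀ ℕ)} {ν μ : σ →₀ ℕ} (c : R)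
    (hν : ν ∈ S) (hle : ν ≤ μ) :
    (monomial μ c : MvPolynomial σ R) ∈
      Ideal.span ((fun ν => (monomial ν (1 : R) : MvPolynomial σ R)) '' S) := by
  have heq : (monomial μ c : MvPolynomial σ R) = monomial (μ - ν) c * monomial ν 1 := by
    rw [MvPolynomial.monomial_mul, mul_one, tsub_add_cancel_of_le hle]
  rw [heq]
  exact Ideal.mul_mem_left _ _ (Ideal.subset_span ⟨ν, hν, rfl⟩)

variable [Nontrivial R] {m : MonomialOrder σ}

lemma ne_zero_of_monic {g : MvPolynomial σ R} (h : m.leadCoeff g = 1) : g ≠ 0 := by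
  intro h0
  rw [h0] at h
  simp [MonomialOrder.leadCoeff] at h

lemma leadTerm_of_monic {g : MvPolynomial σ R} (h : m.leadCoeff g = 1) :
    m.leadTerm g = monomial (m.leadMonomial g) (1 : R) := by
  unfold MonomialOrder.leadTerm
  rw [h]

lemma leadIdeal_monic_eq {G : Set (MvPolynomial σ R)} (h1 : ∀ g ∈ G, m.leadCoeff g = 1) :
    m.leadIdeal G
      = Ideal.span ((fun ν => (monomial ν (1 : R) : MvPolynomial σ R))
          '' (m.leadMonomial '' G)) := by
  unfold MonomialOrder.leadIdeal
  congr 1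
  have hset : {f | f ∈ G ∧ f ≠ 0} = G :=
    Set.ext fun f => ⟨fun h => h.1, fun h => ⟨h, ne_zero_of_monic (h1 f h)⟩⟩
  rw [hset, Set.image_image]
  exact Set.image_congr (fun g hg => leadTerm_of_monic (h1 g hg))

end SpanLemmas

section Good

open MvPolynomial

variable {p : ℕ} [Fact p.Prime] {n : ℕ} {m : MonomialOrder (Fin n)}

lemma modp_support_eq {g : MvPolynomial (Fin n) ℚ} (hP : PIP p g)
    (hnum : ∀ t ∈ g.support, ¬ (p:ℤ) ∣ (g.coeff t).num) :
    (modpReduction p g).support = g.support := by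
  ext t
  rw [MvPolynomial.mem_support_iff, MvPolynomial.mem_support_iff, coeff_modp]
  constructor
  · intro h hc
    exact h (by rw [hc, chi_zero])
  · intro h
    exact (chi_ne_zero_iff (hP t)).mpr (hnum t (MvPolynomial.mem_support_iff.mpr h))

lemma good_g {g : MvPolynomial (Fin n) ℚ} (hg : g ≠ 0)
    (hsupp : (modpReduction p g).support = g.support) :
    modpReduction p g ≠ 0 ∧ m.leadMonomial (modpReduction p g) = m.leadMonomial g ∧
      m.leadCoeff (modpReduction p g) = chi p (m.leadCoeff g) := by
  have hne : modpReduction p g ≠ 0 := by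
    rw [← MvPolynomial.support_nonempty, hsupp, MvPolynomial.support_nonempty]
    exact hg
  have hlmem : m.leadMonomial g ∈ (modpReduction p g).support := by
    rw [hsupp]
    exact MonomialOrder.leadMonomial_mem_support hg
  have hlm : m.leadMonomial (modpReduction p g) = m.leadMonomial g := by
    apply MonomialOrder.leadMonomial_eq
    · exact MvPolynomial.mem_support_iff.mp hlmem
    · intro t ht
      rw [hsupp] at ht
      exact MonomialOrder.le_leadMonomial ht
  refine ⟨hne, hlm, ?_⟩
  unfold MonomialOrder.leadCoeff
  rw [hlm, coeff_modp]

lemma div_key {F : Finset (MvPolynomial (Fin n) ℤ)} {G : Set (MvPolynomial (Fin n) ℚ)}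
    (hlead : m.leadIdeal
        ((Ideal.span ((MvPolynomial.map (Int.castRingHom ℚ)) ''
          (F : Set (MvPolynomial (Fin n) ℤ)))) : Set (MvPolynomial (Fin n) ℚ))
      = Ideal.span ((fun ν => (monomial ν (1 : ℚ) : MvPolynomial (Fin n) ℚ))
          '' (m.leadMonomial '' G)))
    (hGsub : G ⊆ (Ideal.span ((MvPolynomial.map (Int.castRingHom ℚ)) ''
          (F : Set (MvPolynomial (Fin n) ℤ))) : Ideal (MvPolynomial (Fin n) ℚ)))
    (hmonic : ∀ g ∈ G, m.leadCoeff g = 1) (hPIPG : ∀ g ∈ G, PIP p g)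
    (hsuppG : ∀ g ∈ G, (modpReduction p g).support = g.support) :
    ∀ f : MvPolynomial (Fin n) ℚ,
      f ∈ Ideal.span ((MvPolynomial.map (Int.castRingHom ℚ)) ''
          (F : Set (MvPolynomial (Fin n) ℤ))) →
      PIP p f → modpReduction p f ≠ 0 →
      m.leadTerm (modpReduction p f) ∈ m.leadIdeal (modpReduction p '' G) := by
  classical
  set I : Ideal (MvPolynomial (Fin n) ℚ) :=
    Ideal.span ((MvPolynomial.map (Int.castRingHom ℚ)) '' (F : Set (MvPolynomial (Fin n) ℤ)))
    with hI
  set P : m.syn → Prop := fun s => ∀ f : MvPolynomial (Fin n) ℚ,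
      m.toSyn (m.leadMonomial f) = s → f ∈ I → PIP p f → modpReduction p f ≠ 0 →
      m.leadTerm (modpReduction p f) ∈ m.leadIdeal (modpReduction p '' G) with hPdef
  have main : ∀ s, P s := by
    intro s
    apply m.wf.wf.induction (C := P) s
    intro x IH
    intro f hfs hfI hfP hf0
    have hfne : f ≠ 0 := fun h => hf0 (modp_eq_zero h)
    have hc : m.leadCoeff f ≠ 0 := MonomialOrder.leadCoeff_ne_zero hfne
    have hlt : m.leadTerm f ∈ m.leadIdeal (I : Set (MvPolynomial (Fin n) ℚ)) :=
      Ideal.subset_span ⟨f, ⟨hfI, hfne⟩, rfl⟩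
    rw [hlead] at hlt
    obtain ⟨ν', hν'G, hle⟩ := monomial_mem_span_iff hc hlt
    obtain ⟨g, hgG, rfl⟩ := hν'G
    have hgmonic := hmonic g hgG
    have hgne : g ≠ 0 := ne_zero_of_monic hgmonic
    set μ := m.leadMonomial f with hμ
    set c := m.leadCoeff f with hcdef
    set ν := μ - m.leadMonomial g with hν
    have hνadd : ν + m.leadMonomial g = μ := tsub_add_cancel_of_le hle
    set h : MvPolynomial (Fin n) ℚ := (monomial ν c) * g with hh
    have hcmul : c * m.leadCoeff g ≠ 0 := by rw [hgmonic, mul_one]; exact hc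
    obtain ⟨hlmh, hlch⟩ := MonomialOrder.mul_monomial_lead (m := m) hcmul hgne
    rw [hνadd] at hlmh
    rw [hgmonic, mul_one] at hlch
    have hcden : ¬ p ∣ c.den := hfP μ
    have hPIPmon : PIP p (monomial ν c) := PIP.monomial hcden
    have hPIPh : PIP p h := hPIPmon.mul (hPIPG g hgG)
    have hmodph : modpReduction p h = monomial ν (chi p c) * modpReduction p g := by
      rw [hh, modp_mul hPIPmon (hPIPG g hgG), modp_monomial]
    have hhI : h ∈ I := Ideal.mul_mem_left _ _ (hGsub hgG)
    have hPIPsub : PIP p (f - h) := hfP.sub hPIPh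
    have hmodpsplit : modpReduction p f = modpReduction p (f - h) + modpReduction p h := by
      have : f = (f - h) + h := by ring
      calc modpReduction p f = modpReduction p ((f - h) + h) := by rw [← this]
      _ = _ := modp_add hPIPsub hPIPh
    obtain ⟨hmodpgne, hlmmodpg, hlcmodpg⟩ := good_g (m := m) hgne (hsuppG g hgG)
    by_cases hchi : chi p c = 0
    · -- the subtracted term vanishes mod p; recurse
      have hmodph0 : modpReduction p h = 0 := by
        rw [hmodph, hchi]
        simp
      have hmodpeq : modpReduction p f = modpReduction p (f - h) := by
        rw [hmodpsplit, hmodph0, add_zero]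
      have hsubne : modpReduction p (f - h) ≠ 0 := by rw [← hmodpeq]; exact hf0
      have hfhne : f - h ≠ 0 := fun h0 => hsubne (modp_eq_zero h0)
      -- all monomials of f - h are strictly smaller than μ
      have hstrict : ∀ t ∈ (f - h).support, m.toSyn t < m.toSyn μ := by
        intro t ht
        have htne : (f - h).coeff t ≠ 0 := MvPolynomial.mem_support_iff.mp ht
        have htμ : t ≠ μ := by
          intro h0
          apply htne
          rw [h0, MvPolynomial.coeff_sub]
          have : h.coeff μ = c := by
            have := hlch
            unfold MonomialOrder.leadCoeff at this
            rwa [hlmh] at this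
          rw [this]
          rw [hcdef]
          unfold MonomialOrder.leadCoeff
          rw [hμ]
          ring
        have hle' : m.toSyn t ≤ m.toSyn μ := by
          rw [MvPolynomial.coeff_sub] at htne
          rcases sub_ne_zero.mp (htne) |>.lt_or_gt with _ | _
          all_goals {
            by_cases hcf : f.coeff t ≠ 0
            · exact MonomialOrder.le_leadMonomial (MvPolynomial.mem_support_iff.mpr hcf)
            · push_neg at hcf
              have hch2 : h.coeff t ≠ 0 := by
                intro h0
                apply htne
                rw [hcf, h0]
                ring
              have := MonomialOrder.le_leadMonomial (m := m)
                (MvPolynomial.mem_support_iff.mpr hch2)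
              rwa [hlmh] at this }
        exact lt_of_le_of_ne hle' (fun hEq => htμ (m.toSyn.injective hEq))
      have hlmlt : m.toSyn (m.leadMonomial (f - h)) < x := by
        rw [← hfs]
        exact hstrict _ (MonomialOrder.leadMonomial_mem_support hfhne)
      have := IH _ hlmlt (f - h) rfl (I.sub_mem hfI hhI) hPIPsub hsubne
      rwa [← hmodpeq] at this
    · -- the lead term survives mod p
      have hsupmodp : ∀ t ∈ (modpReduction p f).support, m.toSyn t ≤ m.toSyn μ := by
        intro t ht
        rw [MvPolynomial.mem_support_iff, coeff_modp] at ht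
        have : f.coeff t ≠ 0 := fun h0 => ht (by rw [h0, chi_zero])
        exact MonomialOrder.le_leadMonomial (MvPolynomial.mem_support_iff.mpr this)
      have hcoeffμ : (modpReduction p f).coeff μ = chi p c := by rw [coeff_modp]; rfl
      have hlmf : m.leadMonomial (modpReduction p f) = μ :=
        MonomialOrder.leadMonomial_eq (by rw [hcoeffμ]; exact hchi) hsupmodp
      have hltf : m.leadTerm (modpReduction p f) = monomial μ (chi p c) := by
        unfold MonomialOrder.leadTerm MonomialOrder.leadCoeff
        rw [hlmf, hcoeffμ]
      have hltg : m.leadTerm (modpReduction p g) = monomial (m.leadMonomial g) 1 := by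
        unfold MonomialOrder.leadTerm
        rw [hlmmodpg, hlcmodpg, hgmonic, chi_one]
      have hmem : m.leadTerm (modpReduction p g) ∈ m.leadIdeal (modpReduction p '' G) :=
        Ideal.subset_span ⟨modpReduction p g, ⟨⟨g, hgG, rfl⟩, hmodpgne⟩, rfl⟩
      rw [hltf]
      have heq2 : (monomial μ (chi p c) : MvPolynomial (Fin n) (ZMod p))
          = monomial ν (chi p c) * monomial (m.leadMonomial g) 1 := by
        rw [MvPolynomial.monomial_mul, mul_one, hνadd]
      rw [heq2, ← hltg]
      exact Ideal.mul_mem_left _ _ hmem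
  intro f hfI hfP hf0
  exact main _ f rfl hfI hfP hf0

end Good

section LiftCert

open MvPolynomial

variable {p : ℕ} [Fact p.Prime] {n : ℕ}

lemma lift_mem {F : Finset (MvPolynomial (Fin n) ℤ)} (f : MvPolynomial (Fin n) (ZMod p))
    (hf : f ∈ Ideal.span ((MvPolynomial.map (Int.castRingHom (ZMod p))) ''
      (F : Set (MvPolynomial (Fin n) ℤ)))) :
    ∃ ft : MvPolynomial (Fin n) ℚ,
      ft ∈ Ideal.span ((MvPolynomial.map (Int.castRingHom ℚ)) ''
        (F : Set (MvPolynomial (Fin n) ℤ))) ∧ PIP p ft ∧ modpReduction p ft = f := by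
  classical
  rw [Ideal.span, Submodule.mem_span_set] at hf
  obtain ⟨d, hdsupp, hdsum⟩ := hf
  have hx : ∀ mi : {x // x ∈ d.support}, ∃ u : MvPolynomial (Fin n) ℤ,
      u ∈ F ∧ MvPolynomial.map (Int.castRingHom (ZMod p)) u = mi.1 := by
    intro mi
    have := hdsupp mi.2
    rwa [Set.mem_image] at this
  choose u hu1 hu2 using hx
  refine ⟨∑ mi ∈ d.support.attach,
    liftZ (d mi.1) * MvPolynomial.map (Int.castRingHom ℚ) (u mi), ?_, ?_, ?_⟩
  · apply Ideal.sum_mem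
    intro mi _
    exact Ideal.mul_mem_left _ _ (Ideal.subset_span ⟨u mi, hu1 mi, rfl⟩)
  · exact (PIP.finset_sum _ _ (fun mi _ => (PIP.liftZ _).mul (PIP.map _))).1
  · rw [(PIP.finset_sum _ _ (fun mi _ => (PIP.liftZ _).mul (PIP.map _))).2]
    have : ∀ mi ∈ d.support.attach,
        modpReduction p (liftZ (d mi.1) * MvPolynomial.map (Int.castRingHom ℚ) (u mi))
          = d mi.1 * mi.1 := by
      intro mi _
      rw [modp_mul (PIP.liftZ _) (PIP.map _), modp_liftZ, modp_map, hu2]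
    rw [Finset.sum_congr rfl this]
    rw [Finset.sum_attach d.support (fun m => d m * m)]
    rw [Finsupp.sum] at hdsum
    simpa only [smul_eq_mul] using hdsum

lemma modp_mem_span {F : Finset (MvPolynomial (Fin n) ℤ)} {g : MvPolynomial (Fin n) ℚ}
    (c : MvPolynomial (Fin n) ℚ →₀ MvPolynomial (Fin n) ℚ)
    (hcs : ↑c.support ⊆ (MvPolynomial.map (Int.castRingHom ℚ)) ''
      (F : Set (MvPolynomial (Fin n) ℤ)))
    (hsum : (c.sum fun mi r => r • mi) = g)
    (hPIPc : ∀ mi ∈ c.support, PIP p (c mi)) :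
    modpReduction p g ∈ Ideal.span ((MvPolynomial.map (Int.castRingHom (ZMod p))) ''
      (F : Set (MvPolynomial (Fin n) ℤ))) := by
  classical
  have hx : ∀ mi : {x // x ∈ c.support}, ∃ u : MvPolynomial (Fin n) ℤ,
      u ∈ F ∧ MvPolynomial.map (Int.castRingHom ℚ) u = mi.1 := by
    intro mi
    have := hcs mi.2
    rwa [Set.mem_image] at this
  choose u hu1 hu2 using hx
  have hPIPterm : ∀ mi : {x // x ∈ c.support}, PIP p (c mi.1 * mi.1) := by
    intro mi
    have h := (hPIPc mi.1 mi.2).mul (PIP.map (p := p) (u mi))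
    rwa [hu2 mi] at h
  have hgsum : g = ∑ mi ∈ c.support.attach, c mi.1 * mi.1 := by
    rw [Finset.sum_attach c.support (fun m => c m * m)]
    rw [← hsum, Finsupp.sum]
    simp only [smul_eq_mul]
  rw [hgsum, (PIP.finset_sum _ _ (fun mi _ => hPIPterm mi)).2]
  apply Ideal.sum_mem
  intro mi _
  have h2 := modp_mul (hPIPc mi.1 mi.2) (PIP.map (p := p) (u mi))
  rw [modp_map] at h2
  rw [hu2 mi] at h2
  rw [h2]
  exact Ideal.mul_mem_left _ _ (Ideal.subset_span ⟨u mi, hu1 mi, rfl⟩)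

end LiftCert


end Aux

/-- **good primes for modular Gröbner basis computations.** Let
`F ⊂ ℤ[x_1,…,x_n]` be finite, `m` a global monomial order and `G` the reduced Gröbner
basis over `ℚ` of the ideal generated by `F`. Then for all but finitely many primes `p`:
no denominator of a coefficient of an element of `G` is divisible by `p`, and the
coefficientwise reduction of `G` modulo `p` is the reduced Gröbner basis w.r.t. `m` of
the ideal of `F_p[x_1,…,x_n]` generated by the reductions modulo `p` of the elements
of `F`. -/
theorem good_primes_cofinite
    {n : ℕ} (m : MonomialOrder (Fin n)) (F : Finset (MvPolynomial (Fin n) ℤ))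
    (G : Set (MvPolynomial (Fin n) ℚ))
    (hG : m.IsReducedGroebnerBasis
      (Ideal.span ((MvPolynomial.map (Int.castRingHom ℚ)) '' (F : Set (MvPolynomial (Fin n) ℤ))))
      G) :
    {p : ℕ | p.Prime ∧ ¬ (
      (∀ g ∈ G, ∀ t : Fin n →₀ ℕ, ¬ (p ∣ (g.coeff t).den)) ∧
      m.IsReducedGroebnerBasis
        (Ideal.span ((MvPolynomial.map (Int.castRingHom (ZMod p))) ''
          (F : Set (MvPolynomial (Fin n) ℤ))))
        (modpReduction p '' G))}.Finite := by
  classical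
  obtain ⟨⟨hfin, hsub, hli⟩, hmonic, hred⟩ := hG
  have hGne : ∀ g ∈ G, g ≠ 0 := fun g hg => ne_zero_of_monic (hmonic g hg)
  have hcert : ∀ g ∈ G, ∃ c : MvPolynomial (Fin n) ℚ →₀ MvPolynomial (Fin n) ℚ,
      ↑c.support ⊆ (MvPolynomial.map (Int.castRingHom ℚ)) ''
        (F : Set (MvPolynomial (Fin n) ℤ)) ∧ (c.sum fun mi r => r • mi) = g := by
    intro g hg
    have h := hsub hg
    rw [SetLike.mem_coe, Ideal.span, Submodule.mem_span_set] at h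
    exact h
  choose! cert hcert1 hcert2 using hcert
  set GF := hfin.toFinset with hGF
  set Q1 : Finset ℚ := GF.biUnion (fun g => g.support.image (fun t => g.coeff t)) with hQ1
  set Q2 : Finset ℚ := GF.biUnion (fun g => (cert g).support.biUnion
      (fun mi => ((cert g) mi).support.image (fun t => ((cert g) mi).coeff t))) with hQ2
  set N : ℕ := (∏ q ∈ Q1 ∪ Q2, q.den) * (∏ q ∈ Q1, q.num.natAbs) with hN
  have hNpos : 0 < N := by
    rw [hN]
    apply Nat.mul_pos
    · apply Finset.prod_pos
      intro q _
      exact Nat.pos_of_ne_zero q.den_nz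
    · apply Finset.prod_pos
      intro q hq
      rw [hQ1] at hq
      obtain ⟨g, hgGF, hq⟩ := Finset.mem_biUnion.mp hq
      obtain ⟨t, ht, rfl⟩ := Finset.mem_image.mp hq
      exact Int.natAbs_pos.mpr (Rat.num_ne_zero.mpr (MvPolynomial.mem_support_iff.mp ht))
  have hdvdden : ∀ q ∈ Q1 ∪ Q2, q.den ∣ N :=
    fun q hq => Dvd.dvd.mul_right (Finset.dvd_prod_of_mem _ hq) _
  have hdvdnum : ∀ q ∈ Q1, q.num.natAbs ∣ N :=
    fun q hq => Dvd.dvd.mul_left (Finset.dvd_prod_of_mem _ hq) _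
  have main : ∀ p : ℕ, p.Prime → ¬ p ∣ N →
      ((∀ g ∈ G, ∀ t : Fin n →₀ ℕ, ¬ (p ∣ (g.coeff t).den)) ∧
      m.IsReducedGroebnerBasis
        (Ideal.span ((MvPolynomial.map (Int.castRingHom (ZMod p))) ''
          (F : Set (MvPolynomial (Fin n) ℤ))))
        (modpReduction p '' G)) := by
    intro p hpp hpN
    haveI : Fact p.Prime := ⟨hpp⟩
    have hPIPG : ∀ g ∈ G, PIP p g := by
      intro g hg t
      by_cases ht : t ∈ g.support
      · have hq : g.coeff t ∈ Q1 := by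
          rw [hQ1]
          exact Finset.mem_biUnion.mpr ⟨g, hfin.mem_toFinset.mpr hg,
            Finset.mem_image_of_mem _ ht⟩
        exact fun hd => hpN (dvd_trans hd (hdvdden _ (Finset.mem_union_left _ hq)))
      · rw [MvPolynomial.notMem_support_iff] at ht
        rw [ht]
        simpa [Rat.den_ofNat] using (not_dvd_one' (p := p))
    have hnumG : ∀ g ∈ G, ∀ t ∈ g.support, ¬ (p:ℤ) ∣ (g.coeff t).num := by
      intro g hg t ht hd
      rw [Int.natCast_dvd] at hd
      have hq : g.coeff t ∈ Q1 := by
        rw [hQ1]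
        exact Finset.mem_biUnion.mpr ⟨g, hfin.mem_toFinset.mpr hg,
          Finset.mem_image_of_mem _ ht⟩
      exact hpN (dvd_trans hd (hdvdnum _ hq))
    have hsuppG : ∀ g ∈ G, (modpReduction p g).support = g.support :=
      fun g hg => modp_support_eq (hPIPG g hg) (hnumG g hg)
    have hPIPcert : ∀ g ∈ G, ∀ mi ∈ (cert g).support, PIP p ((cert g) mi) := by
      intro g hg mi hmi t
      by_cases ht : t ∈ ((cert g) mi).support
      · have hq : ((cert g) mi).coeff t ∈ Q2 := by
          rw [hQ2]
          exact Finset.mem_biUnion.mpr ⟨g, hfin.mem_toFinset.mpr hg,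
            Finset.mem_biUnion.mpr ⟨mi, hmi, Finset.mem_image_of_mem _ ht⟩⟩
        exact fun hd => hpN (dvd_trans hd (hdvdden _ (Finset.mem_union_right _ hq)))
      · rw [MvPolynomial.notMem_support_iff] at ht
        rw [ht]
        simpa [Rat.den_ofNat] using (not_dvd_one' (p := p))
    have hmodsub : ∀ gq ∈ modpReduction p '' G,
        gq ∈ Ideal.span ((MvPolynomial.map (Int.castRingHom (ZMod p))) ''
          (F : Set (MvPolynomial (Fin n) ℤ))) := by
      rintro _ ⟨g, hg, rfl⟩
      exact modp_mem_span (cert g) (hcert1 g hg) (hcert2 g hg) (hPIPcert g hg)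
    have hgoodG := fun g (hg : g ∈ G) => good_g (m := m) (hGne g hg) (hsuppG g hg)
    have hleadTermG : ∀ g ∈ G, m.leadTerm (modpReduction p g)
        = MvPolynomial.monomial (m.leadMonomial g) (1 : ZMod p) := by
      intro g hg
      unfold MonomialOrder.leadTerm
      rw [(hgoodG g hg).2.1, (hgoodG g hg).2.2, hmonic g hg, chi_one]
    have hlead' : m.leadIdeal
        ((Ideal.span ((MvPolynomial.map (Int.castRingHom ℚ)) ''
          (F : Set (MvPolynomial (Fin n) ℤ)))) : Set (MvPolynomial (Fin n) ℚ))
        = Ideal.span ((fun ν => (MvPolynomial.monomial ν (1 : ℚ) : MvPolynomial (Fin n) ℚ))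
          '' (m.leadMonomial '' G)) := by
      rw [← hli]
      exact leadIdeal_monic_eq hmonic
    have hdiv := div_key (m := m) hlead' hsub hmonic hPIPG hsuppG
    refine ⟨fun g hg t => hPIPG g hg t, ?_, ?_, ?_⟩
    · -- Gröbner basis property
      refine ⟨hfin.image _, fun x hx => hmodsub x hx, ?_⟩
      apply le_antisymm
      · apply Ideal.span_le.mpr
        rintro x ⟨gq, ⟨hgq, hne⟩, rfl⟩
        exact Ideal.subset_span ⟨gq, ⟨hmodsub gq hgq, hne⟩, rfl⟩
      · apply Ideal.span_le.mpr
        rintro x ⟨f, ⟨hfI, hfne⟩, rfl⟩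
        obtain ⟨ft, hftI, hftP, hftmod⟩ := lift_mem f hfI
        have h := hdiv ft hftI hftP (by rw [hftmod]; exact hfne)
        rwa [hftmod] at h
    · -- monic
      rintro _ ⟨g, hg, rfl⟩
      rw [(hgoodG g hg).2.2, hmonic g hg, chi_one]
    · -- reduced
      rintro _ ⟨g, hg, rfl⟩ t ht
      rw [hsuppG g hg] at ht
      intro hmem
      have hssub : m.leadIdeal ((modpReduction p '' G) \ {modpReduction p g}) ≤
          Ideal.span ((fun ν => (MvPolynomial.monomial ν (1 : ZMod p)
            : MvPolynomial (Fin n) (ZMod p))) '' (m.leadMonomial '' (G \ {g}))) := by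
        apply Ideal.span_le.mpr
        rintro x ⟨hq2, ⟨hhq2mem, hhq2ne⟩, rfl⟩
        obtain ⟨⟨g', hg', rfl⟩, hne2⟩ := hhq2mem
        have hg'g : g' ∈ G \ {g} := by
          refine ⟨hg', ?_⟩
          intro h
          rw [Set.mem_singleton_iff] at h
          apply hne2
          rw [Set.mem_singleton_iff, h]
        rw [hleadTermG g' hg']
        exact Ideal.subset_span ⟨m.leadMonomial g', ⟨g', hg'g, rfl⟩, rfl⟩
      have hmem2 := hssub hmem
      obtain ⟨ν, hν, hle⟩ := monomial_mem_span_iff one_ne_zero hmem2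
      obtain ⟨g', hg'mem, rfl⟩ := hν
      refine hred g hg t ht ?_
      have heq : (MvPolynomial.monomial t (1:ℚ) : MvPolynomial (Fin n) ℚ)
          = MvPolynomial.monomial (t - m.leadMonomial g') 1 * m.leadTerm g' := by
        rw [leadTerm_of_monic (hmonic g' hg'mem.1), MvPolynomial.monomial_mul, mul_one,
          tsub_add_cancel_of_le hle]
      rw [heq]
      exact Ideal.mul_mem_left _ _
        (Ideal.subset_span ⟨g', ⟨hg'mem, hGne g' hg'mem.1⟩, rfl⟩)
  apply Set.Finite.subset (Set.finite_Iic N)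
  rintro p ⟨hpp, hnC⟩
  rw [Set.mem_Iic]
  by_cases hdvd : p ∣ N
  · exact Nat.le_of_dvd hNpos hdvd
  · exact absurd (main p hpp hdvd) hnC
end
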